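/- arXiv:2005.03395 — 7 statements merged into one kernel-verified Lean document; each statement's English description precedes it below -/
import Mathlib

section
/- Energy identity and Grönwall-type energy inequality for linear symmetric hyperbolic systems on the torus. Let N, n ≥ 1 be integers. Let w^μ ∈ C^∞(Ω, Sym_n) for μ = 0,…,N, l ∈ C^∞(Ω, End(ℝ^n)), and let U ∈ C^∞(Ω, ℝ^n) satisfy the linear system w^μ(ξ) ∂_μ U(ξ) = l(ξ) U(ξ) on Ω (summation over μ). Set J = ∂_μ w^μ + l + l^T ∈ C^∞(Ω, Sym_n) and j^μ = U^T w^μ U. Then: (1) the pointwise divergence identity ∂_μ j^μ = U^T J U holds on Ω; (2) if Q > 0 is a constant with Q^{-1}·Id ≤ w^0(ξ) ≤ Q·Id for all ξ ∈ Ω, then the energy E(τ) = ∫_{𝕋^N} U(τ,x)^T w^0(τ,x) U(τ,x) dx satisfies E(τ_0) ≤ E(τ_1) · exp( ∫_{τ_0}^{τ_1} Q ‖J(τ,·)‖_{L^∞_x} dτ ) for all 0 ≤ τ_0 < τ_1 < ∞, where the pointwise norm of J is the operator norm. -/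
/-!
STATEMENT 3: Energy identity and Grönwall-type energy inequality for linear
symmetric hyperbolic systems on Ω = [0,∞) × 𝕋^N.

Functions on Ω are represented as globally smooth functions on ℝ^{1+N}
(coordinate 0 is the time τ) that are 1-periodic in each of the N spatial
coordinates; the linear system is imposed on the region τ ≥ 0.  The integral
over 𝕋^N is the integral over the fundamental domain (0,1]^N.
-/

open scoped BigOperators
open Matrix MeasureTheory

noncomputable section

attribute [local instance] Matrix.normedAddCommGroup Matrix.normedSpace

set_option linter.unusedSectionVars false
set_option linter.unusedVariables false

/-- Points of ℝ^{1+N}; coordinate `0` is the time `τ`. -/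
abbrev Pt (N : ℕ) := Fin (N + 1) → ℝ

/-- Partial derivative in the coordinate direction `μ`. -/
def pd {N : ℕ} {E : Type*} [NormedAddCommGroup E] [NormedSpace ℝ E]
    (μ : Fin (N + 1)) (f : Pt N → E) : Pt N → E :=
  fun ξ => fderiv ℝ f ξ (Pi.single μ 1)

/-- Periodicity (period 1) in each of the `N` spatial coordinates. -/
def SpacePeriodic {N : ℕ} {E : Type*} (f : Pt N → E) : Prop :=
  ∀ (i : Fin N) (ξ : Pt N), f (ξ + Pi.single i.succ 1) = f ξ

/-- Loewner order: `S ≤ T` iff `T - S` is positive semidefinite. -/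
def matLE {n : ℕ} (S T : Matrix (Fin n) (Fin n) ℝ) : Prop := (T - S).PosSemidef

/-- Operator norm of a matrix acting on `ℝ^n`. -/
def matOpNorm {n : ℕ} (M : Matrix (Fin n) (Fin n) ℝ) : ℝ :=
  ‖LinearMap.toContinuousLinearMap M.mulVecLin‖

/-- A fundamental domain for the torus 𝕋^N. -/
def torusBox (N : ℕ) : Set (Fin N → ℝ) :=
  Set.univ.pi fun _ : Fin N => Set.Ioc (0 : ℝ) 1

/-! ### Auxiliary material -/

section Aux

variable {N n : ℕ} {E : Type*} [NormedAddCommGroup E] [NormedSpace ℝ E]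

/-- dot product as a continuous bilinear map -/
def dotCLM (n : ℕ) : (Fin n → ℝ) →L[ℝ] (Fin n → ℝ) →L[ℝ] ℝ :=
  LinearMap.toContinuousLinearMap <|
    { toFun := fun u => LinearMap.toContinuousLinearMap <|
        { toFun := fun v => u ⬝ᵥ v
          map_add' := fun v v' => dotProduct_add u v v'
          map_smul' := fun c v => dotProduct_smul c u v }
      map_add' := by intros; ext v; simp [add_dotProduct]
      map_smul' := by intros; ext v; simp [smul_dotProduct] }

@[simp] lemma dotCLM_apply (u v : Fin n → ℝ) : dotCLM n u v = u ⬝ᵥ v := rfl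

/-- matrix-vector multiplication as a continuous bilinear map -/
def mvCLM (n : ℕ) : Matrix (Fin n) (Fin n) ℝ →L[ℝ] (Fin n → ℝ) →L[ℝ] (Fin n → ℝ) :=
  LinearMap.toContinuousLinearMap <|
    { toFun := fun M => LinearMap.toContinuousLinearMap M.mulVecLin
      map_add' := by intros; ext v; simp [Matrix.add_mulVec]
      map_smul' := by intros; ext v; simp [Matrix.smul_mulVec] }

@[simp] lemma mvCLM_apply (M : Matrix (Fin n) (Fin n) ℝ) (v : Fin n → ℝ) :
    mvCLM n M v = M.mulVec v := rfl

lemma pd_quad (μ : Fin (N + 1)) (A : Pt N → Matrix (Fin n) (Fin n) ℝ)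
    (v : Pt N → Fin n → ℝ) (hA : Differentiable ℝ A) (hv : Differentiable ℝ v) (ξ : Pt N) :
    pd μ (fun ζ => v ζ ⬝ᵥ (A ζ).mulVec (v ζ)) ξ
      = pd μ v ξ ⬝ᵥ (A ξ).mulVec (v ξ) + v ξ ⬝ᵥ (pd μ A ξ).mulVec (v ξ)
        + v ξ ⬝ᵥ (A ξ).mulVec (pd μ v ξ) := by
  have hAv : HasFDerivAt (fun ζ => (A ζ).mulVec (v ζ))
      ((mvCLM n).precompR (Pt N) (A ξ) (fderiv ℝ v ξ)
        + (mvCLM n).precompL (Pt N) (fderiv ℝ A ξ) (v ξ)) ξ :=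
    (mvCLM n).hasFDerivAt_of_bilinear (hA ξ).hasFDerivAt (hv ξ).hasFDerivAt
  have h : HasFDerivAt (fun ζ => v ζ ⬝ᵥ (A ζ).mulVec (v ζ))
      ((dotCLM n).precompR (Pt N) (v ξ) _ + (dotCLM n).precompL (Pt N) (fderiv ℝ v ξ)
        ((A ξ).mulVec (v ξ))) ξ :=
    (dotCLM n).hasFDerivAt_of_bilinear (hv ξ).hasFDerivAt hAv
  rw [pd, h.fderiv]
  simp [ContinuousLinearMap.precompR, ContinuousLinearMap.precompL, pd]
  show v ξ ⬝ᵥ (A ξ *ᵥ fderiv ℝ v ξ (Pi.single μ 1)) + v ξ ⬝ᵥ (fderiv ℝ A ξ (Pi.single μ 1) *ᵥ v ξ)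
    + fderiv ℝ v ξ (Pi.single μ 1) ⬝ᵥ A ξ *ᵥ v ξ = _
  exact (add_comm (G := ℝ) _ _).trans ((congrArg (fun t : ℝ => _ + t) (add_comm (G := ℝ) _ _)).trans
    (add_assoc (G := ℝ) _ _ _).symm)

/-- the linear map `y ↦ Fin.cons 0 y` as a CLM -/
def consCLM (N : ℕ) : (Fin N → ℝ) →L[ℝ] Pt N :=
  LinearMap.toContinuousLinearMap
    { toFun := fun y => (Fin.cons 0 y : Pt N)
      map_add' := by
        intro y z; ext j
        refine Fin.cases ?_ (fun i => ?_) j <;> simp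
      map_smul' := by
        intro c y; ext j
        refine Fin.cases ?_ (fun i => ?_) j <;> simp }

@[simp] lemma consCLM_apply (y : Fin N → ℝ) : consCLM N y = (Fin.cons 0 y : Pt N) := rfl

lemma cons_eq_add (τ : ℝ) (x : Fin N → ℝ) :
    (Fin.cons τ x : Pt N) = (Fin.cons τ 0 : Pt N) + consCLM N x := by
  ext j; refine Fin.cases ?_ (fun i => ?_) j <;> simp

lemma hasFDerivAt_cons_right (τ : ℝ) (x : Fin N → ℝ) :
    HasFDerivAt (fun y : Fin N → ℝ => (Fin.cons τ y : Pt N)) (consCLM N) x := by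
  have : (fun y : Fin N → ℝ => (Fin.cons τ y : Pt N))
      = fun y => (Fin.cons τ 0 : Pt N) + consCLM N y := by
    funext y; exact cons_eq_add τ y
  rw [this]
  exact ((consCLM N).hasFDerivAt).const_add _

lemma hasDerivAt_cons_left (τ : ℝ) (x : Fin N → ℝ) :
    HasDerivAt (fun t : ℝ => (Fin.cons t x : Pt N)) (Pi.single 0 1) τ := by
  have : (fun t : ℝ => (Fin.cons t x : Pt N))
      = fun t => (Fin.cons 0 x : Pt N) + t • (Pi.single 0 1 : Pt N) := by
    funext t; ext j
    refine Fin.cases ?_ (fun i => ?_) j <;>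
      simp [Pi.single_apply, Fin.succ_ne_zero]
  rw [this]
  simpa using ((hasDerivAt_id τ).smul_const (Pi.single 0 1 : Pt N)).const_add
    ((Fin.cons 0 x : Pt N))

lemma continuous_cons : Continuous (fun p : ℝ × (Fin N → ℝ) => (Fin.cons p.1 p.2 : Pt N)) := by
  refine continuous_pi fun j => ?_
  refine Fin.cases ?_ (fun i => ?_) j
  · simpa using continuous_fst
  · simp only [Fin.cons_succ]; exact (continuous_apply i).comp continuous_snd

lemma consCLM_single (i : Fin N) : consCLM N (Pi.single i 1) = Pi.single i.succ (1:ℝ) := by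
  ext j; refine Fin.cases ?_ (fun k => ?_) j
  · simp [Pi.single_apply, Fin.succ_ne_zero]
  · simp [Pi.single_apply, Fin.succ_inj]

lemma cons_add_single (τ : ℝ) (x : Fin N → ℝ) (i : Fin N) :
    (Fin.cons τ (x + Pi.single i 1) : Pt N) = Fin.cons τ x + Pi.single i.succ 1 := by
  ext j; refine Fin.cases ?_ (fun k => ?_) j
  · simp [Pi.single_apply, Fin.succ_ne_zero]
  · simp [Pi.single_apply, Fin.succ_inj]

lemma fderiv_slice_eq (f : Pt N → ℝ) (hf : Differentiable ℝ f) (τ : ℝ) (x : Fin N → ℝ) :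
    fderiv ℝ (fun y => f (Fin.cons τ y)) x
      = (fderiv ℝ f (Fin.cons τ x)).comp (consCLM N) := by
  have h := ((hf (Fin.cons τ x)).hasFDerivAt).comp x (hasFDerivAt_cons_right τ x)
  have h' : HasFDerivAt (fun y => f (Fin.cons τ y))
      ((fderiv ℝ f (Fin.cons τ x)).comp (consCLM N)) x := h
  exact h'.fderiv

lemma fderiv_slice (f : Pt N → ℝ) (hf : Differentiable ℝ f) (τ : ℝ) (x : Fin N → ℝ)
    (i : Fin N) :
    fderiv ℝ (fun y => f (Fin.cons τ y)) x (Pi.single i 1)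
      = pd i.succ f (Fin.cons τ x) := by
  rw [fderiv_slice_eq f hf τ x]
  simp only [pd, ContinuousLinearMap.comp_apply, consCLM_apply]
  congr 1
  exact consCLM_single i

lemma hasDerivAt_slice (f : Pt N → ℝ) (hf : Differentiable ℝ f) (τ : ℝ) (x : Fin N → ℝ) :
    HasDerivAt (fun t => f (Fin.cons t x)) (pd 0 f (Fin.cons τ x)) τ :=
  ((hf (Fin.cons τ x)).hasFDerivAt).comp_hasDerivAt τ (hasDerivAt_cons_left τ x)

/-- entries of the fderiv of a matrix-valued function -/
lemma pd_entry (μ : Fin (N + 1)) (A : Pt N → Matrix (Fin n) (Fin n) ℝ)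
    (hA : Differentiable ℝ A) (ξ : Pt N) (i j : Fin n) :
    pd μ A ξ i j = pd μ (fun ζ => A ζ i j) ξ := by
  have hcl : IsBoundedLinearMap ℝ (fun M : Matrix (Fin n) (Fin n) ℝ => M i j) := by
    refine (LinearMap.toContinuousLinearMap
      { toFun := fun M : Matrix (Fin n) (Fin n) ℝ => M i j
        map_add' := fun _ _ => rfl
        map_smul' := fun _ _ => by simp [Matrix.smul_apply] }).isBoundedLinearMap
  have h := (hcl.hasFDerivAt.comp ξ (hA ξ).hasFDerivAt)
  have h' : HasFDerivAt (fun ζ => A ζ i j)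
      (hcl.toContinuousLinearMap.comp (fderiv ℝ A ξ)) ξ := h
  simp only [pd]
  rw [h'.fderiv]
  rfl

/-- pd of a symmetric-matrix-valued function is symmetric -/
lemma pd_isSymm (μ : Fin (N + 1)) (A : Pt N → Matrix (Fin n) (Fin n) ℝ)
    (hA : Differentiable ℝ A) (hsym : ∀ ξ, (A ξ).IsSymm) (ξ : Pt N) :
    (pd μ A ξ).IsSymm := by
  rw [Matrix.IsSymm]
  ext i j
  rw [Matrix.transpose_apply, pd_entry μ A hA ξ i j, pd_entry μ A hA ξ j i]
  congr 1
  funext ζ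
  have := hsym ζ
  rw [Matrix.IsSymm] at this
  calc A ζ j i = (A ζ)ᵀ i j := rfl
  _ = A ζ i j := by rw [this]

lemma fderiv_translate (f : Pt N → E) (hf : Differentiable ℝ f) (c : Pt N) (ξ : Pt N) :
    fderiv ℝ (fun ζ => f (ζ + c)) ξ = fderiv ℝ f (ξ + c) := by
  have h : HasFDerivAt (fun ζ : Pt N => f (ζ + c))
      ((fderiv ℝ f (ξ + c)).comp (ContinuousLinearMap.id ℝ (Pt N))) ξ :=
    (hf (ξ + c)).hasFDerivAt.comp ξ ((hasFDerivAt_id ξ).add_const c)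
  rw [h.fderiv, ContinuousLinearMap.comp_id]

lemma SpacePeriodic.pd (f : Pt N → E) (hf : Differentiable ℝ f) (hp : SpacePeriodic f)
    (μ : Fin (N + 1)) : SpacePeriodic (pd μ f) := by
  intro i ξ
  have : (fun ζ : Pt N => f (ζ + Pi.single i.succ 1)) = f := funext fun ζ => hp i ζ
  simp only [_root_.pd]
  rw [← fderiv_translate f hf (Pi.single i.succ 1) ξ, this]

/-- invariance under adding an integer multiple of a spatial basis vector -/
lemma SpacePeriodic.int_translate {f : Pt N → E} (hp : SpacePeriodic f) (i : Fin N)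
    (k : ℤ) (ξ : Pt N) : f (ξ + k • (Pi.single i.succ 1 : Pt N)) = f ξ := by
  induction k using Int.induction_on with
  | zero => simp
  | succ m ih =>
      rw [show ξ + ((m : ℤ) + 1) • (Pi.single i.succ 1 : Pt N)
          = (ξ + (m : ℤ) • (Pi.single i.succ 1 : Pt N)) + Pi.single i.succ 1 by
        rw [add_zsmul, one_zsmul, ← add_assoc]]
      rw [hp i _, ih]
  | pred m ih =>
      have hkey := hp i (ξ + (-(m : ℤ) - 1) • (Pi.single i.succ 1 : Pt N))
      rw [show ξ + (-(m : ℤ) - 1) • (Pi.single i.succ 1 : Pt N) + Pi.single i.succ 1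
          = ξ + (-(m : ℤ)) • (Pi.single i.succ 1 : Pt N) by
        rw [sub_zsmul, one_zsmul, add_assoc]; abel] at hkey
      rw [← hkey]; exact ih

/-- reduce a point to the fundamental closed box -/
lemma SpacePeriodic.reduce {f : Pt N → E} (hp : SpacePeriodic f) (τ : ℝ) (x : Fin N → ℝ) :
    ∃ y ∈ Set.Icc (0 : Fin N → ℝ) 1, f (Fin.cons τ y) = f (Fin.cons τ x) := by
  classical
  set y : Fin N → ℝ := fun i => Int.fract (x i) with hy
  refine ⟨y, ⟨fun i => Int.fract_nonneg _, fun i => (Int.fract_lt_one _).le⟩, ?_⟩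
  have key : ∀ s : Finset (Fin N),
      f (Fin.cons τ (y + ∑ i ∈ s, (⌊x i⌋ • (Pi.single i 1 : Fin N → ℝ))))
        = f (Fin.cons τ y) := by
    intro s
    induction s using Finset.induction_on with
    | empty => simp
    | insert a s' hns ih =>
        rw [Finset.sum_insert hns]
        have hc : (Fin.cons τ (y + ((⌊x a⌋ • (Pi.single a 1 : Fin N → ℝ))
            + ∑ i ∈ s', (⌊x i⌋ • (Pi.single i 1 : Fin N → ℝ)))) : Pt N)
            = Fin.cons τ (y + ∑ i ∈ s', (⌊x i⌋ • (Pi.single i 1 : Fin N → ℝ)))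
              + ⌊x a⌋ • (Pi.single a.succ 1 : Pt N) := by
          ext j
          refine Fin.cases ?_ (fun i => ?_) j
          · simp [Pi.single_apply, Fin.succ_ne_zero]
          · simp [Pi.single_apply, Fin.succ_inj]
            ring
        rw [hc, hp.int_translate a ⌊x a⌋, ih]
  have hx : x = y + ∑ i ∈ Finset.univ, (⌊x i⌋ • (Pi.single i 1 : Fin N → ℝ)) := by
    funext j
    rw [Pi.add_apply, Finset.sum_apply]
    simp only [Pi.smul_apply, Pi.single_apply, smul_eq_mul, mul_ite, mul_one, mul_zero,
      zsmul_eq_mul]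
    rw [Finset.sum_ite_eq Finset.univ j (fun i => (⌊x i⌋ : ℝ))]
    simp only [Finset.mem_univ, if_true, hy]
    rw [Int.fract]
    ring
  rw [show (Fin.cons τ x : Pt N)
      = Fin.cons τ (y + ∑ i ∈ Finset.univ, (⌊x i⌋ • (Pi.single i 1 : Fin N → ℝ)))
      by rw [← hx]]
  rw [key Finset.univ]

lemma matOpNorm_nonneg (M : Matrix (Fin n) (Fin n) ℝ) : 0 ≤ matOpNorm M := norm_nonneg _

lemma continuous_matOpNorm : Continuous (fun M : Matrix (Fin n) (Fin n) ℝ => matOpNorm M) := by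
  have h : IsLinearMap ℝ (fun M : Matrix (Fin n) (Fin n) ℝ =>
      LinearMap.toContinuousLinearMap M.mulVecLin) := by
    constructor
    · intro M M'; ext v; simp [Matrix.add_mulVec]
    · intro c M; ext v; simp [Matrix.smul_mulVec]
  exact continuous_norm.comp (h.mk' _).continuous_of_finiteDimensional

/-- row sums are bounded by the sup-operator norm -/
lemma rowsum_le_matOpNorm (hn : 1 ≤ n) (M : Matrix (Fin n) (Fin n) ℝ) (i : Fin n) :
    ∑ j, |M i j| ≤ matOpNorm M := by
  classical
  set s : Fin n → ℝ := fun j => if 0 ≤ M i j then 1 else -1 with hs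
  have hnorm_s : ‖s‖ ≤ 1 := by
    rw [pi_norm_le_iff_of_nonneg zero_le_one]
    intro j
    rw [hs]; dsimp only
    split <;> simp
  have happ : (M.mulVec s) i = ∑ j, |M i j| := by
    rw [Matrix.mulVec, dotProduct]
    refine Finset.sum_congr rfl fun j _ => ?_
    rw [hs]; dsimp only
    split
    · rw [mul_one, abs_of_nonneg ‹_›]
    · rw [mul_neg_one, abs_of_neg (lt_of_not_ge ‹_›)]
  have h1 : |(M.mulVec s) i| ≤ ‖M.mulVec s‖ := by
    haveI : Nonempty (Fin n) := ⟨⟨0, hn⟩⟩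
    simpa [Real.norm_eq_abs] using norm_le_pi_norm (M.mulVec s) i
  have h2 : ‖M.mulVec s‖ ≤ matOpNorm M * ‖s‖ := by
    have := (LinearMap.toContinuousLinearMap (M.mulVecLin)).le_opNorm s
    simpa [matOpNorm] using this
  calc ∑ j, |M i j| = |(M.mulVec s) i| := by rw [happ]; exact (abs_of_nonneg (by positivity)).symm
  _ ≤ matOpNorm M * ‖s‖ := h1.trans h2
  _ ≤ matOpNorm M * 1 := mul_le_mul_of_nonneg_left hnorm_s (matOpNorm_nonneg M)
  _ = matOpNorm M := mul_one _

/-- quadratic form bound for symmetric matrices -/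
lemma quad_abs_le (hn : 1 ≤ n) (M : Matrix (Fin n) (Fin n) ℝ) (hM : M.IsSymm)
    (v : Fin n → ℝ) : |v ⬝ᵥ M.mulVec v| ≤ matOpNorm M * (v ⬝ᵥ v) := by
  classical
  have habs : ∀ i j, |M j i| = |M i j| := fun i j => by
    rw [show M j i = (M)ᵀ i j from rfl, hM]
  have step1 : |v ⬝ᵥ M.mulVec v| ≤ ∑ i, ∑ j, |M i j| * (v i ^ 2 + v j ^ 2) / 2 := by
    rw [dotProduct]
    refine (Finset.abs_sum_le_sum_abs _ _).trans ?_
    refine Finset.sum_le_sum fun i _ => ?_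
    rw [Matrix.mulVec, dotProduct, Finset.mul_sum]
    refine (Finset.abs_sum_le_sum_abs _ _).trans ?_
    refine Finset.sum_le_sum fun j _ => ?_
    rw [abs_mul, abs_mul]
    have h1 : |v i| * |v j| ≤ (v i ^ 2 + v j ^ 2) / 2 := by
      nlinarith [sq_nonneg (|v i| - |v j|), sq_abs (v i), sq_abs (v j)]
    calc |v i| * (|M i j| * |v j|) = |M i j| * (|v i| * |v j|) := by ring
    _ ≤ |M i j| * ((v i ^ 2 + v j ^ 2) / 2) := mul_le_mul_of_nonneg_left h1 (abs_nonneg _)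
    _ = |M i j| * (v i ^ 2 + v j ^ 2) / 2 := by ring
  have step2 : ∑ i, ∑ j, |M i j| * (v i ^ 2 + v j ^ 2) / 2 = ∑ i, ∑ j, |M i j| * v i ^ 2 := by
    have hsplit : ∀ i j : Fin n, |M i j| * (v i ^ 2 + v j ^ 2) / 2
        = |M i j| * v i ^ 2 / 2 + |M i j| * v j ^ 2 / 2 := fun i j => by ring
    simp_rw [hsplit, Finset.sum_add_distrib]
    have hswap : ∑ i, ∑ j, |M i j| * v j ^ 2 / 2 = ∑ i, ∑ j, |M i j| * v i ^ 2 / 2 := by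
      rw [Finset.sum_comm]
      refine Finset.sum_congr rfl fun j _ => Finset.sum_congr rfl fun i _ => ?_
      rw [habs i j]
    rw [hswap, ← Finset.sum_add_distrib]
    refine Finset.sum_congr rfl fun i _ => ?_
    rw [← Finset.sum_add_distrib]
    refine Finset.sum_congr rfl fun j _ => by ring
  have step3 : ∑ i, ∑ j, |M i j| * v i ^ 2 ≤ matOpNorm M * (v ⬝ᵥ v) := by
    rw [dotProduct, Finset.mul_sum]
    refine Finset.sum_le_sum fun i _ => ?_
    rw [← Finset.sum_mul]
    have := rowsum_le_matOpNorm hn M i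
    have hv2 : v i * v i = v i ^ 2 := by ring
    rw [hv2]
    exact mul_le_mul_of_nonneg_right this (sq_nonneg _)
  linarith

/-- Loewner lower bound -/
lemma loewner_lower {Q : ℝ} (hQ : 0 < Q) (M : Matrix (Fin n) (Fin n) ℝ)
    (h : matLE (Q⁻¹ • (1 : Matrix (Fin n) (Fin n) ℝ)) M) (v : Fin n → ℝ) :
    Q⁻¹ * (v ⬝ᵥ v) ≤ v ⬝ᵥ M.mulVec v := by
  have h2 := h.dotProduct_mulVec_nonneg v
  simp only [Matrix.sub_mulVec, dotProduct_sub, Matrix.smul_mulVec,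
    Matrix.one_mulVec, dotProduct_smul, star_trivial] at h2
  rw [smul_eq_mul] at h2
  linarith

lemma dot_self_nonneg (v : Fin n → ℝ) : 0 ≤ v ⬝ᵥ v :=
  Finset.sum_nonneg fun i _ => mul_self_nonneg _

lemma dot_symm (M : Matrix (Fin n) (Fin n) ℝ) (hM : M.IsSymm) (a b : Fin n → ℝ) :
    a ⬝ᵥ M.mulVec b = b ⬝ᵥ M.mulVec a := by
  calc a ⬝ᵥ M.mulVec b = (a ᵥ* M) ⬝ᵥ b := Matrix.dotProduct_mulVec a M b
  _ = (Mᵀ *ᵥ a) ⬝ᵥ b := by rw [Matrix.mulVec_transpose]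
  _ = (M *ᵥ a) ⬝ᵥ b := by rw [hM]
  _ = b ⬝ᵥ M.mulVec a := dotProduct_comm _ _

lemma dot_sum {ι : Type*} (u : Fin n → ℝ) (s : Finset ι) (v : ι → Fin n → ℝ) :
    u ⬝ᵥ ∑ i ∈ s, v i = ∑ i ∈ s, u ⬝ᵥ v i := by
  rw [show u ⬝ᵥ ∑ i ∈ s, v i = dotCLM n u (∑ i ∈ s, v i) from rfl, map_sum]
  rfl

lemma sum_mulVec' {ι : Type*} (s : Finset ι) (M : ι → Matrix (Fin n) (Fin n) ℝ)
    (v : Fin n → ℝ) : (∑ i ∈ s, M i) *ᵥ v = ∑ i ∈ s, M i *ᵥ v := by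
  rw [show (∑ i ∈ s, M i) *ᵥ v = mvCLM n (∑ i ∈ s, M i) v from rfl, map_sum,
    ContinuousLinearMap.sum_apply]
  rfl

lemma torusBox_measurable : MeasurableSet (torusBox N) :=
  MeasurableSet.univ_pi fun _ => measurableSet_Ioc

lemma torusBox_subset_Icc : torusBox N ⊆ Set.Icc (0 : Fin N → ℝ) 1 := by
  intro x hx
  exact ⟨fun i => (hx i (Set.mem_univ i)).1.le, fun i => (hx i (Set.mem_univ i)).2⟩

/-- restriction to torusBox equals restriction to the closed box a.e. -/
lemma integral_torusBox_eq_Icc (f : (Fin N → ℝ) → ℝ) :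
    ∫ x in torusBox N, f x = ∫ x in Set.Icc (0 : Fin N → ℝ) 1, f x := by
  rw [show (volume : Measure (Fin N → ℝ)) = Measure.pi fun _ => volume from volume_pi]
  exact setIntegral_congr_set MeasureTheory.Measure.univ_pi_Ioc_ae_eq_Icc

/-- integrability of continuous functions on the box -/
lemma integrableOn_torusBox_of_continuous {f : (Fin N → ℝ) → ℝ} (hf : Continuous f) :
    IntegrableOn f (torusBox N) := by
  have h1 : IntegrableOn f (Set.Icc (0 : Fin N → ℝ) 1) :=
    hf.continuousOn.integrableOn_compact isCompact_Icc
  exact h1.mono_set torusBox_subset_Icc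

/-- ∫ over box of ∂ᵢ g = 0 for smooth periodic g, slice form -/
lemma integral_pd_spatial_eq_zero {N : ℕ} (g : (Fin N → ℝ) → ℝ)
    (hg : Differentiable ℝ g) (hgc : Continuous g)
    (hgd : Continuous fun x => fderiv ℝ g x)
    (hper : ∀ (i : Fin N) (x : Fin N → ℝ), g (x + Pi.single i 1) = g x)
    (i : Fin N) :
    ∫ x in torusBox N, fderiv ℝ g x (Pi.single i 1) = 0 := by
  classical
  obtain ⟨m, rfl⟩ : ∃ m, N = m + 1 := ⟨N - 1, (Nat.succ_pred_eq_of_pos i.pos).symm⟩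
  set F : Fin (m + 1) → (Fin (m + 1) → ℝ) → ℝ := fun j x => if j = i then g x else 0 with hF
  set F' : Fin (m + 1) → (Fin (m + 1) → ℝ) → (Fin (m + 1) → ℝ) →L[ℝ] ℝ :=
    fun j x => if j = i then fderiv ℝ g x else 0 with hF'
  have hle : (0 : Fin (m + 1) → ℝ) ≤ 1 := fun _ => zero_le_one
  have key := MeasureTheory.integral_divergence_of_hasFDerivAt_off_countable'
    (0 : Fin (m + 1) → ℝ) 1 hle F F' ∅ Set.countable_empty
    (fun j => by
      by_cases h : j = i
      · simpa [hF, h] using hgc.continuousOn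
      · simpa [hF, h] using continuousOn_const)
    (fun x _ j => by
      by_cases h : j = i
      · simpa [hF, hF', h] using (hg x).hasFDerivAt
      · simpa [hF, hF', h] using hasFDerivAt_const (0:ℝ) x)
    (by
      have : (fun x => ∑ j, F' j x (Pi.single j 1)) = fun x => fderiv ℝ g x (Pi.single i 1) := by
        funext x
        rw [Finset.sum_eq_single i]
        · simp [hF']
        · intro b _ hb; simp [hF', hb]
        · intro h; exact absurd (Finset.mem_univ i) h
      rw [this]
      exact ((hgd.clm_apply continuous_const).continuousOn).integrableOn_compact isCompact_Icc)
  have hdiv : (∫ x in Set.Icc (0 : Fin (m+1) → ℝ) 1, ∑ j, F' j x (Pi.single j 1))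
      = ∫ x in Set.Icc (0 : Fin (m+1) → ℝ) 1, fderiv ℝ g x (Pi.single i 1) := by
    refine setIntegral_congr_fun measurableSet_Icc fun x _ => ?_
    rw [Finset.sum_eq_single i]
    · simp [hF']
    · intro b _ hb; simp [hF', hb]
    · intro h; exact absurd (Finset.mem_univ i) h
  rw [integral_torusBox_eq_Icc, ← hdiv, key]
  refine Finset.sum_eq_zero fun j _ => ?_
  by_cases h : j = i
  · subst h
    have hFj : ∀ z, F j z = g z := fun z => by simp [hF]
    have hfront : ∀ x : Fin m → ℝ, F j (Fin.insertNth j ((1 : Fin (m+1) → ℝ) j) x)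
        = F j (Fin.insertNth j ((0 : Fin (m+1) → ℝ) j) x) := by
      intro x
      have hins : (Fin.insertNth j ((1 : Fin (m+1) → ℝ) j) x : Fin (m+1) → ℝ)
          = Fin.insertNth j ((0 : Fin (m+1) → ℝ) j) x + Pi.single j 1 := by
        ext k
        rcases eq_or_ne k j with rfl | hk
        · simp
        · rcases Fin.exists_succAbove_eq hk with ⟨p, rfl⟩
          simp [Pi.single_apply, (Fin.succAbove_ne j p)]
      rw [hFj, hFj, hins, hper j]
    rw [show (∫ x in Set.Icc ((0 : Fin (m+1) → ℝ) ∘ j.succAbove) ((1 : Fin (m+1) → ℝ) ∘ j.succAbove),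
          F j (Fin.insertNth j ((1 : Fin (m+1) → ℝ) j) x))
        = ∫ x in Set.Icc ((0 : Fin (m+1) → ℝ) ∘ j.succAbove) ((1 : Fin (m+1) → ℝ) ∘ j.succAbove),
          F j (Fin.insertNth j ((0 : Fin (m+1) → ℝ) j) x) from
      integral_congr_ae (Filter.Eventually.of_forall fun x => hfront x)]
    exact sub_self _
  · simp [hF, h]

instance finVolTorusBox : IsFiniteMeasure ((volume : Measure (Fin N → ℝ)).restrict (torusBox N)) := by
  constructor
  rw [Measure.restrict_apply_univ]
  exact lt_of_le_of_lt (measure_mono torusBox_subset_Icc) isCompact_Icc.measure_lt_top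

section sup

variable {h : Pt N → ℝ} (hc : Continuous h) (hp : SpacePeriodic h)

include hc hp in
lemma range_slice_eq_image (τ : ℝ) :
    Set.range (fun x : Fin N → ℝ => h (Fin.cons τ x))
      = (fun x : Fin N → ℝ => h (Fin.cons τ x)) '' (Set.Icc 0 1) := by
  apply Set.Subset.antisymm
  · rintro - ⟨x, rfl⟩
    obtain ⟨y, hy, hxy⟩ := hp.reduce τ x
    exact ⟨y, hy, hxy⟩
  · rintro - ⟨x, -, rfl⟩
    exact ⟨x, rfl⟩

include hc in
lemma bddAbove_slice (τ : ℝ) (hp : SpacePeriodic h) :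
    BddAbove (Set.range fun x : Fin N → ℝ => h (Fin.cons τ x)) := by
  rw [range_slice_eq_image hc hp τ]
  exact (isCompact_Icc.image
    (hc.comp (continuous_cons.comp (Continuous.prodMk_right τ)))).bddAbove

include hc hp in
lemma iSup_slice_eq (τ : ℝ) :
    (⨆ x : Fin N → ℝ, h (Fin.cons τ x))
      = sSup ((fun x : Fin N → ℝ => h (Fin.cons τ x)) '' (Set.Icc 0 1)) := by
  rw [iSup, range_slice_eq_image hc hp τ]

include hc hp in
lemma continuous_sup_slice :
    Continuous (fun τ => ⨆ x : Fin N → ℝ, h (Fin.cons τ x)) := by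
  have : (fun τ => ⨆ x : Fin N → ℝ, h (Fin.cons τ x))
      = fun τ => sSup ((fun x : Fin N → ℝ => h (Fin.cons τ x)) '' (Set.Icc 0 1)) := by
    funext τ; exact iSup_slice_eq hc hp τ
  rw [this]
  exact IsCompact.continuous_sSup isCompact_Icc (hc.comp continuous_cons)

include hc hp in
lemma le_sup_slice (τ : ℝ) (x : Fin N → ℝ) :
    h (Fin.cons τ x) ≤ ⨆ y : Fin N → ℝ, h (Fin.cons τ y) :=
  le_ciSup (bddAbove_slice hc τ hp) x

end sup

/-- differentiation under the integral sign -/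
lemma hasDerivAt_integral_slice (f : Pt N → ℝ) (hf : Differentiable ℝ f)
    (hfc : Continuous f) (hfd : Continuous (pd 0 f)) (τ₀ : ℝ) :
    HasDerivAt (fun τ => ∫ x in torusBox N, f (Fin.cons τ x))
      (∫ x in torusBox N, pd 0 f (Fin.cons τ₀ x)) τ₀ := by
  set K : Set (ℝ × (Fin N → ℝ)) := Set.Icc (τ₀ - 1) (τ₀ + 1) ×ˢ Set.Icc 0 1 with hK
  have hKc : IsCompact K := isCompact_Icc.prod isCompact_Icc
  set φ : ℝ × (Fin N → ℝ) → ℝ := fun p => |pd 0 f (Fin.cons p.1 p.2)| with hφ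
  have hφc : Continuous φ := (hfd.comp continuous_cons).abs
  set C : ℝ := sSup (φ '' K) with hC
  have hφC : ∀ p ∈ K, φ p ≤ C := fun p hp =>
    le_csSup (hKc.image hφc).bddAbove (Set.mem_image_of_mem φ hp)
  have key := hasDerivAt_integral_of_dominated_loc_of_deriv_le
    (μ := (volume : Measure (Fin N → ℝ)).restrict (torusBox N))
    (F := fun τ x => f (Fin.cons τ x)) (F' := fun τ x => pd 0 f (Fin.cons τ x))
    (x₀ := τ₀) (bound := fun _ => C) (Metric.ball_mem_nhds τ₀ one_pos)
    (Filter.Eventually.of_forall fun τ =>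
      ((hfc.comp (continuous_cons.comp (Continuous.prodMk_right τ))).aestronglyMeasurable))
    (integrableOn_torusBox_of_continuous
      (hfc.comp (continuous_cons.comp (Continuous.prodMk_right τ₀))))
    ((hfd.comp (continuous_cons.comp (Continuous.prodMk_right τ₀))).aestronglyMeasurable)
    ?_ (integrable_const C) ?_
  · exact key.2
  · refine (ae_restrict_mem torusBox_measurable).mono fun x hx τ hτ => ?_
    refine hφC (τ, x) ⟨?_, torusBox_subset_Icc hx⟩
    have := mem_ball_iff_norm.1 hτ
    rw [Real.norm_eq_abs, abs_lt] at this
    exact ⟨by linarith [this.1], by linarith [this.2]⟩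
  · exact Filter.Eventually.of_forall fun x τ _ => hasDerivAt_slice f hf τ x

/-- continuity of `pd` of a smooth function -/
lemma continuous_pd_of_contDiff {f : Pt N → E} (hf : ContDiff ℝ (⊤ : ℕ∞) f) (μ : Fin (N + 1)) :
    Continuous (pd μ f) :=
  ((hf.fderiv_right (m := (⊤ : ℕ∞)) (by simp)).continuous.clm_apply continuous_const)

/-- the abstract Grönwall argument -/
lemma gronwall_aux (En D g : ℝ → ℝ) {τ₀ τ₁ : ℝ} (hτ₀ : 0 ≤ τ₀) (hlt : τ₀ < τ₁)
    (hE : ∀ τ, HasDerivAt En (D τ) τ) (hgc : Continuous g)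
    (hED : ∀ τ, 0 ≤ τ → -(g τ * En τ) ≤ D τ) :
    En τ₀ ≤ En τ₁ * Real.exp (∫ τ in τ₀..τ₁, g τ) := by
  have hGd : ∀ τ, HasDerivAt (fun u => ∫ σ in τ₀..u, g σ) (g τ) τ := fun τ =>
    intervalIntegral.integral_hasDerivAt_right (hgc.intervalIntegrable _ _)
      (hgc.stronglyMeasurable.stronglyMeasurableAtFilter) hgc.continuousAt
  have hFd : ∀ τ, HasDerivAt (fun u => En u * Real.exp (∫ σ in τ₀..u, g σ))
      (D τ * Real.exp (∫ σ in τ₀..τ, g σ)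
        + En τ * (Real.exp (∫ σ in τ₀..τ, g σ) * g τ)) τ :=
    fun τ => (hE τ).mul ((hGd τ).exp)
  have hmono : MonotoneOn (fun u => En u * Real.exp (∫ σ in τ₀..u, g σ)) (Set.Icc τ₀ τ₁) := by
    apply monotoneOn_of_deriv_nonneg (convex_Icc τ₀ τ₁)
    · exact fun τ _ => ((hFd τ).continuousAt).continuousWithinAt
    · exact fun τ _ => ((hFd τ).differentiableAt).differentiableWithinAt
    · intro τ hτ
      rw [interior_Icc] at hτ
      rw [(hFd τ).deriv]
      have h0τ : (0:ℝ) ≤ τ := le_of_lt (lt_of_le_of_lt hτ₀ hτ.1)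
      have hb := hED τ h0τ
      have hexp : 0 < Real.exp (∫ σ in τ₀..τ, g σ) := Real.exp_pos _
      nlinarith [mul_nonneg (by linarith : (0:ℝ) ≤ D τ + g τ * En τ) hexp.le]
  have hkey := hmono (Set.left_mem_Icc.2 hlt.le) (Set.right_mem_Icc.2 hlt.le) hlt.le
  dsimp only at hkey
  rwa [intervalIntegral.integral_same, Real.exp_zero, mul_one] at hkey

end Aux

theorem energy_identity_and_inequality
    (N n : ℕ) (hN : 1 ≤ N) (hn : 1 ≤ n)
    (w : Fin (N + 1) → Pt N → Matrix (Fin n) (Fin n) ℝ)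
    (l : Pt N → Matrix (Fin n) (Fin n) ℝ)
    (U : Pt N → Fin n → ℝ)
    (hw : ∀ μ, ContDiff ℝ (⊤ : ℕ∞) (w μ)) (hl : ContDiff ℝ (⊤ : ℕ∞) l) (hU : ContDiff ℝ (⊤ : ℕ∞) U)
    (hwsym : ∀ (μ : Fin (N + 1)) (ξ : Pt N), (w μ ξ).IsSymm)
    (hwper : ∀ μ, SpacePeriodic (w μ)) (hlper : SpacePeriodic l)
    (hUper : SpacePeriodic U)
    -- the linear symmetric hyperbolic system w^μ ∂_μ U = l U on Ω
    (heq : ∀ ξ : Pt N, 0 ≤ ξ 0 →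
      ∑ μ, (w μ ξ).mulVec (pd μ U ξ) = (l ξ).mulVec (U ξ)) :
    -- (1) pointwise divergence identity ∂_μ j^μ = Uᵀ J U, J = ∂_μ w^μ + l + lᵀ
    (∀ ξ : Pt N, 0 ≤ ξ 0 →
      ∑ μ, pd μ (fun ζ => U ζ ⬝ᵥ (w μ ζ).mulVec (U ζ)) ξ
        = U ξ ⬝ᵥ (((∑ μ, pd μ (w μ) ξ) + l ξ + (l ξ)ᵀ).mulVec (U ξ))) ∧
    -- (2) the Grönwall-type energy inequality
    (∀ Q : ℝ, 0 < Q →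
      (∀ ξ : Pt N, 0 ≤ ξ 0 →
        matLE (Q⁻¹ • (1 : Matrix (Fin n) (Fin n) ℝ)) (w 0 ξ) ∧
        matLE (w 0 ξ) (Q • (1 : Matrix (Fin n) (Fin n) ℝ))) →
      ∀ τ₀ τ₁ : ℝ, 0 ≤ τ₀ → τ₀ < τ₁ →
        (∫ x in torusBox N,
            U (Fin.cons τ₀ x) ⬝ᵥ (w 0 (Fin.cons τ₀ x)).mulVec (U (Fin.cons τ₀ x)))
        ≤ (∫ x in torusBox N,
            U (Fin.cons τ₁ x) ⬝ᵥ (w 0 (Fin.cons τ₁ x)).mulVec (U (Fin.cons τ₁ x)))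
          * Real.exp (∫ τ in τ₀..τ₁,
              Q * ⨆ x : Fin N → ℝ, matOpNorm
                ((∑ μ, pd μ (w μ) (Fin.cons τ x)) + l (Fin.cons τ x)
                  + (l (Fin.cons τ x))ᵀ))) := by
  have hUd : Differentiable ℝ U := hU.differentiable (by simp)
  have hwd : ∀ μ, Differentiable ℝ (w μ) := fun μ => (hw μ).differentiable (by simp)
  have hld : Differentiable ℝ l := hl.differentiable (by simp)
  -- part (1)
  have part1 : ∀ ξ : Pt N, 0 ≤ ξ 0 →
      ∑ μ, pd μ (fun ζ => U ζ ⬝ᵥ (w μ ζ).mulVec (U ζ)) ξ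
        = U ξ ⬝ᵥ (((∑ μ, pd μ (w μ) ξ) + l ξ + (l ξ)ᵀ).mulVec (U ξ)) := by
    intro ξ hξ
    have hquad : ∀ μ : Fin (N+1), pd μ (fun ζ => U ζ ⬝ᵥ (w μ ζ).mulVec (U ζ)) ξ
        = pd μ U ξ ⬝ᵥ (w μ ξ).mulVec (U ξ) + U ξ ⬝ᵥ (pd μ (w μ) ξ).mulVec (U ξ)
          + U ξ ⬝ᵥ (w μ ξ).mulVec (pd μ U ξ) :=
      fun μ => pd_quad μ (w μ) U (hwd μ) hUd ξ
    rw [Finset.sum_congr rfl (fun μ _ => hquad μ), Finset.sum_add_distrib,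
      Finset.sum_add_distrib]
    have hT1 : ∑ μ, pd μ U ξ ⬝ᵥ (w μ ξ).mulVec (U ξ)
        = ∑ μ, U ξ ⬝ᵥ (w μ ξ).mulVec (pd μ U ξ) :=
      Finset.sum_congr rfl fun μ _ => dot_symm (w μ ξ) (hwsym μ ξ) _ _
    have hT3 : ∑ μ, U ξ ⬝ᵥ (w μ ξ).mulVec (pd μ U ξ) = U ξ ⬝ᵥ (l ξ).mulVec (U ξ) := by
      rw [← heq ξ hξ, dot_sum]
    have hT2 : ∑ μ, U ξ ⬝ᵥ (pd μ (w μ) ξ).mulVec (U ξ)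
        = U ξ ⬝ᵥ (∑ μ, pd μ (w μ) ξ).mulVec (U ξ) := by
      rw [sum_mulVec', dot_sum]
    have hRHS : U ξ ⬝ᵥ (((∑ μ, pd μ (w μ) ξ) + l ξ + (l ξ)ᵀ).mulVec (U ξ))
        = U ξ ⬝ᵥ (∑ μ, pd μ (w μ) ξ).mulVec (U ξ) + U ξ ⬝ᵥ (l ξ).mulVec (U ξ)
          + U ξ ⬝ᵥ (l ξ)ᵀ.mulVec (U ξ) := by
      rw [Matrix.add_mulVec, Matrix.add_mulVec, dotProduct_add, dotProduct_add]
    have hlT : U ξ ⬝ᵥ (l ξ)ᵀ.mulVec (U ξ) = U ξ ⬝ᵥ (l ξ).mulVec (U ξ) := by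
      rw [Matrix.mulVec_transpose, dotProduct_comm, ← Matrix.dotProduct_mulVec]
    rw [hT1, hT3, hT2, hRHS, hlT]
    ring
  refine ⟨part1, ?_⟩
  -- part (2)
  intro Q hQ hLoew τ₀ τ₁ hτ₀ hlt
  -- the coefficient matrix J
  set J : Pt N → Matrix (Fin n) (Fin n) ℝ :=
    fun ξ => (∑ μ, pd μ (w μ) ξ) + l ξ + (l ξ)ᵀ with hJdef
  have hJc : Continuous J := by
    refine ((continuous_finset_sum _ fun μ _ =>
      continuous_pd_of_contDiff (hw μ) μ).add hl.continuous).add ?_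
    have htr : IsLinearMap ℝ (fun M : Matrix (Fin n) (Fin n) ℝ => Mᵀ) :=
      ⟨fun a b => Matrix.transpose_add a b, fun c a => Matrix.transpose_smul c a⟩
    exact (htr.mk' _).continuous_of_finiteDimensional.comp hl.continuous
  have hJsym : ∀ ξ, (J ξ).IsSymm := by
    intro ξ
    rw [Matrix.IsSymm, hJdef]
    simp only [Matrix.transpose_add, Matrix.transpose_transpose]
    rw [show ((∑ μ, pd μ (w μ) ξ))ᵀ = ∑ μ, (pd μ (w μ) ξ)ᵀ from Matrix.transpose_sum _ _]
    have hpw : ∀ μ : Fin (N + 1), (pd μ (w μ) ξ)ᵀ = pd μ (w μ) ξ :=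
      fun μ => pd_isSymm μ (w μ) (hwd μ) (hwsym μ) ξ
    rw [Finset.sum_congr rfl fun μ _ => hpw μ]
    abel
  have hJper : SpacePeriodic J := by
    intro i ξ
    rw [hJdef]
    simp only
    rw [hlper i ξ]
    congr 1
    congr 1
    exact Finset.sum_congr rfl fun μ _ =>
      (SpacePeriodic.pd (w μ) (hwd μ) (hwper μ) μ) i ξ
  -- scalar periodic continuous function: operator norm of J
  have hJopc : Continuous (fun ξ => matOpNorm (J ξ)) := continuous_matOpNorm.comp hJc
  have hJopp : SpacePeriodic (fun ξ => matOpNorm (J ξ)) := by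
    intro i ξ
    simp only
    rw [hJper i ξ]
  -- smoothness of the energy densities
  have hfμ : ∀ μ : Fin (N + 1), ContDiff ℝ (⊤ : ℕ∞) (fun ζ => U ζ ⬝ᵥ (w μ ζ).mulVec (U ζ)) := by
    intro μ
    have h1 : ContDiff ℝ (⊤ : ℕ∞) (fun ζ => mvCLM n (w μ ζ) (U ζ)) :=
      ((mvCLM n).contDiff.comp (hw μ)).clm_apply hU
    exact ((dotCLM n).contDiff.comp hU).clm_apply h1
  have hfμper : ∀ μ : Fin (N + 1),
      SpacePeriodic (fun ζ => U ζ ⬝ᵥ (w μ ζ).mulVec (U ζ)) := by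
    intro μ i ξ
    simp only
    rw [hUper i ξ, (hwper μ) i ξ]
  have hUJU_cont : Continuous (fun ξ => U ξ ⬝ᵥ (J ξ).mulVec (U ξ)) := by
    have h1 : Continuous (fun ξ => mvCLM n (J ξ) (U ξ)) :=
      ((mvCLM n).continuous.comp hJc).clm_apply hU.continuous
    exact (((dotCLM n).continuous.comp hU.continuous).clm_apply h1)
  -- derivative of the energy
  set D : ℝ → ℝ := fun τ => ∫ x in torusBox N,
    pd 0 (fun ζ => U ζ ⬝ᵥ (w 0 ζ).mulVec (U ζ)) (Fin.cons τ x) with hDdef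
  have hE : ∀ τ, HasDerivAt (fun u => ∫ x in torusBox N,
      U (Fin.cons u x) ⬝ᵥ (w 0 (Fin.cons u x)).mulVec (U (Fin.cons u x))) (D τ) τ := by
    intro τ
    exact hasDerivAt_integral_slice (fun ζ => U ζ ⬝ᵥ (w 0 ζ).mulVec (U ζ))
      ((hfμ 0).differentiable (by simp)) (hfμ 0).continuous
      (continuous_pd_of_contDiff (hfμ 0) 0) τ
  -- vanishing of the spatial divergence terms
  have hzero : ∀ (τ : ℝ) (i : Fin N), (∫ x in torusBox N,
      pd i.succ (fun ζ => U ζ ⬝ᵥ (w i.succ ζ).mulVec (U ζ)) (Fin.cons τ x)) = 0 := by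
    intro τ i
    set fi : Pt N → ℝ := fun ζ => U ζ ⬝ᵥ (w i.succ ζ).mulVec (U ζ) with hfidef
    have hfid : Differentiable ℝ fi := (hfμ i.succ).differentiable (by simp)
    have hslice_diff : Differentiable ℝ (fun y : Fin N → ℝ => fi (Fin.cons τ y)) := fun x =>
      (((hfid _).hasFDerivAt).comp x (hasFDerivAt_cons_right τ x)).differentiableAt
    have hslice_cont : Continuous (fun y : Fin N → ℝ => fi (Fin.cons τ y)) :=
      (hfμ i.succ).continuous.comp (continuous_cons.comp (Continuous.prodMk_right τ))
    have hslice_dcont : Continuous fun x => fderiv ℝ (fun y : Fin N → ℝ => fi (Fin.cons τ y)) x := by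
      rw [show (fun x => fderiv ℝ (fun y : Fin N → ℝ => fi (Fin.cons τ y)) x)
          = fun x => (fderiv ℝ fi (Fin.cons τ x)).comp (consCLM N) from
        funext fun x => fderiv_slice_eq fi hfid τ x]
      exact Continuous.clm_comp
        (((hfμ i.succ).fderiv_right (m := (⊤ : ℕ∞)) (by simp)).continuous.comp
          (continuous_cons.comp (Continuous.prodMk_right τ))) continuous_const
    have hslice_per : ∀ (i' : Fin N) (x : Fin N → ℝ),
        (fun y : Fin N → ℝ => fi (Fin.cons τ y)) (x + Pi.single i' 1)
          = (fun y : Fin N → ℝ => fi (Fin.cons τ y)) x := by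
      intro i' x
      show fi (Fin.cons τ (x + Pi.single i' 1)) = fi (Fin.cons τ x)
      rw [cons_add_single τ x i']
      exact hfμper i.succ i' (Fin.cons τ x)
    have hz := integral_pd_spatial_eq_zero (fun y => fi (Fin.cons τ y))
      hslice_diff hslice_cont hslice_dcont hslice_per i
    rw [← hz]
    refine setIntegral_congr_fun torusBox_measurable fun x _ => ?_
    exact (fderiv_slice fi hfid τ x i).symm
  -- the value of the derivative for τ ≥ 0
  have hDeq : ∀ τ : ℝ, 0 ≤ τ → D τ = ∫ x in torusBox N,
      U (Fin.cons τ x) ⬝ᵥ (J (Fin.cons τ x)).mulVec (U (Fin.cons τ x)) := by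
    intro τ hτ
    have hpt : ∀ x : Fin N → ℝ,
        pd 0 (fun ζ => U ζ ⬝ᵥ (w 0 ζ).mulVec (U ζ)) (Fin.cons τ x)
        = U (Fin.cons τ x) ⬝ᵥ (J (Fin.cons τ x)).mulVec (U (Fin.cons τ x))
          - ∑ i : Fin N, pd i.succ (fun ζ => U ζ ⬝ᵥ (w i.succ ζ).mulVec (U ζ))
              (Fin.cons τ x) := by
      intro x
      have h0 : 0 ≤ (Fin.cons τ x : Pt N) 0 := by rw [Fin.cons_zero]; exact hτ
      have h1 := part1 (Fin.cons τ x) h0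
      rw [Fin.sum_univ_succ] at h1
      have h2 : U (Fin.cons τ x) ⬝ᵥ (J (Fin.cons τ x)).mulVec (U (Fin.cons τ x))
          = U (Fin.cons τ x) ⬝ᵥ
            (((∑ μ, pd μ (w μ) (Fin.cons τ x)) + l (Fin.cons τ x)
              + (l (Fin.cons τ x))ᵀ).mulVec (U (Fin.cons τ x))) := rfl
      rw [h2, ← h1]
      ring
    rw [hDdef]
    simp only
    rw [setIntegral_congr_fun torusBox_measurable fun x _ => hpt x]
    have hint1 : IntegrableOn (fun x : Fin N → ℝ =>
        U (Fin.cons τ x) ⬝ᵥ (J (Fin.cons τ x)).mulVec (U (Fin.cons τ x))) (torusBox N) :=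
      integrableOn_torusBox_of_continuous
        (hUJU_cont.comp (continuous_cons.comp (Continuous.prodMk_right τ)))
    have hint2 : IntegrableOn (fun x : Fin N → ℝ =>
        ∑ i : Fin N, pd i.succ (fun ζ => U ζ ⬝ᵥ (w i.succ ζ).mulVec (U ζ)) (Fin.cons τ x))
        (torusBox N) := by
      refine integrableOn_torusBox_of_continuous ?_
      refine continuous_finset_sum _ fun i _ => ?_
      exact (continuous_pd_of_contDiff (hfμ i.succ) i.succ).comp
        (continuous_cons.comp (Continuous.prodMk_right τ))
    rw [integral_sub hint1 hint2]
    have hsum0 : (∫ x in torusBox N, ∑ i : Fin N,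
        pd i.succ (fun ζ => U ζ ⬝ᵥ (w i.succ ζ).mulVec (U ζ)) (Fin.cons τ x)) = 0 := by
      rw [integral_finset_sum]
      · rw [Finset.sum_congr rfl fun i _ => hzero τ i]
        simp
      · intro i _
        exact (integrableOn_torusBox_of_continuous
          ((continuous_pd_of_contDiff (hfμ i.succ) i.succ).comp
            (continuous_cons.comp (Continuous.prodMk_right τ))))
    rw [hsum0, sub_zero]
  -- the lower bound on the derivative
  have hED : ∀ τ, 0 ≤ τ →
      -((Q * ⨆ x : Fin N → ℝ, matOpNorm (J (Fin.cons τ x)))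
        * (∫ x in torusBox N,
            U (Fin.cons τ x) ⬝ᵥ (w 0 (Fin.cons τ x)).mulVec (U (Fin.cons τ x)))) ≤ D τ := by
    intro τ hτ
    rw [hDeq τ hτ]
    set S : ℝ := ⨆ x : Fin N → ℝ, matOpNorm (J (Fin.cons τ x)) with hSdef
    have hpt : ∀ x : Fin N → ℝ,
        -(Q * S) * (U (Fin.cons τ x) ⬝ᵥ (w 0 (Fin.cons τ x)).mulVec (U (Fin.cons τ x)))
          ≤ U (Fin.cons τ x) ⬝ᵥ (J (Fin.cons τ x)).mulVec (U (Fin.cons τ x)) := by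
      intro x
      set ξ : Pt N := Fin.cons τ x with hξdef
      have hξ0 : 0 ≤ ξ 0 := by rw [hξdef, Fin.cons_zero]; exact hτ
      have ha := quad_abs_le hn (J ξ) (hJsym ξ) (U ξ)
      have hb : matOpNorm (J ξ) ≤ S := le_sup_slice hJopc hJopp τ x
      have hLow := loewner_lower hQ (w 0 ξ) (hLoew ξ hξ0).1 (U ξ)
      have hsQ : U ξ ⬝ᵥ U ξ ≤ Q * (U ξ ⬝ᵥ (w 0 ξ).mulVec (U ξ)) := by
        have h3 := mul_le_mul_of_nonneg_left hLow hQ.le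
        rw [← mul_assoc, mul_inv_cancel₀ hQ.ne', one_mul] at h3
        exact h3
      have hs_nn : 0 ≤ U ξ ⬝ᵥ U ξ := dot_self_nonneg (U ξ)
      have ha_nn : 0 ≤ matOpNorm (J ξ) := matOpNorm_nonneg _
      have hS_nn : 0 ≤ S := ha_nn.trans hb
      have he_nn : 0 ≤ U ξ ⬝ᵥ (w 0 ξ).mulVec (U ξ) := by
        have : 0 ≤ Q⁻¹ * (U ξ ⬝ᵥ U ξ) := by positivity
        linarith
      have habs := neg_abs_le (U ξ ⬝ᵥ (J ξ).mulVec (U ξ))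
      nlinarith [mul_le_mul_of_nonneg_right hb hs_nn,
        mul_le_mul_of_nonneg_left hsQ hS_nn]
    have hintL : IntegrableOn (fun x : Fin N → ℝ =>
        -(Q * S) * (U (Fin.cons τ x) ⬝ᵥ (w 0 (Fin.cons τ x)).mulVec (U (Fin.cons τ x))))
        (torusBox N) := by
      exact (integrableOn_torusBox_of_continuous
        ((hfμ 0).continuous.comp (continuous_cons.comp (Continuous.prodMk_right τ)))).const_mul _
    have hintR : IntegrableOn (fun x : Fin N → ℝ =>
        U (Fin.cons τ x) ⬝ᵥ (J (Fin.cons τ x)).mulVec (U (Fin.cons τ x))) (torusBox N) :=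
      integrableOn_torusBox_of_continuous
        (hUJU_cont.comp (continuous_cons.comp (Continuous.prodMk_right τ)))
    have hmono := setIntegral_mono_on hintL hintR torusBox_measurable fun x _ => hpt x
    rw [integral_const_mul] at hmono
    calc -(Q * S * ∫ x in torusBox N,
          U (Fin.cons τ x) ⬝ᵥ (w 0 (Fin.cons τ x)).mulVec (U (Fin.cons τ x)))
        = -(Q * S) * ∫ x in torusBox N,
          U (Fin.cons τ x) ⬝ᵥ (w 0 (Fin.cons τ x)).mulVec (U (Fin.cons τ x)) := by ring
      _ ≤ _ := hmono
  -- conclude by the Grönwall argument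
  exact gronwall_aux
    (fun u => ∫ x in torusBox N,
      U (Fin.cons u x) ⬝ᵥ (w 0 (Fin.cons u x)).mulVec (U (Fin.cons u x)))
    D (fun τ => Q * ⨆ x : Fin N → ℝ, matOpNorm (J (Fin.cons τ x))) hτ₀ hlt hE
    (continuous_const.mul (continuous_sup_slice hJopc hJopp)) hED

end
end

section
/- Vanishing theorem (uniqueness via energy decay) for linear symmetric hyperbolic systems. Let N, n ≥ 1 be integers, w^μ ∈ C^∞(Ω, Sym_n) for μ = 0,…,N, l ∈ C^∞(Ω, End(ℝ^n)), and suppose U ∈ C^∞(Ω, ℝ^n) satisfies w^μ ∂_μ U = l U on Ω. Set J = ∂_μ w^μ + l + l^T. Assume there are constants Q > 0 and Z > 0 with: Q^{-1}·Id ≤ w^0 ≤ Q·Id on Ω; limsup_{τ→∞} Q ‖J(τ,·)‖_{L^∞_x} < 2Z (operator norm pointwise); and ‖U(τ,·)‖_{L^∞_x} = O(e^{-Zτ}) as τ → ∞. Then U is identically zero on Ω. -/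
/-!
STATEMENT 4: Vanishing theorem (uniqueness via energy decay) for linear
symmetric hyperbolic systems on Ω = [0,∞) × 𝕋^N.

Functions on Ω are represented as globally smooth functions on ℝ^{1+N}
(coordinate 0 is the time τ) that are 1-periodic in each of the N spatial
coordinates; the linear system is imposed on the region τ ≥ 0.
-/

open scoped BigOperators
open Matrix

noncomputable section

attribute [local instance] Matrix.normedAddCommGroup Matrix.normedSpace

namespace VED

/-- derivative along a line -/
lemma hasDerivAt_line {E F : Type*} [NormedAddCommGroup E] [NormedSpace ℝ E]
    [NormedAddCommGroup F] [NormedSpace ℝ F]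
    {f : E → F} (c v : E) (t : ℝ) (hf : DifferentiableAt ℝ f (c + t • v)) :
    HasDerivAt (fun s : ℝ => f (c + s • v)) (fderiv ℝ f (c + t • v) v) t := by
  have h1 : HasDerivAt (fun s : ℝ => c + s • v) v t := by
    simpa using ((hasDerivAt_id t).smul_const v).const_add c
  exact hf.hasFDerivAt.comp_hasDerivAt t h1

lemma entry_linear {n : ℕ} (i j : Fin n) :
    IsLinearMap ℝ (fun M : Matrix (Fin n) (Fin n) ℝ => M i j) :=
  ⟨fun _ _ => rfl, fun _ _ => rfl⟩

/-- entry of a matrix as a continuous linear map -/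
def entryCLM (n : ℕ) (i j : Fin n) : Matrix (Fin n) (Fin n) ℝ →L[ℝ] ℝ :=
  LinearMap.toContinuousLinearMap
    { toFun := fun M => M i j
      map_add' := fun _ _ => rfl
      map_smul' := fun _ _ => rfl }

@[simp] lemma entryCLM_apply {n : ℕ} (i j : Fin n) (M : Matrix (Fin n) (Fin n) ℝ) :
    entryCLM n i j M = M i j := rfl

lemma contDiff_entry {N n : ℕ} {W : Pt N → Matrix (Fin n) (Fin n) ℝ}
    (hW : ContDiff ℝ (⊤ : ℕ∞) W) (i j : Fin n) :
    ContDiff ℝ (⊤ : ℕ∞) (fun ξ => W ξ i j) :=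
  (entryCLM n i j).contDiff.comp hW

lemma contDiff_comp_clm {N : ℕ} {E F : Type*} [NormedAddCommGroup E] [NormedSpace ℝ E]
    [NormedAddCommGroup F] [NormedSpace ℝ F] {f : Pt N → E}
    (hf : ContDiff ℝ (⊤ : ℕ∞) f) (L : E →L[ℝ] F) : ContDiff ℝ (⊤ : ℕ∞) (fun ξ => L (f ξ)) :=
  L.contDiff.comp hf

/-- continuity of a partial derivative of a smooth map -/
lemma continuous_pd {N : ℕ} {E : Type*} [NormedAddCommGroup E] [NormedSpace ℝ E]
    {f : Pt N → E} (hf : ContDiff ℝ (⊤ : ℕ∞) f) (μ : Fin (N + 1)) :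
    Continuous (pd μ f) :=
  (ContinuousLinearMap.apply ℝ E (Pi.single μ 1)).continuous.comp
    (hf.continuous_fderiv (by simp))

lemma pd_comp_clm {N : ℕ} {E F : Type*} [NormedAddCommGroup E] [NormedSpace ℝ E]
    [NormedAddCommGroup F] [NormedSpace ℝ F] {f : Pt N → E} {ξ : Pt N}
    (hf : DifferentiableAt ℝ f ξ) (L : E →L[ℝ] F) (μ : Fin (N + 1)) :
    pd μ (fun ξ => L (f ξ)) ξ = L (pd μ f ξ) := by
  have h := (L.hasFDerivAt (x := f ξ)).comp ξ hf.hasFDerivAt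
  have : fderiv ℝ (fun ξ => L (f ξ)) ξ = L.comp (fderiv ℝ f ξ) := h.fderiv
  simp [pd, this]

lemma pd_apply {N n : ℕ} {V : Pt N → Fin n → ℝ} {ξ : Pt N}
    (hV : DifferentiableAt ℝ V ξ) (i : Fin n) (μ : Fin (N + 1)) :
    pd μ (fun ξ => V ξ i) ξ = pd μ V ξ i :=
  pd_comp_clm hV (ContinuousLinearMap.proj i) μ

lemma pd_entry {N n : ℕ} {W : Pt N → Matrix (Fin n) (Fin n) ℝ} {ξ : Pt N}
    (hW : DifferentiableAt ℝ W ξ) (i j : Fin n) (μ : Fin (N + 1)) :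
    pd μ (fun ξ => W ξ i j) ξ = pd μ W ξ i j :=
  pd_comp_clm hW (entryCLM n i j) μ

/-- translation invariance of pd for an invariant function -/
lemma pd_of_periodic_shift {N : ℕ} {E : Type*} [NormedAddCommGroup E] [NormedSpace ℝ E]
    {f : Pt N → E} (c : Pt N) (hfc : ∀ x, f (x + c) = f x)
    (hdf : ∀ x, DifferentiableAt ℝ f x) (ξ : Pt N) (μ : Fin (N + 1)) :
    pd μ f (ξ + c) = pd μ f ξ := by
  have hfun : (fun y : Pt N => f (y + c)) = f := funext hfc
  have h1 : HasFDerivAt (fun y : Pt N => y + c) (ContinuousLinearMap.id ℝ (Pt N)) ξ :=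
    (hasFDerivAt_id ξ).add_const c
  have h2 : HasFDerivAt (fun y : Pt N => f (y + c))
      ((fderiv ℝ f (ξ + c)).comp (ContinuousLinearMap.id ℝ (Pt N))) ξ :=
    (hdf (ξ + c)).hasFDerivAt.comp ξ h1
  rw [hfun] at h2
  have h3 : fderiv ℝ f ξ = (fderiv ℝ f (ξ + c)).comp (ContinuousLinearMap.id ℝ (Pt N)) :=
    h2.fderiv
  simp [pd, h3]

lemma pd_spacePeriodic {N : ℕ} {E : Type*} [NormedAddCommGroup E] [NormedSpace ℝ E]
    {f : Pt N → E} (hf : SpacePeriodic f) (hdf : ∀ x, DifferentiableAt ℝ f x) (μ : Fin (N + 1)) :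
    SpacePeriodic (pd μ f) :=
  fun i ξ => pd_of_periodic_shift (Pi.single i.succ 1) (fun x => hf i x) hdf ξ μ


/-- product rule for the quadratic form U ⬝ᵥ W *ᵥ U -/
lemma pd_quadform {N n : ℕ} {W : Pt N → Matrix (Fin n) (Fin n) ℝ} {V : Pt N → Fin n → ℝ}
    {ξ : Pt N} (hW : DifferentiableAt ℝ W ξ) (hV : DifferentiableAt ℝ V ξ) (μ : Fin (N + 1)) :
    pd μ (fun ξ => V ξ ⬝ᵥ (W ξ).mulVec (V ξ)) ξ
      = pd μ V ξ ⬝ᵥ (W ξ).mulVec (V ξ) + V ξ ⬝ᵥ (pd μ W ξ).mulVec (V ξ)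
        + V ξ ⬝ᵥ (W ξ).mulVec (pd μ V ξ) := by
  set V' := fderiv ℝ V ξ with hV'
  set W' := fderiv ℝ W ξ with hW'
  have hVi : ∀ i : Fin n, HasFDerivAt (fun ξ => V ξ i)
      ((ContinuousLinearMap.proj i).comp V') ξ :=
    fun i => by
      simpa [Function.comp_def] using
        (ContinuousLinearMap.proj (R := ℝ) (φ := fun _ : Fin n => ℝ) i).hasFDerivAt.comp
          ξ hV.hasFDerivAt
  have hWij : ∀ i j : Fin n, HasFDerivAt (fun ξ => W ξ i j)
      ((entryCLM n i j).comp W') ξ :=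
    fun i j => by
      exact (entryCLM n i j).hasFDerivAt.comp ξ hW.hasFDerivAt
  have key : HasFDerivAt (fun ξ => V ξ ⬝ᵥ (W ξ).mulVec (V ξ))
      (∑ i, ∑ j, (V ξ i • (W ξ i j • ((ContinuousLinearMap.proj j).comp V')
          + V ξ j • ((entryCLM n i j).comp W'))
        + (W ξ i j * V ξ j) • ((ContinuousLinearMap.proj i).comp V'))) ξ := by
    have h1 : ∀ i j : Fin n, HasFDerivAt (fun ξ => V ξ i * (W ξ i j * V ξ j))
        (V ξ i • (W ξ i j • ((ContinuousLinearMap.proj j).comp V')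
          + V ξ j • ((entryCLM n i j).comp W'))
        + (W ξ i j * V ξ j) • ((ContinuousLinearMap.proj i).comp V')) ξ :=
      fun i j => (hVi i).mul ((hWij i j).mul (hVi j))
    have h2 : HasFDerivAt (fun ξ => ∑ i, ∑ j, V ξ i * (W ξ i j * V ξ j))
        (∑ i, ∑ j, (V ξ i • (W ξ i j • ((ContinuousLinearMap.proj j).comp V')
          + V ξ j • ((entryCLM n i j).comp W'))
        + (W ξ i j * V ξ j) • ((ContinuousLinearMap.proj i).comp V'))) ξ :=
      HasFDerivAt.fun_sum (fun i _ => HasFDerivAt.fun_sum (fun j _ => h1 i j))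
    have hfun : (fun ξ => ∑ i, ∑ j, V ξ i * (W ξ i j * V ξ j))
        = fun ξ => V ξ ⬝ᵥ (W ξ).mulVec (V ξ) := by
      funext ξ
      simp [dotProduct, Matrix.mulVec, Finset.mul_sum]
    rwa [hfun] at h2
  have hfd : pd μ (fun ξ => V ξ ⬝ᵥ (W ξ).mulVec (V ξ)) ξ
      = (∑ i, ∑ j, (V ξ i • (W ξ i j • ((ContinuousLinearMap.proj j).comp V')
          + V ξ j • ((entryCLM n i j).comp W'))
        + (W ξ i j * V ξ j) • ((ContinuousLinearMap.proj i).comp V'))) (Pi.single μ 1) := by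
    rw [pd, key.fderiv]
  rw [hfd]
  have hpdV : pd μ V ξ = V' (Pi.single μ 1) := rfl
  have hpdW : pd μ W ξ = W' (Pi.single μ 1) := rfl
  simp only [ContinuousLinearMap.sum_apply, ContinuousLinearMap.add_apply,
    ContinuousLinearMap.smul_apply, ContinuousLinearMap.comp_apply,
    ContinuousLinearMap.proj_apply, entryCLM_apply, smul_eq_mul, hpdV, hpdW,
    dotProduct, Matrix.mulVec, Finset.mul_sum]
  rw [← Finset.sum_add_distrib, ← Finset.sum_add_distrib]
  refine Finset.sum_congr rfl (fun i _ => ?_)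
  rw [← Finset.sum_add_distrib, ← Finset.sum_add_distrib]
  refine Finset.sum_congr rfl (fun j _ => ?_)
  ring


lemma matOpNorm_nonneg {n : ℕ} (M : Matrix (Fin n) (Fin n) ℝ) : 0 ≤ matOpNorm M :=
  norm_nonneg _

lemma mulVec_norm_le {n : ℕ} (M : Matrix (Fin n) (Fin n) ℝ) (x : Fin n → ℝ) :
    ‖M.mulVec x‖ ≤ matOpNorm M * ‖x‖ := by
  have h := (LinearMap.toContinuousLinearMap M.mulVecLin).le_opNorm x
  simpa [matOpNorm, Matrix.mulVecLin_apply] using h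

/-- row sums of absolute values are bounded by the ℓ∞-operator norm -/
lemma rowsum_le_opNorm {n : ℕ} (M : Matrix (Fin n) (Fin n) ℝ) (i : Fin n) :
    ∑ j, |M i j| ≤ matOpNorm M := by
  classical
  set s : Fin n → ℝ := fun j => if 0 ≤ M i j then (1 : ℝ) else -1 with hs
  have hsnorm : ‖s‖ ≤ 1 := by
    rw [pi_norm_le_iff_of_nonneg zero_le_one]
    intro j
    by_cases h : 0 ≤ M i j <;> simp [hs, h]
  have h1 : ∑ j, |M i j| = M.mulVec s i := by
    simp only [Matrix.mulVec, dotProduct]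
    refine Finset.sum_congr rfl (fun j _ => ?_)
    by_cases h : 0 ≤ M i j
    · simp [hs, h, abs_of_nonneg h]
    · push_neg at h
      simp [hs, not_le.2 h, abs_of_neg h]
  have h2 : M.mulVec s i ≤ ‖M.mulVec s‖ := by
    calc M.mulVec s i ≤ |M.mulVec s i| := le_abs_self _
    _ ≤ ‖M.mulVec s‖ := by
      simpa [Real.norm_eq_abs] using norm_le_pi_norm (M.mulVec s) i
  calc ∑ j, |M i j| = M.mulVec s i := h1
  _ ≤ ‖M.mulVec s‖ := h2
  _ ≤ matOpNorm M * ‖s‖ := mulVec_norm_le M s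
  _ ≤ matOpNorm M * 1 := by
      exact mul_le_mul_of_nonneg_left hsnorm (matOpNorm_nonneg M)
  _ = matOpNorm M := mul_one _

/-- quadratic form bound for a symmetric matrix, by the ℓ∞ operator norm and
the Euclidean norm squared -/
lemma abs_quadform_le {n : ℕ} (M : Matrix (Fin n) (Fin n) ℝ) (hM : M.IsSymm)
    (x : Fin n → ℝ) :
    |x ⬝ᵥ M.mulVec x| ≤ matOpNorm M * ∑ i, x i ^ 2 := by
  classical
  have hMsym : ∀ i j, M j i = M i j := fun i j => by
    have := congrFun (congrFun hM i) j
    simpa [Matrix.transpose_apply] using this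
  have h1 : |x ⬝ᵥ M.mulVec x| ≤ ∑ i, ∑ j, |M i j| * (|x i| * |x j|) := by
    simp only [dotProduct, Matrix.mulVec, Finset.mul_sum]
    calc |∑ i, ∑ j, x i * (M i j * x j)| ≤ ∑ i, |∑ j, x i * (M i j * x j)| :=
          Finset.abs_sum_le_sum_abs _ _
    _ ≤ ∑ i, ∑ j, |x i * (M i j * x j)| :=
        Finset.sum_le_sum (fun i _ => Finset.abs_sum_le_sum_abs _ _)
    _ = ∑ i, ∑ j, |M i j| * (|x i| * |x j|) := by
        refine Finset.sum_congr rfl (fun i _ => Finset.sum_congr rfl (fun j _ => ?_))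
        rw [abs_mul, abs_mul]
        ring
  have h2 : ∀ i j : Fin n, |M i j| * (|x i| * |x j|)
      ≤ |M i j| * ((x i ^ 2 + x j ^ 2) / 2) := by
    intro i j
    refine mul_le_mul_of_nonneg_left ?_ (abs_nonneg _)
    nlinarith [sq_nonneg (|x i| - |x j|), sq_abs (x i), sq_abs (x j), abs_nonneg (x i),
      abs_nonneg (x j)]
  have h3 : ∑ i, ∑ j, |M i j| * (|x i| * |x j|)
      ≤ ∑ i, ∑ j, |M i j| * ((x i ^ 2 + x j ^ 2) / 2) :=
    Finset.sum_le_sum (fun i _ => Finset.sum_le_sum (fun j _ => h2 i j))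
  have hA : ∑ i, ∑ j, |M i j| * x i ^ 2 ≤ matOpNorm M * ∑ i, x i ^ 2 := by
    calc ∑ i, ∑ j, |M i j| * x i ^ 2 = ∑ i, (∑ j, |M i j|) * x i ^ 2 := by
          refine Finset.sum_congr rfl (fun i _ => ?_)
          rw [Finset.sum_mul]
    _ ≤ ∑ i, matOpNorm M * x i ^ 2 :=
        Finset.sum_le_sum (fun i _ =>
          mul_le_mul_of_nonneg_right (rowsum_le_opNorm M i) (sq_nonneg _))
    _ = matOpNorm M * ∑ i, x i ^ 2 := by rw [Finset.mul_sum]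
  have hB : ∑ i, ∑ j, |M i j| * x j ^ 2 ≤ matOpNorm M * ∑ j, x j ^ 2 := by
    rw [Finset.sum_comm]
    calc ∑ j, ∑ i, |M i j| * x j ^ 2 = ∑ j, (∑ i, |M j i|) * x j ^ 2 := by
          refine Finset.sum_congr rfl (fun j _ => ?_)
          rw [Finset.sum_mul]
          refine Finset.sum_congr rfl (fun i _ => ?_)
          rw [hMsym j i]
    _ ≤ ∑ j, matOpNorm M * x j ^ 2 :=
        Finset.sum_le_sum (fun j _ =>
          mul_le_mul_of_nonneg_right (rowsum_le_opNorm M j) (sq_nonneg _))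
    _ = matOpNorm M * ∑ j, x j ^ 2 := by rw [Finset.mul_sum]
  have h4 : ∑ i, ∑ j, |M i j| * ((x i ^ 2 + x j ^ 2) / 2)
      ≤ matOpNorm M * ∑ i, x i ^ 2 := by
    have heq : ∑ i, ∑ j, |M i j| * ((x i ^ 2 + x j ^ 2) / 2)
        = ((∑ i, ∑ j, |M i j| * x i ^ 2) + (∑ i, ∑ j, |M i j| * x j ^ 2)) / 2 := by
      have hsplit : ∀ i j : Fin n, |M i j| * ((x i ^ 2 + x j ^ 2) / 2) * 2
          = |M i j| * x i ^ 2 + |M i j| * x j ^ 2 := fun i j => by ring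
      rw [eq_div_iff (by norm_num : (2:ℝ) ≠ 0), Finset.sum_mul, ← Finset.sum_add_distrib]
      refine Finset.sum_congr rfl (fun i _ => ?_)
      rw [Finset.sum_mul, ← Finset.sum_add_distrib]
      exact Finset.sum_congr rfl (fun j _ => hsplit i j)
    rw [heq]
    linarith [hA, hB]
  linarith [h1, h3, h4]

/-- mulVec as a linear map into continuous linear maps -/
def mulVecCLMLin (n : ℕ) :
    Matrix (Fin n) (Fin n) ℝ →ₗ[ℝ] ((Fin n → ℝ) →L[ℝ] (Fin n → ℝ)) where
  toFun := fun M => LinearMap.toContinuousLinearMap M.mulVecLin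
  map_add' := by
    intro A B
    apply ContinuousLinearMap.ext
    intro v
    simp [Matrix.add_mulVec]
  map_smul' := by
    intro c A
    apply ContinuousLinearMap.ext
    intro v
    simp [Matrix.smul_mulVec]

/-- continuity of matOpNorm -/
lemma continuous_matOpNorm {n : ℕ} :
    Continuous (fun M : Matrix (Fin n) (Fin n) ℝ => matOpNorm M) := by
  have hL : Continuous (mulVecCLMLin n) := (mulVecCLMLin n).continuous_of_finiteDimensional
  have heq : (fun M : Matrix (Fin n) (Fin n) ℝ => matOpNorm M)
      = fun M => ‖mulVecCLMLin n M‖ := rfl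
  rw [heq]
  exact hL.norm

/-- symmetric matrices: quadratic form symmetry -/
lemma dot_mulVec_symm {n : ℕ} (M : Matrix (Fin n) (Fin n) ℝ) (hM : M.IsSymm)
    (a b : Fin n → ℝ) : a ⬝ᵥ M.mulVec b = b ⬝ᵥ M.mulVec a := by
  have hMsym : ∀ i j, M j i = M i j := fun i j => by
    have := congrFun (congrFun hM i) j
    simpa [Matrix.transpose_apply] using this
  simp only [dotProduct, Matrix.mulVec, Finset.mul_sum]
  rw [Finset.sum_comm]
  refine Finset.sum_congr rfl (fun i _ => Finset.sum_congr rfl (fun j _ => ?_))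
  rw [hMsym i j]
  ring

lemma dot_transpose_mulVec {n : ℕ} (M : Matrix (Fin n) (Fin n) ℝ) (a : Fin n → ℝ) :
    a ⬝ᵥ Mᵀ.mulVec a = a ⬝ᵥ M.mulVec a := by
  simp only [dotProduct, Matrix.mulVec, Finset.mul_sum, Matrix.transpose_apply]
  rw [Finset.sum_comm]
  refine Finset.sum_congr rfl (fun i _ => Finset.sum_congr rfl (fun j _ => ?_))
  ring

/-- lower bound from positive semidefiniteness of W - Q⁻¹ • 1 -/
lemma quadform_lower {n : ℕ} {Q : ℝ} (hQ : 0 < Q) {W : Matrix (Fin n) (Fin n) ℝ}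
    (h : matLE (Q⁻¹ • (1 : Matrix (Fin n) (Fin n) ℝ)) W) (x : Fin n → ℝ) :
    Q⁻¹ * ∑ i, x i ^ 2 ≤ x ⬝ᵥ W.mulVec x := by
  have h2 := h.dotProduct_mulVec_nonneg x
  have : (star x) ⬝ᵥ (W - Q⁻¹ • (1 : Matrix (Fin n) (Fin n) ℝ)).mulVec x
      = x ⬝ᵥ W.mulVec x - Q⁻¹ * ∑ i, x i ^ 2 := by
    simp [Matrix.sub_mulVec, dotProduct_sub, Matrix.smul_mulVec,
      Matrix.one_mulVec, dotProduct_smul, dotProduct, smul_eq_mul, sq]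
    rw [Finset.mul_sum, ← Finset.sum_sub_distrib]
    refine Finset.sum_congr rfl (fun i _ => ?_)
    ring
  rw [this] at h2
  linarith

/-- upper bound from positive semidefiniteness of Q • 1 - W -/
lemma quadform_upper {n : ℕ} {Q : ℝ} (hQ : 0 < Q) {W : Matrix (Fin n) (Fin n) ℝ}
    (h : matLE W (Q • (1 : Matrix (Fin n) (Fin n) ℝ))) (x : Fin n → ℝ) :
    x ⬝ᵥ W.mulVec x ≤ Q * ∑ i, x i ^ 2 := by
  have h2 := h.dotProduct_mulVec_nonneg x
  have : (star x) ⬝ᵥ ((Q • (1 : Matrix (Fin n) (Fin n) ℝ)) - W).mulVec x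
      = Q * ∑ i, x i ^ 2 - x ⬝ᵥ W.mulVec x := by
    simp [Matrix.sub_mulVec, dotProduct_sub, Matrix.smul_mulVec,
      Matrix.one_mulVec, dotProduct_smul, dotProduct, smul_eq_mul, sq]
    rw [Finset.mul_sum, ← Finset.sum_sub_distrib]
    refine Finset.sum_congr rfl (fun i _ => ?_)
    ring
  rw [this] at h2
  linarith


open MeasureTheory in
/-- reversed Gronwall inequality: |f'| ≤ K f with f ≥ 0 gives backward estimate -/
lemma gronwall_rev {f f' : ℝ → ℝ} {a b K : ℝ} (hab : a ≤ b)
    (hd : ∀ t ∈ Set.Icc a b, HasDerivAt f (f' t) t)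
    (hnn : ∀ t ∈ Set.Icc a b, 0 ≤ f t)
    (hb : ∀ t ∈ Set.Icc a b, |f' t| ≤ K * f t) :
    f a ≤ f b * Real.exp (K * (b - a)) := by
  set G : ℝ → ℝ := fun s => f (a + b - s) with hG
  have hmem : ∀ s ∈ Set.Icc a b, a + b - s ∈ Set.Icc a b := by
    intro s hs
    constructor <;> [linarith [hs.2]; linarith [hs.1]]
  have hGd : ∀ s ∈ Set.Icc a b, HasDerivAt G (-(f' (a + b - s))) s := by
    intro s hs
    have hinner : HasDerivAt (fun s : ℝ => a + b - s) (-1) s := by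
      exact (hasDerivAt_id' s).const_sub (a + b)
    have := (hd _ (hmem s hs)).comp s hinner
    simpa [hG, mul_comm, Function.comp_def] using this
  have hcont : ContinuousOn G (Set.Icc a b) :=
    fun s hs => ((hGd s hs).continuousAt).continuousWithinAt
  have hder : ∀ s ∈ Set.Ico a b, HasDerivWithinAt G (-(f' (a + b - s))) (Set.Ici s) s :=
    fun s hs => ((hGd s (Set.mem_Icc_of_Ico hs)).hasDerivWithinAt)
  have hGa : ‖G a‖ ≤ ‖f b‖ := by
    simp [hG]
  have hbound : ∀ s ∈ Set.Ico a b, ‖-(f' (a + b - s))‖ ≤ K * ‖G s‖ + 0 := by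
    intro s hs
    have hm := hmem s (Set.mem_Icc_of_Ico hs)
    have h1 := hb _ hm
    have h2 := hnn _ hm
    rw [norm_neg, Real.norm_eq_abs, Real.norm_eq_abs]
    rw [abs_of_nonneg h2]
    simpa using h1
  have := norm_le_gronwallBound_of_norm_deriv_right_le hcont hder hGa hbound b
    (Set.right_mem_Icc.2 hab)
  rw [gronwallBound_ε0] at this
  have hGb : G b = f a := by simp [hG]
  rw [hGb] at this
  calc f a ≤ ‖f a‖ := le_abs_self _
  _ ≤ ‖f b‖ * Real.exp (K * (b - a)) := this
  _ = f b * Real.exp (K * (b - a)) := by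
      rw [Real.norm_eq_abs, abs_of_nonneg (hnn b (Set.right_mem_Icc.2 hab))]

/-- reduction of a point to the fundamental cube, for every function periodic
w.r.t. the integer lattice -/
lemma shift_to_cube {N : ℕ} (x : Fin N → ℝ) :
    ∃ y ∈ Set.Icc (0 : Fin N → ℝ) 1,
      ∀ {α : Type*} (f : (Fin N → ℝ) → α),
        (∀ (i : Fin N) (z : Fin N → ℝ), f (z + Pi.single i 1) = f z) → f x = f y := by
  classical
  set ee : Fin N → (Fin N → ℝ) := fun i => Pi.single i 1 with hee
  set y : Fin N → ℝ := fun i => Int.fract (x i) with hy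
  have hy01 : y ∈ Set.Icc (0 : Fin N → ℝ) 1 := by
    constructor
    · intro i
      exact Int.fract_nonneg _
    · intro i
      exact le_of_lt (Int.fract_lt_one _)
  refine ⟨y, hy01, ?_⟩
  intro α f hf
  have hsingle : ∀ (i : Fin N) (k : ℤ) (z : Fin N → ℝ),
      f (z + (k : ℝ) • ee i) = f z := by
    intro i k z
    have hper : Function.Periodic (fun t : ℝ => f (z + t • ee i)) 1 := by
      intro t
      have h1 : z + (t + 1) • ee i = (z + t • ee i) + ee i := by
        rw [add_smul, one_smul, add_assoc]
      show f (z + (t + 1) • ee i) = f (z + t • ee i)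
      rw [h1, hee]
      exact hf i _
    have := (hper.int_mul k) 0
    simpa using this
  have hstep : ∀ s : Finset (Fin N),
      f (y + ∑ i ∈ s, ((⌊x i⌋ : ℝ) • ee i)) = f y := by
    intro s
    induction s using Finset.induction_on with
    | empty => simp
    | insert a s' hni ih =>
      rw [Finset.sum_insert hni]
      have h2 : y + (((⌊x a⌋ : ℤ) : ℝ) • ee a + ∑ i ∈ s', ((⌊x i⌋ : ℝ) • ee i))
          = (y + ∑ i ∈ s', ((⌊x i⌋ : ℝ) • ee i)) + ((⌊x a⌋ : ℤ) : ℝ) • ee a := by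
        abel
      rw [h2, hsingle a ⌊x a⌋ _, ih]
  have hx : x = y + ∑ i, ((⌊x i⌋ : ℝ) • ee i) := by
    funext j
    have h1 : (∑ i, ((⌊x i⌋ : ℝ) • ee i)) j
        = ∑ i, ((⌊x i⌋ : ℝ) * ee i j) := by
      rw [Finset.sum_apply]
      exact Finset.sum_congr rfl (fun i _ => by simp)
    have h2 : ∑ i, ((⌊x i⌋ : ℝ) * ee i j) = (⌊x j⌋ : ℝ) := by
      rw [Finset.sum_eq_single j]
      · simp [hee]
      · intro i _ hij
        simp [hee, Pi.single_apply, Ne.symm hij]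
      · intro h
        exact absurd (Finset.mem_univ j) h
    simp only [Pi.add_apply, h1, h2, hy]
    rw [Int.fract]
    ring
  rw [hx, hstep Finset.univ]

open MeasureTheory in
/-- a nonnegative continuous function with vanishing integral on the unit cube
vanishes on the cube -/
lemma vanish_of_integral_zero {N : ℕ} {φ : (Fin N → ℝ) → ℝ} (hφ : Continuous φ)
    (h0 : ∀ x, 0 ≤ φ x)
    (hint : ∫ x in Set.Icc (0 : Fin N → ℝ) 1, φ x = 0) :
    ∀ x ∈ Set.Icc (0 : Fin N → ℝ) 1, φ x = 0 := by
  classical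
  by_contra hcon
  push_neg at hcon
  obtain ⟨x₀, hx₀, hφx₀⟩ := hcon
  have hε : 0 < φ x₀ := lt_of_le_of_ne (h0 x₀) (Ne.symm hφx₀)
  obtain ⟨δ, hδ, hball⟩ := Metric.continuousAt_iff.1 hφ.continuousAt (φ x₀ / 2) (by linarith)
  set δ' : ℝ := min (δ / 2) 1 with hδ'
  have hδ'pos : 0 < δ' := lt_min (by linarith) one_pos
  set A : Fin N → ℝ := fun i => max (x₀ i - δ') 0 with hA
  set B : Fin N → ℝ := fun i => min (x₀ i + δ') 1 with hB
  have hAB : ∀ i, A i < B i := by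
    intro i
    have h1 : 0 ≤ x₀ i := hx₀.1 i
    have h2 : x₀ i ≤ 1 := hx₀.2 i
    refine max_lt (lt_min (by linarith) (by linarith)) (lt_min (by linarith) one_pos)
  have hsub : Set.Icc A B ⊆ Set.Icc (0 : Fin N → ℝ) 1 := by
    intro z hz
    constructor
    · intro i
      exact le_trans (le_max_right _ _) (hz.1 i)
    · intro i
      exact le_trans (hz.2 i) (min_le_right _ _)
  have hballmem : ∀ z ∈ Set.Icc A B, φ x₀ / 2 ≤ φ z := by
    intro z hz
    have hdist : dist z x₀ < δ := by
      have : dist z x₀ ≤ δ / 2 := by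
        rw [dist_pi_le_iff (by linarith)]
        intro i
        rw [Real.dist_eq, abs_le]
        have l1 := hz.1 i
        have l2 := hz.2 i
        have l3 : x₀ i - δ' ≤ z i := le_trans (le_max_left _ _) l1
        have l4 : z i ≤ x₀ i + δ' := le_trans l2 (min_le_left _ _)
        have l5 : δ' ≤ δ / 2 := min_le_left _ _
        constructor <;> linarith
      linarith
    have := hball hdist
    rw [Real.dist_eq, abs_lt] at this
    linarith [this.1]
  have hvol : 0 < (volume (Set.Icc A B)).toReal := by
    rw [Real.volume_Icc_pi_toReal (fun i => le_of_lt (hAB i))]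
    exact Finset.prod_pos (fun i _ => by linarith [hAB i])
  have hIcc : IntegrableOn φ (Set.Icc (0 : Fin N → ℝ) 1) volume :=
    hφ.continuousOn.integrableOn_compact isCompact_Icc
  have h1 : ∫ x in Set.Icc A B, φ x ≤ ∫ x in Set.Icc (0 : Fin N → ℝ) 1, φ x := by
    refine setIntegral_mono_set hIcc ?_ (HasSubset.Subset.eventuallyLE hsub)
    exact Filter.Eventually.of_forall (fun z => h0 z)
  have h2 : φ x₀ / 2 * (volume (Set.Icc A B)).toReal ≤ ∫ x in Set.Icc A B, φ x := by
    have hIAB : IntegrableOn φ (Set.Icc A B) volume :=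
      hφ.continuousOn.integrableOn_compact isCompact_Icc
    have hfin : volume (Set.Icc A B) ≠ ⊤ :=
      (isCompact_Icc.measure_lt_top).ne
    exact setIntegral_ge_of_const_le_real measurableSet_Icc hfin hballmem hIAB
  have : (0:ℝ) < ∫ x in Set.Icc (0 : Fin N → ℝ) 1, φ x := by
    calc (0:ℝ) < φ x₀ / 2 * (volume (Set.Icc A B)).toReal :=
          mul_pos (by linarith) hvol
    _ ≤ ∫ x in Set.Icc A B, φ x := h2
    _ ≤ ∫ x in Set.Icc (0 : Fin N → ℝ) 1, φ x := h1
  rw [hint] at this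
  exact lt_irrefl 0 this


lemma cons_line {N : ℕ} (t : ℝ) (x : Fin N → ℝ) :
    (Fin.cons t x : Pt N) = Fin.cons (0:ℝ) x + t • (Pi.single (0 : Fin (N+1)) (1:ℝ) : Pt N) := by
  funext j
  refine Fin.cases ?_ ?_ j
  · simp
  · intro k
    simp [Pi.single_eq_of_ne (Fin.succ_ne_zero k)]

lemma cons_add_single {N : ℕ} (τ : ℝ) (x : Fin N → ℝ) (i : Fin N) :
    (Fin.cons τ (x + Pi.single i 1) : Pt N) = Fin.cons τ x + Pi.single i.succ 1 := by
  funext j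
  refine Fin.cases ?_ ?_ j
  · simp [Pi.single_eq_of_ne (Ne.symm (Fin.succ_ne_zero i)) ]
  · intro k
    simp [Pi.single_apply, Fin.succ_inj]

lemma continuous_cons {N : ℕ} :
    Continuous (fun p : ℝ × (Fin N → ℝ) => (Fin.cons p.1 p.2 : Pt N)) := by
  apply continuous_pi
  intro j
  refine Fin.cases ?_ ?_ j
  · exact continuous_fst
  · intro k
    exact (continuous_apply k).comp continuous_snd

/-- the linear embedding x ↦ Fin.cons 0 x -/
def consCLM (N : ℕ) : (Fin N → ℝ) →L[ℝ] Pt N :=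
  LinearMap.toContinuousLinearMap
    { toFun := fun x => Fin.cons 0 x
      map_add' := by
        intro a b
        funext j
        refine Fin.cases ?_ ?_ j <;> simp
      map_smul' := by
        intro c a
        funext j
        refine Fin.cases ?_ ?_ j <;> simp }

@[simp] lemma consCLM_apply {N : ℕ} (x : Fin N → ℝ) :
    consCLM N x = (Fin.cons 0 x : Pt N) := rfl

lemma cons_decomp {N : ℕ} (τ : ℝ) (x : Fin N → ℝ) :
    (Fin.cons τ x : Pt N) = Fin.cons τ (0 : Fin N → ℝ) + consCLM N x := by
  funext j
  refine Fin.cases ?_ ?_ j <;> simp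

lemma hasFDerivAt_cons_right {N : ℕ} (τ : ℝ) (x : Fin N → ℝ) :
    HasFDerivAt (fun x : Fin N → ℝ => (Fin.cons τ x : Pt N)) (consCLM N) x := by
  have h : HasFDerivAt (fun x : Fin N → ℝ => Fin.cons τ (0 : Fin N → ℝ) + consCLM N x)
      (consCLM N) x := by
    simpa using ((consCLM N).hasFDerivAt (x := x)).const_add (Fin.cons τ (0 : Fin N → ℝ))
  have heq : (fun x : Fin N → ℝ => (Fin.cons τ x : Pt N))
      = fun x => Fin.cons τ (0 : Fin N → ℝ) + consCLM N x := funext (fun x => cons_decomp τ x)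
  rw [heq]
  exact h

lemma contDiff_cons_right {N : ℕ} (τ : ℝ) :
    ContDiff ℝ (⊤ : ℕ∞) (fun x : Fin N → ℝ => (Fin.cons τ x : Pt N)) := by
  have heq : (fun x : Fin N → ℝ => (Fin.cons τ x : Pt N))
      = fun x => Fin.cons τ (0 : Fin N → ℝ) + consCLM N x := funext (fun x => cons_decomp τ x)
  rw [heq]
  exact contDiff_const.add (consCLM N).contDiff

lemma fderiv_cons_right {N : ℕ} {E : Type*} [NormedAddCommGroup E] [NormedSpace ℝ E]
    {f : Pt N → E} (τ : ℝ) (x : Fin N → ℝ)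
    (hf : DifferentiableAt ℝ f (Fin.cons τ x)) (v : Fin N → ℝ) :
    fderiv ℝ (fun x => f (Fin.cons τ x)) x v
      = fderiv ℝ f (Fin.cons τ x) (Fin.cons 0 v) := by
  have h := (hf.hasFDerivAt.comp x (hasFDerivAt_cons_right τ x)).fderiv
  have : fderiv ℝ (fun x => f (Fin.cons τ x)) x
      = (fderiv ℝ f (Fin.cons τ x)).comp (consCLM N) := by
    rw [← h]
    rfl
  rw [this]
  rfl

lemma cons_zero_single {N : ℕ} (i : Fin N) :
    (Fin.cons 0 (Pi.single i (1:ℝ)) : Pt N) = Pi.single i.succ 1 := by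
  funext j
  refine Fin.cases ?_ ?_ j
  · simp [Pi.single_eq_of_ne (Ne.symm (Fin.succ_ne_zero i))]
  · intro k
    simp [Pi.single_apply, Fin.succ_inj]

lemma insertNth_line {m : ℕ} (i : Fin (m+1)) (t : ℝ) (y : Fin m → ℝ) :
    i.insertNth t y = i.insertNth 0 y + t • (Pi.single i (1:ℝ) : Fin (m+1) → ℝ) := by
  funext j
  refine Fin.succAboveCases i ?_ ?_ j
  · simp
  · intro k
    simp [Pi.single_eq_of_ne (Fin.succAbove_ne i k)]

lemma insertNth_shift {m : ℕ} (i : Fin (m+1)) (y : Fin m → ℝ) :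
    i.insertNth (1:ℝ) y = i.insertNth 0 y + (Pi.single i (1:ℝ) : Fin (m+1) → ℝ) := by
  funext j
  refine Fin.succAboveCases i ?_ ?_ j
  · simp
  · intro k
    simp [Pi.single_eq_of_ne (Fin.succAbove_ne i k)]


open MeasureTheory in
/-- differentiation under the integral over the unit cube -/
lemma hasDerivAt_cube_integral {N : ℕ} (f : Pt N → ℝ) (hf : ContDiff ℝ (⊤ : ℕ∞) f) (τ : ℝ) :
    HasDerivAt (fun τ : ℝ => ∫ x in Set.Icc (0 : Fin N → ℝ) 1, f (Fin.cons τ x))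
      (∫ x in Set.Icc (0 : Fin N → ℝ) 1, pd 0 f (Fin.cons τ x)) τ := by
  have hG : Continuous (fun p : ℝ × (Fin N → ℝ) => pd 0 f (Fin.cons p.1 p.2)) :=
    (continuous_pd hf 0).comp continuous_cons
  have hK : IsCompact ((Set.Icc (τ - 1) (τ + 1)) ×ˢ (Set.Icc (0 : Fin N → ℝ) 1)) :=
    isCompact_Icc.prod isCompact_Icc
  obtain ⟨C, hC⟩ := hK.exists_bound_of_continuousOn hG.continuousOn
  have key := hasDerivAt_integral_of_dominated_loc_of_deriv_le
    (μ := volume.restrict (Set.Icc (0 : Fin N → ℝ) 1))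
    (F := fun t x => f (Fin.cons t x)) (F' := fun t x => pd 0 f (Fin.cons t x))
    (x₀ := τ) (bound := fun _ => C) (s := Metric.ball τ 1) (Metric.ball_mem_nhds τ one_pos)
    ?_ ?_ ?_ ?_ ?_ ?_
  · exact key.2
  · refine Filter.Eventually.of_forall (fun t => ?_)
    exact ((hf.continuous.comp (contDiff_cons_right t).continuous).aestronglyMeasurable)
  · exact ((hf.continuous.comp (contDiff_cons_right τ).continuous).continuousOn).integrableOn_compact
      isCompact_Icc
  · exact ((continuous_pd hf 0).comp (contDiff_cons_right τ).continuous).aestronglyMeasurable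
  · filter_upwards [ae_restrict_mem measurableSet_Icc] with x hx
    intro t ht
    refine hC (t, x) ⟨?_, hx⟩
    have := Metric.mem_ball.1 ht
    rw [Real.dist_eq, abs_lt] at this
    constructor <;> [linarith [this.1]; linarith [this.2]]
  · refine integrableOn_const ?_
    exact isCompact_Icc.measure_lt_top.ne
  · refine Filter.Eventually.of_forall (fun x => ?_)
    intro t _
    have h1 := hasDerivAt_line (f := f) (Fin.cons (0:ℝ) x)
      (Pi.single (0 : Fin (N+1)) (1:ℝ) : Pt N) t
      (by rw [← cons_line]; exact (hf.differentiable (by simp)).differentiableAt)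
    rw [← cons_line] at h1
    have heq : (fun s : ℝ => f (Fin.cons (0:ℝ) x + s • (Pi.single (0 : Fin (N+1)) (1:ℝ) : Pt N)))
        = fun s : ℝ => f (Fin.cons s x) := by
      funext s
      rw [← cons_line]
    rw [heq] at h1
    exact h1


lemma continuous_insertNth {m : ℕ} (i : Fin (m+1)) :
    Continuous (fun z : ℝ × (Fin m → ℝ) => (i.insertNth z.1 z.2 : Fin (m+1) → ℝ)) := by
  apply continuous_pi
  intro j
  refine Fin.succAboveCases i ?_ ?_ j
  · simpa [Fin.insertNth_apply_same] using (continuous_fst :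
      Continuous fun z : ℝ × (Fin m → ℝ) => z.1)
  · intro k
    simpa [Fin.insertNth_apply_succAbove, Function.comp_def] using
      ((continuous_apply k).comp (continuous_snd :
        Continuous fun z : ℝ × (Fin m → ℝ) => z.2))

open MeasureTheory in
/-- the spatial integration by parts: the integral over the cube of a spatial
partial derivative of a smooth spatially periodic function vanishes -/
lemma integral_pd_succ_zero {N : ℕ} (hN : 1 ≤ N) (f : Pt N → ℝ) (hf : ContDiff ℝ (⊤ : ℕ∞) f)
    (hper : SpacePeriodic f) (τ : ℝ) (i : Fin N) :
    ∫ x in Set.Icc (0 : Fin N → ℝ) 1, pd i.succ f (Fin.cons τ x) = 0 := by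
  obtain ⟨m, rfl⟩ : ∃ m, N = m + 1 := ⟨N - 1, (Nat.succ_pred_eq_of_pos hN).symm⟩
  classical
  set h : (Fin (m+1) → ℝ) → ℝ := fun x => f (Fin.cons τ x) with hh
  have hhsmooth : ContDiff ℝ (⊤ : ℕ∞) h := hf.comp (contDiff_cons_right τ)
  have hhper : ∀ (j : Fin (m+1)) (z : Fin (m+1) → ℝ), h (z + Pi.single j 1) = h z := by
    intro j z
    show f (Fin.cons τ (z + Pi.single j 1)) = f (Fin.cons τ z)
    rw [cons_add_single]
    exact hper j _
  have hinteg : (fun x => pd i.succ f (Fin.cons τ x))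
      = fun x => fderiv ℝ h x (Pi.single i 1) := by
    funext x
    rw [hh]
    rw [fderiv_cons_right τ x ((hf.differentiable (by simp)).differentiableAt) (Pi.single i 1)]
    rw [cons_zero_single]
    rfl
  rw [hinteg]
  -- now the pure statement about h on ℝ^(m+1)
  set G : (Fin (m+1) → ℝ) → ℝ := fun x => fderiv ℝ h x (Pi.single i 1) with hGdef
  have hGcont : Continuous G := continuous_pd hhsmooth i
  set e := MeasurableEquiv.piFinSuccAbove (fun _ : Fin (m+1) => ℝ) i with he
  have mp : MeasurePreserving (⇑e.symm)
      ((volume : Measure ℝ).prod (volume : Measure (Fin m → ℝ)))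
      (volume : Measure (Fin (m+1) → ℝ)) := by
    rw [volume_pi (α := fun _ : Fin (m+1) => ℝ), volume_pi (α := fun _ : Fin m => ℝ)]
    exact (measurePreserving_piFinSuccAbove (fun _ : Fin (m+1) => volume) i).symm e
  have hesymm : ∀ (t : ℝ) (y : Fin m → ℝ), e.symm (t, y) = i.insertNth t y := by
    intro t y
    rw [he, MeasurableEquiv.piFinSuccAbove_symm_apply]
    rfl
  have hpre : (⇑e.symm) ⁻¹' (Set.Icc (0 : Fin (m+1) → ℝ) 1)
      = (Set.Icc (0:ℝ) 1) ×ˢ (Set.Icc (0 : Fin m → ℝ) 1) := by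
    ext ⟨t, y⟩
    simp only [Set.mem_preimage, Set.mem_prod, Set.mem_Icc, hesymm t y, Pi.le_def]
    constructor
    · rintro ⟨hl, hu⟩
      refine ⟨⟨?_, ?_⟩, ⟨fun k => ?_, fun k => ?_⟩⟩
      · have := hl i; simpa using this
      · have := hu i; simpa using this
      · have := hl (i.succAbove k); simpa using this
      · have := hu (i.succAbove k); simpa using this
    · rintro ⟨⟨ht0, ht1⟩, hy0, hy1⟩
      constructor
      · intro j
        refine Fin.succAboveCases i ?_ ?_ j
        · simpa using ht0
        · intro k; simpa using hy0 k
      · intro j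
        refine Fin.succAboveCases i ?_ ?_ j
        · simpa using ht1
        · intro k; simpa using hy1 k
  have hemb : MeasurableEmbedding (⇑e.symm) := e.symm.measurableEmbedding
  have step1 : ∫ x in Set.Icc (0 : Fin (m+1) → ℝ) 1, G x
      = ∫ z in (Set.Icc (0:ℝ) 1) ×ˢ (Set.Icc (0 : Fin m → ℝ) 1), G (e.symm z)
          ∂((volume : Measure ℝ).prod (volume : Measure (Fin m → ℝ))) := by
    rw [← mp.setIntegral_preimage_emb hemb G (Set.Icc 0 1), hpre]
  have hIover : IntegrableOn (fun z : ℝ × (Fin m → ℝ) => G (e.symm z))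
      ((Set.Icc (0:ℝ) 1) ×ˢ (Set.Icc (0 : Fin m → ℝ) 1))
      ((volume : Measure ℝ).prod (volume : Measure (Fin m → ℝ))) := by
    refine ContinuousOn.integrableOn_compact (isCompact_Icc.prod isCompact_Icc) ?_
    have hfe : (fun z : ℝ × (Fin m → ℝ) => G (e.symm z))
        = fun z : ℝ × (Fin m → ℝ) => G (i.insertNth z.1 z.2 : Fin (m+1) → ℝ) := by
      funext z
      rw [hesymm z.1 z.2]
    rw [hfe]
    exact (hGcont.comp (continuous_insertNth i)).continuousOn
  have step2 : ∫ z in (Set.Icc (0:ℝ) 1) ×ˢ (Set.Icc (0 : Fin m → ℝ) 1), G (e.symm z)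
          ∂((volume : Measure ℝ).prod (volume : Measure (Fin m → ℝ)))
      = ∫ t in Set.Icc (0:ℝ) 1, ∫ y in Set.Icc (0 : Fin m → ℝ) 1, G (e.symm (t, y)) := by
    exact setIntegral_prod _ hIover
  have hswap : ∫ t in Set.Icc (0:ℝ) 1, ∫ y in Set.Icc (0 : Fin m → ℝ) 1, G (e.symm (t, y))
      = ∫ y in Set.Icc (0 : Fin m → ℝ) 1, ∫ t in Set.Icc (0:ℝ) 1, G (e.symm (t, y)) := by
    apply integral_integral_swap
    rw [Function.uncurry_def]
    rw [Measure.prod_restrict]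
    exact hIover
  have hinner : ∀ y : Fin m → ℝ, ∫ t in Set.Icc (0:ℝ) 1, G (e.symm (t, y)) = 0 := by
    intro y
    have hfun : ∀ t : ℝ, G (e.symm (t, y)) = fderiv ℝ h ((i.insertNth t y : Fin (m+1) → ℝ)) (Pi.single i 1) := by
      intro t
      rw [hesymm]
    have hderiv : ∀ t : ℝ, HasDerivAt (fun t : ℝ => h ((i.insertNth t y : Fin (m+1) → ℝ)))
        (fderiv ℝ h ((i.insertNth t y : Fin (m+1) → ℝ)) (Pi.single i 1)) t := by
      intro t
      have h1 := hasDerivAt_line (f := h) ((i.insertNth (0:ℝ) y : Fin (m+1) → ℝ))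
        (Pi.single i (1:ℝ) : Fin (m+1) → ℝ) t
        (by rw [← insertNth_line]; exact (hhsmooth.differentiable (by simp)).differentiableAt)
      rw [← insertNth_line] at h1
      have heq : (fun s : ℝ => h ((i.insertNth (0:ℝ) y : Fin (m+1) → ℝ) + s • (Pi.single i (1:ℝ) : Fin (m+1) → ℝ)))
          = fun s : ℝ => h ((i.insertNth s y : Fin (m+1) → ℝ)) := by
        funext s
        rw [← insertNth_line]
      rw [heq] at h1
      exact h1
    calc ∫ t in Set.Icc (0:ℝ) 1, G (e.symm (t, y))
        = ∫ t in Set.Icc (0:ℝ) 1, fderiv ℝ h ((i.insertNth t y : Fin (m+1) → ℝ)) (Pi.single i 1) := by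
          simp only [hfun]
    _ = ∫ t in Set.Ioc (0:ℝ) 1, fderiv ℝ h ((i.insertNth t y : Fin (m+1) → ℝ)) (Pi.single i 1) :=
          integral_Icc_eq_integral_Ioc
    _ = ∫ t in (0:ℝ)..1, fderiv ℝ h ((i.insertNth t y : Fin (m+1) → ℝ)) (Pi.single i 1) :=
          (intervalIntegral.integral_of_le zero_le_one).symm
    _ = h ((i.insertNth (1:ℝ) y : Fin (m+1) → ℝ)) - h ((i.insertNth (0:ℝ) y : Fin (m+1) → ℝ)) := by
          refine intervalIntegral.integral_eq_sub_of_hasDerivAt (fun t _ => hderiv t) ?_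
          refine Continuous.intervalIntegrable ?_ 0 1
          have : Continuous (fun t : ℝ => (i.insertNth t y : Fin (m+1) → ℝ)) := by
            rw [funext (fun t : ℝ => insertNth_line i t y)]
            exact continuous_const.add (continuous_id.smul continuous_const)
          exact (continuous_pd hhsmooth i).comp this
    _ = 0 := by
          rw [insertNth_shift i y, hhper i (i.insertNth (0:ℝ) y)]
          ring
  rw [step1, step2, hswap]
  have : (fun y : Fin m → ℝ => ∫ t in Set.Icc (0:ℝ) 1, G (e.symm (t, y)))
      = fun _ => (0:ℝ) := funext hinner
  rw [this]
  simp


lemma dotProduct_sum {n : ℕ} {ι : Type*} (s : Finset ι) (v : ι → Fin n → ℝ)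
    (a : Fin n → ℝ) : a ⬝ᵥ (∑ μ ∈ s, v μ) = ∑ μ ∈ s, a ⬝ᵥ v μ := by
  classical
  induction s using Finset.induction_on with
  | empty => simp
  | insert c s' hni ih =>
    rw [Finset.sum_insert hni, Finset.sum_insert hni, dotProduct_add, ih]

lemma dot_sum_mulVec {n : ℕ} {ι : Type*} (s : Finset ι) (M : ι → Matrix (Fin n) (Fin n) ℝ)
    (a b : Fin n → ℝ) :
    a ⬝ᵥ (∑ μ ∈ s, M μ).mulVec b = ∑ μ ∈ s, a ⬝ᵥ (M μ).mulVec b := by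
  classical
  induction s using Finset.induction_on with
  | empty => simp [Matrix.zero_mulVec]
  | insert c s' hni ih =>
    rw [Finset.sum_insert hni, Finset.sum_insert hni, Matrix.add_mulVec,
      dotProduct_add, ih]

lemma contDiff_quadform {N n : ℕ} {W : Pt N → Matrix (Fin n) (Fin n) ℝ}
    {V : Pt N → Fin n → ℝ} (hW : ContDiff ℝ (⊤ : ℕ∞) W) (hV : ContDiff ℝ (⊤ : ℕ∞) V) :
    ContDiff ℝ (⊤ : ℕ∞) (fun ξ => V ξ ⬝ᵥ (W ξ).mulVec (V ξ)) := by
  have heq : (fun ξ => V ξ ⬝ᵥ (W ξ).mulVec (V ξ))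
      = fun ξ => ∑ i, ∑ j, V ξ i * (W ξ i j * V ξ j) := by
    funext ξ
    simp [dotProduct, Matrix.mulVec, Finset.mul_sum]
  rw [heq]
  refine ContDiff.sum (fun i _ => ContDiff.sum (fun j _ => ?_))
  exact (contDiff_pi.1 hV i).mul ((contDiff_entry hW i j).mul (contDiff_pi.1 hV j))

lemma continuous_quadform {N n : ℕ} {W : Pt N → Matrix (Fin n) (Fin n) ℝ}
    {V : Pt N → Fin n → ℝ} (hW : Continuous W) (hV : Continuous V) :
    Continuous (fun ξ => V ξ ⬝ᵥ (W ξ).mulVec (V ξ)) := by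
  have heq : (fun ξ => V ξ ⬝ᵥ (W ξ).mulVec (V ξ))
      = fun ξ => ∑ i, ∑ j, V ξ i * (W ξ i j * V ξ j) := by
    funext ξ
    simp [dotProduct, Matrix.mulVec, Finset.mul_sum]
  rw [heq]
  refine continuous_finset_sum _ (fun i _ => continuous_finset_sum _ (fun j _ => ?_))
  exact ((continuous_apply i).comp hV).mul
    (((entryCLM n i j).continuous.comp hW).mul ((continuous_apply j).comp hV))

end VED

set_option maxHeartbeats 1000000 in
open MeasureTheory in
theorem vanishing_via_energy_decay
    (N n : ℕ) (hN : 1 ≤ N) (hn : 1 ≤ n)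
    (w : Fin (N + 1) → Pt N → Matrix (Fin n) (Fin n) ℝ)
    (l : Pt N → Matrix (Fin n) (Fin n) ℝ)
    (U : Pt N → Fin n → ℝ)
    (hw : ∀ μ, ContDiff ℝ (⊤ : ℕ∞) (w μ)) (hl : ContDiff ℝ (⊤ : ℕ∞) l) (hU : ContDiff ℝ (⊤ : ℕ∞) U)
    (hwsym : ∀ (μ : Fin (N + 1)) (ξ : Pt N), (w μ ξ).IsSymm)
    (hwper : ∀ μ, SpacePeriodic (w μ)) (hlper : SpacePeriodic l)
    (hUper : SpacePeriodic U)
    -- the linear symmetric hyperbolic system w^μ ∂_μ U = l U on Ω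
    (heq : ∀ ξ : Pt N, 0 ≤ ξ 0 →
      ∑ μ, (w μ ξ).mulVec (pd μ U ξ) = (l ξ).mulVec (U ξ))
    (Q Z : ℝ) (hQ : 0 < Q) (hZ : 0 < Z)
    -- Q⁻¹·Id ≤ w⁰ ≤ Q·Id on Ω
    (hpos : ∀ ξ : Pt N, 0 ≤ ξ 0 →
      matLE (Q⁻¹ • (1 : Matrix (Fin n) (Fin n) ℝ)) (w 0 ξ) ∧
      matLE (w 0 ξ) (Q • (1 : Matrix (Fin n) (Fin n) ℝ)))
    -- limsup_{τ→∞} Q ‖J(τ,·)‖_{L^∞_x} < 2Z, where J = ∂_μ w^μ + l + lᵀ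
    (hJ : ∃ z' T : ℝ, z' < 2 * Z ∧ ∀ ξ : Pt N, T ≤ ξ 0 →
      Q * matOpNorm ((∑ μ, pd μ (w μ) ξ) + l ξ + (l ξ)ᵀ) ≤ z')
    -- ‖U(τ,·)‖_{L^∞_x} = O(e^{-Zτ}) as τ → ∞
    (hUdec : ∃ c T : ℝ, ∀ ξ : Pt N, T ≤ ξ 0 → ‖U ξ‖ ≤ c * Real.exp (-Z * ξ 0)) :
    ∀ ξ : Pt N, 0 ≤ ξ 0 → U ξ = 0 := by
  classical
  obtain ⟨z', TJ, hz', hJb⟩ := hJ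
  obtain ⟨c0, Td, hUd0⟩ := hUdec
  set c : ℝ := max c0 0 with hc
  have hc0 : 0 ≤ c := le_max_right _ _
  have hUd : ∀ ξ : Pt N, Td ≤ ξ 0 → ‖U ξ‖ ≤ c * Real.exp (-Z * ξ 0) := by
    intro ξ hξ
    exact le_trans (hUd0 ξ hξ) (mul_le_mul_of_nonneg_right (le_max_left _ _) (Real.exp_pos _).le)
  -- basic differentiability
  have hdw : ∀ (μ : Fin (N+1)) (ξ : Pt N), DifferentiableAt ℝ (w μ) ξ :=
    fun μ ξ => ((hw μ).differentiable (by simp)).differentiableAt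
  have hdU : ∀ ξ : Pt N, DifferentiableAt ℝ U ξ :=
    fun ξ => (hU.differentiable (by simp)).differentiableAt
  set Jm : Pt N → Matrix (Fin n) (Fin n) ℝ :=
    fun ξ => (∑ μ, pd μ (w μ) ξ) + l ξ + (l ξ)ᵀ with hJm
  set g : Fin (N+1) → Pt N → ℝ := fun μ ξ => U ξ ⬝ᵥ (w μ ξ).mulVec (U ξ) with hg
  set XU : Pt N → ℝ := fun ξ => ∑ i, U ξ i ^ 2 with hXU
  set qJ : Pt N → ℝ := fun ξ => U ξ ⬝ᵥ (Jm ξ).mulVec (U ξ) with hqJ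
  set En : ℝ → ℝ :=
    fun τ => ∫ x in Set.Icc (0 : Fin N → ℝ) 1, g 0 (Fin.cons τ x) with hEn
  have hXUnn : ∀ ξ : Pt N, 0 ≤ XU ξ := by
    intro ξ
    simp only [hXU]
    exact Finset.sum_nonneg (fun i _ => sq_nonneg _)
  -- smoothness of the g μ
  have hgsm : ∀ μ, ContDiff ℝ (⊤ : ℕ∞) (g μ) := by
    intro μ
    simp only [hg]
    exact VED.contDiff_quadform (hw μ) hU
  -- continuity of Jm and qJ
  have hJmcont : Continuous Jm := by
    simp only [hJm]
    refine ((Continuous.add ?_ hl.continuous).add ?_)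
    · exact continuous_finset_sum _ (fun μ _ => VED.continuous_pd (hw μ) μ)
    · exact hl.continuous.matrix_transpose
  have hqJcont : Continuous qJ := by
    simp only [hqJ]
    exact VED.continuous_quadform hJmcont hU.continuous
  -- spatial periodicity statements
  have hgper : ∀ μ, SpacePeriodic (g μ) := by
    intro μ i ξ
    simp only [hg]
    rw [hUper i ξ, hwper μ i ξ]
  have hJmper : SpacePeriodic Jm := by
    intro i ξ
    simp only [hJm]
    have h1 : ∀ μ : Fin (N+1), pd μ (w μ) (ξ + Pi.single i.succ 1) = pd μ (w μ) ξ :=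
      fun μ => VED.pd_spacePeriodic (hwper μ) (hdw μ) μ i ξ
    rw [Finset.sum_congr rfl (fun μ _ => h1 μ), hlper i ξ]
  have hXUper : SpacePeriodic XU := by
    intro i ξ
    simp only [hXU]
    rw [hUper i ξ]
  -- symmetry of Jm
  have hJmsym : ∀ ξ : Pt N, (Jm ξ).IsSymm := by
    intro ξ
    have hpdsym : ∀ μ : Fin (N+1), (pd μ (w μ) ξ)ᵀ = pd μ (w μ) ξ := by
      intro μ
      ext a b
      rw [Matrix.transpose_apply]
      have h1 : pd μ (w μ) ξ b a = pd μ (fun ξ => w μ ξ b a) ξ :=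
        (VED.pd_entry (hdw μ ξ) b a μ).symm
      have h2 : (fun ξ => w μ ξ b a) = fun ξ => w μ ξ a b := by
        funext ζ
        have := congrFun (congrFun (hwsym μ ζ) b) a
        simpa [Matrix.transpose_apply] using this.symm
      rw [h1, h2, VED.pd_entry (hdw μ ξ) a b μ]
    show (Jm ξ)ᵀ = Jm ξ
    simp only [hJm]
    rw [Matrix.transpose_add, Matrix.transpose_add, Matrix.transpose_transpose,
      Matrix.transpose_sum]
    rw [Finset.sum_congr rfl (fun μ _ => hpdsym μ)]
    abel
  -- the key pointwise identity on Ω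
  have hkey : ∀ ξ : Pt N, 0 ≤ ξ 0 → ∑ μ, pd μ (g μ) ξ = qJ ξ := by
    intro ξ hξ
    have hq : ∀ μ : Fin (N+1), pd μ (g μ) ξ
        = pd μ U ξ ⬝ᵥ (w μ ξ).mulVec (U ξ) + U ξ ⬝ᵥ (pd μ (w μ) ξ).mulVec (U ξ)
          + U ξ ⬝ᵥ (w μ ξ).mulVec (pd μ U ξ) := by
      intro μ
      simp only [hg]
      exact VED.pd_quadform (hdw μ ξ) (hdU ξ) μ
    have hsym : ∀ μ : Fin (N+1), pd μ U ξ ⬝ᵥ (w μ ξ).mulVec (U ξ)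
        = U ξ ⬝ᵥ (w μ ξ).mulVec (pd μ U ξ) :=
      fun μ => VED.dot_mulVec_symm (w μ ξ) (hwsym μ ξ) (pd μ U ξ) (U ξ)
    have step1 : ∑ μ, pd μ (g μ) ξ
        = 2 * (U ξ ⬝ᵥ (∑ μ, (w μ ξ).mulVec (pd μ U ξ)))
          + ∑ μ, U ξ ⬝ᵥ (pd μ (w μ) ξ).mulVec (U ξ) := by
      rw [VED.dotProduct_sum, Finset.mul_sum, ← Finset.sum_add_distrib]
      refine Finset.sum_congr rfl (fun μ _ => ?_)
      rw [hq μ, hsym μ]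
      ring
    rw [step1, heq ξ hξ]
    have step2 : U ξ ⬝ᵥ (l ξ).mulVec (U ξ) + U ξ ⬝ᵥ ((l ξ)ᵀ).mulVec (U ξ)
        = 2 * (U ξ ⬝ᵥ (l ξ).mulVec (U ξ)) := by
      rw [VED.dot_transpose_mulVec]
      ring
    simp only [hqJ, hJm]
    rw [Matrix.add_mulVec, Matrix.add_mulVec, dotProduct_add, dotProduct_add,
      VED.dot_sum_mulVec]
    rw [VED.dot_transpose_mulVec]
    ring
  -- quadratic form bounds from the positivity assumption
  have hlow : ∀ ξ : Pt N, 0 ≤ ξ 0 → Q⁻¹ * XU ξ ≤ g 0 ξ := by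
    intro ξ hξ
    simpa [hg, hXU] using VED.quadform_lower hQ (hpos ξ hξ).1 (U ξ)
  have hup : ∀ ξ : Pt N, 0 ≤ ξ 0 → g 0 ξ ≤ Q * XU ξ := by
    intro ξ hξ
    simpa [hg, hXU] using VED.quadform_upper hQ (hpos ξ hξ).2 (U ξ)
  have hg0nn : ∀ ξ : Pt N, 0 ≤ ξ 0 → 0 ≤ g 0 ξ := by
    intro ξ hξ
    refine le_trans ?_ (hlow ξ hξ)
    positivity
  have hXUleQg : ∀ ξ : Pt N, 0 ≤ ξ 0 → XU ξ ≤ Q * g 0 ξ := by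
    intro ξ hξ
    have := hlow ξ hξ
    have h2 := mul_le_mul_of_nonneg_left this hQ.le
    rw [← mul_assoc, mul_inv_cancel₀ hQ.ne', one_mul] at h2
    exact h2
  -- bound on |qJ| in terms of a bound on the operator norm of Jm
  have hqb : ∀ (K : ℝ) (ξ : Pt N), 0 ≤ ξ 0 → matOpNorm (Jm ξ) ≤ K →
      |qJ ξ| ≤ Q * K * g 0 ξ := by
    intro K ξ hξ hK
    have hKnn : 0 ≤ K := le_trans (VED.matOpNorm_nonneg _) hK
    have h1 : |qJ ξ| ≤ matOpNorm (Jm ξ) * XU ξ := by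
      simpa [hqJ, hXU] using VED.abs_quadform_le (Jm ξ) (hJmsym ξ) (U ξ)
    calc |qJ ξ| ≤ matOpNorm (Jm ξ) * XU ξ := h1
    _ ≤ K * XU ξ := mul_le_mul_of_nonneg_right hK (hXUnn ξ)
    _ ≤ K * (Q * g 0 ξ) := mul_le_mul_of_nonneg_left (hXUleQg ξ hξ) hKnn
    _ = Q * K * g 0 ξ := by ring
  -- nonnegativity of the energy
  have hEnn : ∀ τ : ℝ, 0 ≤ τ → 0 ≤ En τ := by
    intro τ hτ
    simp only [hEn]
    refine setIntegral_nonneg measurableSet_Icc (fun x _ => ?_)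
    exact hg0nn (Fin.cons τ x) (by simpa using hτ)
  -- integrability facts on the cube
  have hginteg : ∀ τ : ℝ, IntegrableOn (fun x => g 0 (Fin.cons τ x))
      (Set.Icc (0 : Fin N → ℝ) 1) volume := by
    intro τ
    exact (((hgsm 0).continuous.comp (VED.contDiff_cons_right τ).continuous).continuousOn).integrableOn_compact
      isCompact_Icc
  have hqJinteg : ∀ τ : ℝ, IntegrableOn (fun x => qJ (Fin.cons τ x))
      (Set.Icc (0 : Fin N → ℝ) 1) volume := by
    intro τ
    exact ((hqJcont.comp (VED.contDiff_cons_right τ).continuous).continuousOn).integrableOn_compact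
      isCompact_Icc
  -- derivative of the energy
  have hEd : ∀ τ : ℝ, 0 ≤ τ →
      HasDerivAt En (∫ x in Set.Icc (0 : Fin N → ℝ) 1, qJ (Fin.cons τ x)) τ := by
    intro τ hτ
    have h1 := VED.hasDerivAt_cube_integral (g 0) (hgsm 0) τ
    have h2 : ∫ x in Set.Icc (0 : Fin N → ℝ) 1, pd 0 (g 0) (Fin.cons τ x)
        = ∫ x in Set.Icc (0 : Fin N → ℝ) 1, qJ (Fin.cons τ x) := by
      have hpt : ∀ x : Fin N → ℝ, pd 0 (g 0) (Fin.cons τ x)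
          = qJ (Fin.cons τ x) - ∑ i : Fin N, pd i.succ (g i.succ) (Fin.cons τ x) := by
        intro x
        have hk := hkey (Fin.cons τ x) (by simpa using hτ)
        rw [Fin.sum_univ_succ] at hk
        linarith [hk]
      have hIs : ∀ i : Fin N, IntegrableOn
          (fun x => pd i.succ (g i.succ) (Fin.cons τ x)) (Set.Icc (0 : Fin N → ℝ) 1) volume := by
        intro i
        exact (((VED.continuous_pd (hgsm i.succ) i.succ).comp
          (VED.contDiff_cons_right τ).continuous).continuousOn).integrableOn_compact isCompact_Icc
      have hIsum : IntegrableOn (fun x => ∑ i : Fin N, pd i.succ (g i.succ) (Fin.cons τ x))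
          (Set.Icc (0 : Fin N → ℝ) 1) volume :=
        MeasureTheory.integrable_finset_sum _ (fun i _ => hIs i)
      calc ∫ x in Set.Icc (0 : Fin N → ℝ) 1, pd 0 (g 0) (Fin.cons τ x)
          = ∫ x in Set.Icc (0 : Fin N → ℝ) 1,
              (qJ (Fin.cons τ x) - ∑ i : Fin N, pd i.succ (g i.succ) (Fin.cons τ x)) := by
            refine integral_congr_ae (Filter.Eventually.of_forall (fun x => hpt x))
      _ = (∫ x in Set.Icc (0 : Fin N → ℝ) 1, qJ (Fin.cons τ x))
            - ∫ x in Set.Icc (0 : Fin N → ℝ) 1,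
                ∑ i : Fin N, pd i.succ (g i.succ) (Fin.cons τ x) :=
            integral_sub (hqJinteg τ) hIsum
      _ = ∫ x in Set.Icc (0 : Fin N → ℝ) 1, qJ (Fin.cons τ x) := by
            rw [MeasureTheory.integral_finset_sum _ (fun i _ => hIs i)]
            rw [Finset.sum_congr rfl (fun i _ =>
              VED.integral_pd_succ_zero hN (g i.succ) (hgsm i.succ) (hgper i.succ) τ i)]
            simp
    rw [← h2]
    exact h1
  -- volume of the unit cube
  have hvol1 : (volume (Set.Icc (0 : Fin N → ℝ) 1)).toReal = 1 := by
    rw [Real.volume_Icc_pi_toReal (by intro i; norm_num : (0 : Fin N → ℝ) ≤ 1)]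
    simp
  -- decay of the energy
  have hEdec : ∀ τ : ℝ, Td ≤ τ → 0 ≤ τ →
      En τ ≤ Q * (n * c^2) * Real.exp (-(2*Z) * τ) := by
    intro τ hTd hτ
    have hpt : ∀ x ∈ Set.Icc (0 : Fin N → ℝ) 1,
        g 0 (Fin.cons τ x) ≤ Q * (n * c^2) * Real.exp (-(2*Z) * τ) := by
      intro x _
      have hξ0 : (0:ℝ) ≤ (Fin.cons τ x : Pt N) 0 := by simpa using hτ
      have h1 : g 0 (Fin.cons τ x) ≤ Q * XU (Fin.cons τ x) := hup _ hξ0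
      have hUn : ‖U (Fin.cons τ x)‖ ≤ c * Real.exp (-Z * τ) := by
        have := hUd (Fin.cons τ x) (by simpa using hTd)
        simpa using this
      have h2 : XU (Fin.cons τ x) ≤ n * (c^2 * Real.exp (-(2*Z) * τ)) := by
        have hsq : ∀ i : Fin n, U (Fin.cons τ x) i ^ 2
            ≤ c^2 * Real.exp (-(2*Z) * τ) := by
          intro i
          have ha : |U (Fin.cons τ x) i| ≤ c * Real.exp (-Z * τ) := by
            refine le_trans ?_ hUn
            simpa [Real.norm_eq_abs] using norm_le_pi_norm (U (Fin.cons τ x)) i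
          have hb : U (Fin.cons τ x) i ^ 2 ≤ (c * Real.exp (-Z * τ))^2 := by
            rw [← sq_abs]
            exact pow_le_pow_left₀ (abs_nonneg _) ha 2
          refine le_trans hb ?_
          have hexp2 : Real.exp (-Z * τ) ^ 2 = Real.exp (-(2*Z) * τ) := by
            rw [sq, ← Real.exp_add]
            congr 1
            ring
          rw [mul_pow, hexp2]
        calc XU (Fin.cons τ x) = ∑ i, U (Fin.cons τ x) i ^ 2 := by simp [hXU]
        _ ≤ ∑ _i : Fin n, c^2 * Real.exp (-(2*Z) * τ) :=
            Finset.sum_le_sum (fun i _ => hsq i)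
        _ = n * (c^2 * Real.exp (-(2*Z) * τ)) := by
            rw [Finset.sum_const, Finset.card_univ, Fintype.card_fin, nsmul_eq_mul]
      calc g 0 (Fin.cons τ x) ≤ Q * XU (Fin.cons τ x) := h1
      _ ≤ Q * (n * (c^2 * Real.exp (-(2*Z) * τ))) :=
          mul_le_mul_of_nonneg_left h2 hQ.le
      _ = Q * (n * c^2) * Real.exp (-(2*Z) * τ) := by ring
    calc En τ ≤ ∫ _x in Set.Icc (0 : Fin N → ℝ) 1,
          Q * (n * c^2) * Real.exp (-(2*Z) * τ) := by
          simp only [hEn]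
          exact setIntegral_mono_on (hginteg τ)
            (integrableOn_const isCompact_Icc.measure_lt_top.ne)
            measurableSet_Icc hpt
    _ = Q * (n * c^2) * Real.exp (-(2*Z) * τ) := by
        rw [setIntegral_const, measureReal_def, hvol1, one_smul]
  -- z' is nonnegative
  have hz'0 : 0 ≤ z' := by
    have h := hJb (Fin.cons (max TJ 0) (fun _ => (0:ℝ))) (by simpa using le_max_left TJ 0)
    exact le_trans (mul_nonneg hQ.le (VED.matOpNorm_nonneg _)) h
  set T0 : ℝ := max (max TJ Td) 0 with hT0
  have hT0nn : (0:ℝ) ≤ T0 := le_max_right _ _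
  have hTJT0 : TJ ≤ T0 := le_trans (le_max_left _ _) (le_max_left _ _)
  have hTdT0 : Td ≤ T0 := le_trans (le_max_right TJ Td) (le_max_left _ _)
  -- derivative bound for large times
  have hD1 : ∀ t : ℝ, T0 ≤ t →
      |∫ x in Set.Icc (0 : Fin N → ℝ) 1, qJ (Fin.cons t x)| ≤ z' * En t := by
    intro t ht
    have htnn : (0:ℝ) ≤ t := le_trans hT0nn ht
    have hpt : ∀ x : Fin N → ℝ, |qJ (Fin.cons t x)| ≤ z' * g 0 (Fin.cons t x) := by
      intro x
      have hξ0 : (0:ℝ) ≤ (Fin.cons t x : Pt N) 0 := by simpa using htnn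
      have hop : matOpNorm (Jm (Fin.cons t x)) ≤ z' / Q := by
        rw [le_div_iff₀ hQ]
        have := hJb (Fin.cons t x) (by simpa using le_trans hTJT0 ht)
        linarith [this]
      have := hqb (z' / Q) (Fin.cons t x) hξ0 hop
      rwa [mul_div_cancel₀ z' hQ.ne'] at this
    calc |∫ x in Set.Icc (0 : Fin N → ℝ) 1, qJ (Fin.cons t x)|
        ≤ ∫ x in Set.Icc (0 : Fin N → ℝ) 1, |qJ (Fin.cons t x)| := by
          simpa [Real.norm_eq_abs] using
            norm_integral_le_integral_norm
              (μ := volume.restrict (Set.Icc (0 : Fin N → ℝ) 1))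
              (fun x => qJ (Fin.cons t x))
    _ ≤ ∫ x in Set.Icc (0 : Fin N → ℝ) 1, z' * g 0 (Fin.cons t x) :=
        setIntegral_mono_on ((hqJinteg t).abs) ((hginteg t).const_mul z')
          measurableSet_Icc (fun x _ => hpt x)
    _ = z' * En t := by
        simp only [hEn]
        exact integral_const_mul z' _
  -- uniform bound on the strip [0, T0]
  have hCJ : ∃ CJ : ℝ, 0 ≤ CJ ∧ ∀ ξ : Pt N, 0 ≤ ξ 0 → ξ 0 ≤ T0 →
      matOpNorm (Jm ξ) ≤ CJ := by
    have hKc : IsCompact ((Set.Icc (0:ℝ) T0) ×ˢ (Set.Icc (0 : Fin N → ℝ) 1)) :=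
      isCompact_Icc.prod isCompact_Icc
    have hφ : Continuous fun p : ℝ × (Fin N → ℝ) => matOpNorm (Jm (Fin.cons p.1 p.2)) :=
      VED.continuous_matOpNorm.comp (hJmcont.comp VED.continuous_cons)
    obtain ⟨C, hC⟩ := hKc.exists_bound_of_continuousOn hφ.continuousOn
    refine ⟨max C 0, le_max_right _ _, ?_⟩
    intro ξ h0 hT
    obtain ⟨y, hy, hshift⟩ := VED.shift_to_cube (Fin.tail ξ)
    have hfp : ∀ (i : Fin N) (z : Fin N → ℝ),
        matOpNorm (Jm (Fin.cons (ξ 0) (z + Pi.single i 1)))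
          = matOpNorm (Jm (Fin.cons (ξ 0) z)) := by
      intro i z
      rw [VED.cons_add_single, hJmper i _]
    have h1 := hshift (fun x => matOpNorm (Jm (Fin.cons (ξ 0) x))) hfp
    have h2 : (Fin.cons (ξ 0) (Fin.tail ξ) : Pt N) = ξ := Fin.cons_self_tail ξ
    have h3 := hC ((ξ 0), y) ⟨⟨h0, hT⟩, hy⟩
    calc matOpNorm (Jm ξ) = matOpNorm (Jm (Fin.cons (ξ 0) y)) := by
          conv_lhs => rw [← h2]
          exact h1
    _ ≤ |matOpNorm (Jm (Fin.cons (ξ 0) y))| := le_abs_self _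
    _ ≤ C := by simpa [Real.norm_eq_abs] using h3
    _ ≤ max C 0 := le_max_left _ _
  obtain ⟨CJ, hCJ0, hCJb⟩ := hCJ
  have hD2 : ∀ t : ℝ, 0 ≤ t → t ≤ T0 →
      |∫ x in Set.Icc (0 : Fin N → ℝ) 1, qJ (Fin.cons t x)| ≤ (Q * CJ) * En t := by
    intro t ht hT
    have hpt : ∀ x : Fin N → ℝ, |qJ (Fin.cons t x)| ≤ (Q * CJ) * g 0 (Fin.cons t x) := by
      intro x
      have hξ0 : (0:ℝ) ≤ (Fin.cons t x : Pt N) 0 := by simpa using ht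
      have hξT : (Fin.cons t x : Pt N) 0 ≤ T0 := by simpa using hT
      exact hqb CJ (Fin.cons t x) hξ0 (hCJb _ hξ0 hξT)
    calc |∫ x in Set.Icc (0 : Fin N → ℝ) 1, qJ (Fin.cons t x)|
        ≤ ∫ x in Set.Icc (0 : Fin N → ℝ) 1, |qJ (Fin.cons t x)| := by
          simpa [Real.norm_eq_abs] using
            norm_integral_le_integral_norm
              (μ := volume.restrict (Set.Icc (0 : Fin N → ℝ) 1))
              (fun x => qJ (Fin.cons t x))
    _ ≤ ∫ x in Set.Icc (0 : Fin N → ℝ) 1, (Q * CJ) * g 0 (Fin.cons t x) :=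
        setIntegral_mono_on ((hqJinteg t).abs) ((hginteg t).const_mul (Q * CJ))
          measurableSet_Icc (fun x _ => hpt x)
    _ = (Q * CJ) * En t := by
        simp only [hEn]
        exact integral_const_mul (Q * CJ) _
  -- the energy vanishes for τ ≥ T0
  have hzero1 : ∀ a : ℝ, T0 ≤ a → En a = 0 := by
    intro a ha
    have hann : (0:ℝ) ≤ a := le_trans hT0nn ha
    have hbnd : ∀ b : ℝ, a ≤ b →
        En a ≤ (Q * (n * c^2) * Real.exp (-z' * a)) * Real.exp ((z' - 2*Z) * b) := by
      intro b hab
      have h1 : En a ≤ En b * Real.exp (z' * (b - a)) := by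
        refine VED.gronwall_rev hab
          (fun t htm => hEd t (le_trans hann htm.1))
          (fun t htm => hEnn t (le_trans hann htm.1))
          (fun t htm => hD1 t (le_trans ha htm.1))
      have h2 : En b ≤ Q * (n * c^2) * Real.exp (-(2*Z) * b) :=
        hEdec b (le_trans hTdT0 (le_trans ha hab)) (le_trans hann hab)
      calc En a ≤ En b * Real.exp (z' * (b - a)) := h1
      _ ≤ (Q * (n * c^2) * Real.exp (-(2*Z) * b)) * Real.exp (z' * (b - a)) :=
          mul_le_mul_of_nonneg_right h2 (Real.exp_pos _).le
      _ = (Q * (n * c^2) * Real.exp (-z' * a)) * Real.exp ((z' - 2*Z) * b) := by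
          have e1 : Real.exp (-(2*Z)*b) * Real.exp (z'*(b-a))
              = Real.exp (-z'*a) * Real.exp ((z'-2*Z)*b) := by
            rw [← Real.exp_add, ← Real.exp_add]
            congr 1
            ring
          calc (Q * (n * c^2) * Real.exp (-(2*Z) * b)) * Real.exp (z' * (b - a))
              = Q * (n * c^2) * (Real.exp (-(2*Z)*b) * Real.exp (z'*(b-a))) := by ring
          _ = Q * (n * c^2) * (Real.exp (-z'*a) * Real.exp ((z'-2*Z)*b)) := by rw [e1]
          _ = (Q * (n * c^2) * Real.exp (-z' * a)) * Real.exp ((z' - 2*Z) * b) := by ring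
    have hlim : Filter.Tendsto
        (fun b : ℝ => (Q * (n * c^2) * Real.exp (-z' * a)) * Real.exp ((z' - 2*Z) * b))
        Filter.atTop (nhds 0) := by
      have h2 : Filter.Tendsto (fun b : ℝ => Real.exp ((z' - 2*Z) * b))
          Filter.atTop (nhds 0) := by
        rw [Real.tendsto_exp_comp_nhds_zero]
        exact Filter.Tendsto.const_mul_atTop_of_neg (by linarith) Filter.tendsto_id
      simpa using h2.const_mul (Q * (n * c^2) * Real.exp (-z' * a))
    have hle0 : En a ≤ 0 :=
      ge_of_tendsto hlim (Filter.eventually_atTop.2 ⟨a, fun b hb => hbnd b hb⟩)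
    exact le_antisymm hle0 (hEnn a hann)
  -- the energy vanishes everywhere on [0, ∞)
  have hzero2 : ∀ a : ℝ, 0 ≤ a → En a = 0 := by
    intro a ha
    rcases le_total T0 a with hca | hca
    · exact hzero1 a hca
    · have h1 : En a ≤ En T0 * Real.exp ((Q * CJ) * (T0 - a)) := by
        refine VED.gronwall_rev hca
          (fun t htm => hEd t (le_trans ha htm.1))
          (fun t htm => hEnn t (le_trans ha htm.1))
          (fun t htm => hD2 t (le_trans ha htm.1) htm.2)
      rw [hzero1 T0 le_rfl, zero_mul] at h1
      exact le_antisymm h1 (hEnn a ha)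
  -- conclusion: U vanishes pointwise
  intro ξ hξ
  have hEz := hzero2 (ξ 0) hξ
  have hXUcont : Continuous fun x : Fin N → ℝ => XU (Fin.cons (ξ 0) x) := by
    simp only [hXU]
    refine continuous_finset_sum _ (fun i _ => ?_)
    exact (((continuous_apply i).comp
      (hU.continuous.comp (VED.contDiff_cons_right (ξ 0)).continuous))).pow 2
  have hXi : IntegrableOn (fun x => XU (Fin.cons (ξ 0) x))
      (Set.Icc (0 : Fin N → ℝ) 1) volume :=
    hXUcont.continuousOn.integrableOn_compact isCompact_Icc
  have hXint : ∫ x in Set.Icc (0 : Fin N → ℝ) 1, XU (Fin.cons (ξ 0) x) = 0 := by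
    refine le_antisymm ?_ (setIntegral_nonneg measurableSet_Icc (fun x _ => hXUnn _))
    calc ∫ x in Set.Icc (0 : Fin N → ℝ) 1, XU (Fin.cons (ξ 0) x)
        ≤ ∫ x in Set.Icc (0 : Fin N → ℝ) 1, Q * g 0 (Fin.cons (ξ 0) x) :=
          setIntegral_mono_on hXi ((hginteg (ξ 0)).const_mul Q) measurableSet_Icc
            (fun x _ => hXUleQg (Fin.cons (ξ 0) x) (by simpa using hξ))
    _ = Q * En (ξ 0) := by
        simp only [hEn]
        exact integral_const_mul Q _
    _ = 0 := by rw [hEz, mul_zero]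
  have hvan := VED.vanish_of_integral_zero hXUcont (fun x => hXUnn _) hXint
  obtain ⟨y, hy, hshift⟩ := VED.shift_to_cube (Fin.tail ξ)
  have hfp : ∀ (i : Fin N) (z : Fin N → ℝ),
      XU (Fin.cons (ξ 0) (z + Pi.single i 1)) = XU (Fin.cons (ξ 0) z) := by
    intro i z
    rw [VED.cons_add_single]
    exact hXUper i _
  have h1 := hshift (fun x => XU (Fin.cons (ξ 0) x)) hfp
  have h2 : XU ξ = 0 := by
    have hcst : (Fin.cons (ξ 0) (Fin.tail ξ) : Pt N) = ξ := Fin.cons_self_tail ξ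
    calc XU ξ = XU (Fin.cons (ξ 0) (Fin.tail ξ)) := by rw [hcst]
    _ = XU (Fin.cons (ξ 0) y) := h1
    _ = 0 := hvan y hy
  funext i
  have h3 : U ξ i ^ 2 = 0 := by
    have h4 := (Finset.sum_eq_zero_iff_of_nonneg
      (fun j (_ : j ∈ Finset.univ) => sq_nonneg (U ξ j))).1 (by simpa [hXU] using h2)
    exact h4 i (Finset.mem_univ i)
  have h5 := pow_eq_zero_iff (n := 2) (by norm_num) |>.1 h3
  simpa using h5


end
end

section
/- Contracting homotopy from a transversal subcomplexing subspace. Let (C^i, d^i)_{i∈ℤ} be a cochain complex of modules over a ring (d^{i+1} ∘ d^i = 0), and let K^i ⊆ C^i be submodules such that for every i the composition w^i : K^i ↪ C^i →^{d^i} C^{i+1} ↠ C^{i+1}/K^{i+1} is bijective. Then the complex is exact; more precisely, for every i and every x ∈ C^i with d^i x = 0 there exists y ∈ K^{i-1} with x = d^{i-1} y. Moreover, the maps h^i : C^i → C^{i-1} defined as the composition C^i ↠ C^i/K^i →^{(w^{i-1})^{-1}} K^{i-1} ↪ C^{i-1} form a contracting homotopy: d^{i-1} ∘ h^i + h^{i+1}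 ∘ d^i = id_{C^i}, h^{i-1} ∘ h^i = 0, and the image of h^i is contained in K^{i-1}. -/
/-!
STATEMENT 5: Contracting homotopy from a transversal subcomplexing subspace.
-/

theorem contracting_homotopy_of_transversal
    (R : Type*) [Ring R]
    (C : ℤ → Type*) [∀ i, AddCommGroup (C i)] [∀ i, Module R (C i)]
    (d : ∀ i : ℤ, C i →ₗ[R] C (i + 1))
    (hdd : ∀ (i : ℤ) (x : C i), d (i + 1) (d i x) = 0)
    (K : ∀ i : ℤ, Submodule R (C i))
    -- w^i : K^i ↪ C^i → C^{i+1} ↠ C^{i+1}/K^{i+1} is bijective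
    (hbij : ∀ i : ℤ,
      Function.Bijective ((K (i + 1)).mkQ ∘ₗ d i ∘ₗ (K i).subtype)) :
    -- exactness: every cocycle is the differential of an element of K
    (∀ (i : ℤ) (x : C (i + 1)), d (i + 1) x = 0 → ∃ y ∈ K i, d i y = x) ∧
    -- the maps h^i = (w^{i-1})⁻¹ ∘ (projection to C/K) form a contracting homotopy
    (∀ h : ∀ i : ℤ, C (i + 1) →ₗ[R] C i,
      (∀ (i : ℤ) (x : C (i + 1)),
        h i x = ((LinearEquiv.ofBijective
            ((K (i + 1)).mkQ ∘ₗ d i ∘ₗ (K i).subtype) (hbij i)).symm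
              ((K (i + 1)).mkQ x) : C i)) →
      (∀ (i : ℤ) (x : C (i + 1)), d i (h i x) + h (i + 1) (d (i + 1) x) = x) ∧
      (∀ (i : ℤ) (x : C (i + 1 + 1)), h i (h (i + 1) x) = 0) ∧
      (∀ (i : ℤ) (x : C (i + 1)), h i x ∈ K i)) := by
  set e : ∀ i : ℤ, (K i) ≃ₗ[R] (C (i + 1) ⧸ K (i + 1)) :=
    fun i => LinearEquiv.ofBijective _ (hbij i) with he
  have key : ∀ (i : ℤ) (k : K i), e i k = (K (i + 1)).mkQ (d i (k : C i)) :=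
    fun i k => rfl
  -- the main homotopy property for any h satisfying the formula
  have part2 : ∀ h : ∀ i : ℤ, C (i + 1) →ₗ[R] C i,
      (∀ (i : ℤ) (x : C (i + 1)),
        h i x = ((e i).symm ((K (i + 1)).mkQ x) : C i)) →
      (∀ (i : ℤ) (x : C (i + 1)), d i (h i x) + h (i + 1) (d (i + 1) x) = x) ∧
      (∀ (i : ℤ) (x : C (i + 1 + 1)), h i (h (i + 1) x) = 0) ∧
      (∀ (i : ℤ) (x : C (i + 1)), h i x ∈ K i) := by
    intro h hh
    have hmem : ∀ (i : ℤ) (x : C (i + 1)), h i x ∈ K i := by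
      intro i x
      rw [hh]
      exact ((e i).symm ((K (i + 1)).mkQ x)).2
    refine ⟨?_, ?_, hmem⟩
    · intro i x
      set k : K i := (e i).symm ((K (i + 1)).mkQ x) with hk
      have hkd : (K (i + 1)).mkQ (d i (k : C i)) = (K (i + 1)).mkQ x := by
        rw [← key]
        exact (e i).apply_symm_apply _
      have hz : x - d i (k : C i) ∈ K (i + 1) := by
        rw [← Submodule.Quotient.mk_eq_zero (K (i + 1))]
        have : (K (i + 1)).mkQ (x - d i (k : C i)) = 0 := by
          rw [map_sub, hkd, sub_self]
        simpa using this
      have h2 : h (i + 1) (d (i + 1) x) = x - d i (k : C i) := by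
        rw [hh]
        have : (e (i + 1)).symm ((K (i + 1 + 1)).mkQ (d (i + 1) x))
            = ⟨x - d i (k : C i), hz⟩ := by
          rw [LinearEquiv.symm_apply_eq, key]
          simp only [map_sub, hdd, sub_zero]
        rw [this]
      rw [h2, hh i x, ← hk]
      abel
    · intro i x
      rw [hh i]
      have : (K (i + 1)).mkQ (h (i + 1) x) = 0 := by
        rw [Submodule.mkQ_apply, Submodule.Quotient.mk_eq_zero]
        exact hmem _ _
      rw [this, map_zero, Submodule.coe_zero]
  refine ⟨?_, part2⟩
  intro i x hx
  set hmap : ∀ j : ℤ, C (j + 1) →ₗ[R] C j :=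
    fun j => (K j).subtype ∘ₗ ((e j).symm : (C (j + 1) ⧸ K (j + 1)) →ₗ[R] K j)
      ∘ₗ (K (j + 1)).mkQ with hhm
  have hprop : ∀ (j : ℤ) (y : C (j + 1)),
      hmap j y = ((e j).symm ((K (j + 1)).mkQ y) : C j) := fun j y => rfl
  obtain ⟨hhom, -, hmem⟩ := part2 hmap hprop
  refine ⟨hmap i x, hmem i x, ?_⟩
  have := hhom i x
  rw [hx, map_zero, add_zero] at this
  exact this
end

section
/- Full rank of the principal symbol of the linearized momentum constraint operator at an anisotropic homogeneous solution. Let p_1, p_2, p_3 > 0 be pairwise distinct real numbers, set p_0 = sqrt((p_2 p_3 + p_3 p_1 + p_1 p_2)/3) and Δ_{ij} = (p_i − p_j)/2. For k = (k_1, k_2, k_3) ∈ ℝ³ define the 3×14 real matrix σ(k) with rows: row 1 = (0, Δ_{12} k_2, Δ_{13} k_3, 0, Δ_{21} k_1, 0, 0, 0, Δ_{31} k_1, 0, −k_1/2, −k_1/2, p_1 k_1, 3 p_0 k_1); row 2 = (Δ_{12} k_2, 0, 0, Δ_{21} k_1, 0, Δ_{23} k_3, 0, 0, Δ_{32} k_2,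 −k_2/2, 0, −k_2/2, p_2 k_2, 3 p_0 k_2); row 3 = (Δ_{13} k_3, 0, 0, 0, Δ_{23} k_3, 0, Δ_{31} k_1, Δ_{32} k_2, 0, −k_3/2, −k_3/2, 0, p_3 k_3, 3 p_0 k_3). Then for every k ∈ ℝ³ with k ≠ 0, the matrix σ(k) has rank 3 (equivalently, σ(k) : ℝ^{14} → ℝ³ is surjective). -/
/-!
STATEMENT 7: Full rank of the principal symbol of the linearized momentum
constraint operator at an anisotropic homogeneous solution.

Here k ∈ ℝ³ has components k₁ = k 0, k₂ = k 1, k₃ = k 2, and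
Δ_{ij} = (p_i − p_j)/2.
-/

open Matrix

noncomputable section

theorem symbol_full_rank
    (p₁ p₂ p₃ : ℝ) (h1 : 0 < p₁) (h2 : 0 < p₂) (h3 : 0 < p₃)
    (h12 : p₁ ≠ p₂) (h23 : p₂ ≠ p₃) (h13 : p₁ ≠ p₃)
    (p₀ : ℝ) (hp₀ : p₀ = Real.sqrt ((p₂ * p₃ + p₃ * p₁ + p₁ * p₂) / 3))
    (k : Fin 3 → ℝ) (hk : k ≠ 0)
    (σ : Matrix (Fin 3) (Fin 14) ℝ)
    (hσ : σ = Matrix.of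
      ![![0, (p₁ - p₂) / 2 * k 1, (p₁ - p₃) / 2 * k 2,
          0, (p₂ - p₁) / 2 * k 0, 0,
          0, 0, (p₃ - p₁) / 2 * k 0,
          0, -(k 0) / 2, -(k 0) / 2,
          p₁ * k 0, 3 * p₀ * k 0],
        ![(p₁ - p₂) / 2 * k 1, 0, 0,
          (p₂ - p₁) / 2 * k 0, 0, (p₂ - p₃) / 2 * k 2,
          0, 0, (p₃ - p₂) / 2 * k 1,
          -(k 1) / 2, 0, -(k 1) / 2,
          p₂ * k 1, 3 * p₀ * k 1],
        ![(p₁ - p₃) / 2 * k 2, 0, 0,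
          0, (p₂ - p₃) / 2 * k 2, 0,
          (p₃ - p₁) / 2 * k 0, (p₃ - p₂) / 2 * k 1, 0,
          -(k 2) / 2, -(k 2) / 2, 0,
          p₃ * k 2, 3 * p₀ * k 2]]) :
    σ.rank = 3 ∧ Function.Surjective σ.mulVecLin := by
  subst hσ
  set σ : Matrix (Fin 3) (Fin 14) ℝ := Matrix.of
      ![![0, (p₁ - p₂) / 2 * k 1, (p₁ - p₃) / 2 * k 2,
          0, (p₂ - p₁) / 2 * k 0, 0,
          0, 0, (p₃ - p₁) / 2 * k 0,
          0, -(k 0) / 2, -(k 0) / 2,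
          p₁ * k 0, 3 * p₀ * k 0],
        ![(p₁ - p₂) / 2 * k 1, 0, 0,
          (p₂ - p₁) / 2 * k 0, 0, (p₂ - p₃) / 2 * k 2,
          0, 0, (p₃ - p₂) / 2 * k 1,
          -(k 1) / 2, 0, -(k 1) / 2,
          p₂ * k 1, 3 * p₀ * k 1],
        ![(p₁ - p₃) / 2 * k 2, 0, 0,
          0, (p₂ - p₃) / 2 * k 2, 0,
          (p₃ - p₁) / 2 * k 0, (p₃ - p₂) / 2 * k 1, 0,
          -(k 2) / 2, -(k 2) / 2, 0,
          p₃ * k 2, 3 * p₀ * k 2]] with hσ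
  have d12 : p₁ - p₂ ≠ 0 := sub_ne_zero.mpr h12
  have d21 : p₂ - p₁ ≠ 0 := sub_ne_zero.mpr h12.symm
  have d13 : p₁ - p₃ ≠ 0 := sub_ne_zero.mpr h13
  have d31 : p₃ - p₁ ≠ 0 := sub_ne_zero.mpr h13.symm
  have d23 : p₂ - p₃ ≠ 0 := sub_ne_zero.mpr h23
  have d32 : p₃ - p₂ ≠ 0 := sub_ne_zero.mpr h23.symm
  have two : (2:ℝ) ≠ 0 := two_ne_zero
  -- helpers: a column of σ that is a nonzero multiple of a standard basis
  -- vector yields a preimage of that basis vector under σ *ᵥ ·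
  have col0 : ∀ (j : Fin 14) (c : ℝ), c ≠ 0 → σ 0 j = c → σ 1 j = 0 → σ 2 j = 0 →
      ∃ x : Fin 14 → ℝ, σ *ᵥ x = Pi.single (0 : Fin 3) 1 := by
    intro j c hc h0 h1 h2
    refine ⟨Pi.single j c⁻¹, ?_⟩
    rw [Matrix.mulVec_single]
    funext i
    fin_cases i <;> simp [h0, h1, h2, hc, Pi.single_apply]
  have col1 : ∀ (j : Fin 14) (c : ℝ), c ≠ 0 → σ 0 j = 0 → σ 1 j = c → σ 2 j = 0 →
      ∃ x : Fin 14 → ℝ, σ *ᵥ x = Pi.single (1 : Fin 3) 1 := by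
    intro j c hc h0 h1 h2
    refine ⟨Pi.single j c⁻¹, ?_⟩
    rw [Matrix.mulVec_single]
    funext i
    fin_cases i <;> simp [h0, h1, h2, hc, Pi.single_apply]
  have col2 : ∀ (j : Fin 14) (c : ℝ), c ≠ 0 → σ 0 j = 0 → σ 1 j = 0 → σ 2 j = c →
      ∃ x : Fin 14 → ℝ, σ *ᵥ x = Pi.single (2 : Fin 3) 1 := by
    intro j c hc h0 h1 h2
    refine ⟨Pi.single j c⁻¹, ?_⟩
    rw [Matrix.mulVec_single]
    funext i
    fin_cases i <;> simp [h0, h1, h2, hc, Pi.single_apply]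
  have key : ∀ i₀ : Fin 3, ∃ x : Fin 14 → ℝ, σ *ᵥ x = Pi.single i₀ 1 := by
    intro i₀
    by_cases hk0 : k 0 = 0
    · by_cases hk1 : k 1 = 0
      · -- then k 2 ≠ 0
        have hk2 : k 2 ≠ 0 := by
          intro hk2
          exact hk (funext fun i => by fin_cases i <;> assumption)
        fin_cases i₀
        · exact col0 2 ((p₁ - p₃) / 2 * k 2)
            (mul_ne_zero (div_ne_zero d13 two) hk2) rfl rfl rfl
        · exact col1 5 ((p₂ - p₃) / 2 * k 2)
            (mul_ne_zero (div_ne_zero d23 two) hk2) rfl rfl rfl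
        · exact col2 9 (-(k 2) / 2)
            (div_ne_zero (neg_ne_zero.mpr hk2) two) rfl
            (by show -(k 1) / 2 = 0; rw [hk1]; ring) rfl
      · fin_cases i₀
        · exact col0 1 ((p₁ - p₂) / 2 * k 1)
            (mul_ne_zero (div_ne_zero d12 two) hk1) rfl rfl rfl
        · by_cases hk2 : k 2 = 0
          · exact col1 9 (-(k 1) / 2)
              (div_ne_zero (neg_ne_zero.mpr hk1) two) rfl rfl
              (by show -(k 2) / 2 = 0; rw [hk2]; ring)
          · exact col1 5 ((p₂ - p₃) / 2 * k 2)
              (mul_ne_zero (div_ne_zero d23 two) hk2) rfl rfl rfl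
        · exact col2 7 ((p₃ - p₂) / 2 * k 1)
            (mul_ne_zero (div_ne_zero d32 two) hk1) rfl rfl rfl
    · fin_cases i₀
      · by_cases hk1 : k 1 = 0
        · by_cases hk2 : k 2 = 0
          · exact col0 10 (-(k 0) / 2)
              (div_ne_zero (neg_ne_zero.mpr hk0) two) rfl rfl
              (by show -(k 2) / 2 = 0; rw [hk2]; ring)
          · exact col0 2 ((p₁ - p₃) / 2 * k 2)
              (mul_ne_zero (div_ne_zero d13 two) hk2) rfl rfl rfl
        · exact col0 1 ((p₁ - p₂) / 2 * k 1)
            (mul_ne_zero (div_ne_zero d12 two) hk1) rfl rfl rfl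
      · exact col1 3 ((p₂ - p₁) / 2 * k 0)
          (mul_ne_zero (div_ne_zero d21 two) hk0) rfl rfl rfl
      · exact col2 6 ((p₃ - p₁) / 2 * k 0)
          (mul_ne_zero (div_ne_zero d31 two) hk0) rfl rfl rfl
  choose x hx using key
  have hsurj : Function.Surjective σ.mulVecLin := by
    intro y
    refine ⟨∑ i, y i • x i, ?_⟩
    rw [map_sum]
    have h1 : ∀ i : Fin 3, σ.mulVecLin (y i • x i) = Pi.single i (y i) := by
      intro i
      rw [LinearMap.map_smul, Matrix.mulVecLin_apply, hx i]
      funext j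
      by_cases hj : j = i <;> simp [hj, Pi.single_apply]
    simp_rw [h1]
    exact Finset.univ_sum_single y
  refine ⟨?_, hsurj⟩
  rw [Matrix.rank, LinearMap.range_eq_top.mpr hsurj]
  simp

end
end

section
/- Differentiable diagonalization of symmetric matrices: bijectivity of the differential at anisotropic points. Let n ≥ 1, let R be a real orthogonal n×n matrix (RᵀR = Id), let λ ∈ ℝⁿ and D = diag(λ). Consider the linear map T : V × ℝⁿ → Sym_n, where V = {X ∈ Mat_n(ℝ) : RᵀX + XᵀR = 0} is the tangent space to O(n) at R, defined by T(X, μ) = X D Rᵀ + R D Xᵀ + R diag(μ) Rᵀ (the differential at (R, λ) of the map (R, λ) ↦ R diag(λ) Rᵀ). Then T is bijective if and only if the entries λ_1, …, λ_n are pairwise distinct. Moreover the map O(n) × ℝⁿ → Sym_n, (R, λ) ↦ R diag(λ) Rᵀ, is surjective. -/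
/-!
Writing `X = R * Y`, the tangency condition says that `Y` is skew-symmetric and
`T (R * Y) μ = R * (Y * D - D * Y + diagonal μ) * Rᵀ`, so up to conjugation by `R` the question
is about `(Y, μ) ↦ [Y, D] + diagonal μ` on skew `Y`. Its `(a, b)` entry is
`Y a b * (λ b - λ a)` off the diagonal and `μ a` on it, and a skew `Y` is determined by its
entries above the diagonal: so this is a bijection onto symmetric matrices as soon as the `λ a`
are distinct. If `λ i = λ j` with `i ≠ j`, the skew matrix `E i j - E j i` commutes with `D`
and lies in the kernel.
The surjectivity of `(R, λ) ↦ R * diagonal λ * Rᵀ` is the spectral theorem.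
-/

open Matrix

namespace Matrix

variable {m K : Type*} [Fintype m]

theorem transpose_mul_add_transpose_mul_eq_zero_iff [CommRing K] (R X : Matrix m m K) :
    Rᵀ * X + Xᵀ * R = 0 ↔ (Rᵀ * X)ᵀ = -(Rᵀ * X) := by
  rw [transpose_mul, transpose_transpose, eq_neg_iff_add_eq_zero, add_comm]

variable [DecidableEq m]

section CommRing

variable [CommRing K]

/-- The differential of `(P, d) ↦ P * diagonal d * Pᵀ` at `(1, d)`, in a skew-symmetric
direction `Y` and a diagonal direction `μ`. -/
def diagDifferential (d : m → K) (Y : Matrix m m K) (μ : m → K) : Matrix m m K :=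
  Y * diagonal d - diagonal d * Y + diagonal μ

variable {d μ : m → K} {Y : Matrix m m K}

theorem diagDifferential_apply_of_ne {a b : m} (hab : a ≠ b) :
    diagDifferential d Y μ a b = Y a b * (d b - d a) := by
  rw [diagDifferential, add_apply, sub_apply, mul_diagonal, diagonal_mul, diagonal_apply_ne _ hab,
    add_zero, mul_sub, mul_comm (d a)]

theorem diagDifferential_apply_self (a : m) : diagDifferential d Y μ a a = μ a := by
  simp [diagDifferential, mul_diagonal, diagonal_mul, mul_comm]

theorem exists_transpose_eq_neg_diagDifferential_eq_zero [Nontrivial K] {i j : m} (hij : i ≠ j)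
    (hd : d i = d j) : ∃ Y : Matrix m m K, Yᵀ = -Y ∧ Y ≠ 0 ∧ diagDifferential d Y 0 = 0 := by
  refine ⟨single i j 1 - single j i 1, ?_, fun h => ?_, ?_⟩
  · simp [transpose_single]
  · simpa [hij] using congr_fun (congr_fun h i) j
  · ext a b
    rcases eq_or_ne a b with rfl | hab
    · simp [diagDifferential_apply_self]
    · rw [diagDifferential_apply_of_ne hab]
      simp only [sub_apply, single_apply]
      split_ifs <;> simp_all

theorem mul_diagonal_mul_transpose_add_eq_conj_diagDifferential (R : Matrix m m K) (hY : Yᵀ = -Y) :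
    R * Y * diagonal d * Rᵀ + R * diagonal d * (R * Y)ᵀ + R * diagonal μ * Rᵀ
      = R * diagDifferential d Y μ * Rᵀ := by
  simp only [diagDifferential, transpose_mul, hY, Matrix.mul_add, Matrix.add_mul, Matrix.mul_neg,
    Matrix.neg_mul, Matrix.mul_assoc, sub_eq_add_neg]

theorem conj_injective_of_transpose_mul_eq_one {R : Matrix m m K} (hR : Rᵀ * R = 1) :
    Function.Injective fun A : Matrix m m K => R * A * Rᵀ := by
  have hcancel (A : Matrix m m K) : Rᵀ * (R * A * Rᵀ) * R = A := by
    rw [show Rᵀ * (R * A * Rᵀ) * R = Rᵀ * R * A * (Rᵀ * R) by simp only [Matrix.mul_assoc], hR,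
      Matrix.one_mul, Matrix.mul_one]
  intro A B h
  rw [← hcancel A, ← hcancel B]
  exact congr_arg (fun M => Rᵀ * M * R) h

end CommRing

section Field

variable [Field K] {d : m → K}

theorem eq_and_eq_of_diagDifferential_eq [CharZero K] (hd : Function.Injective d)
    {Y₁ Y₂ : Matrix m m K} {μ₁ μ₂ : m → K} (hY₁ : Y₁ᵀ = -Y₁) (hY₂ : Y₂ᵀ = -Y₂)
    (h : diagDifferential d Y₁ μ₁ = diagDifferential d Y₂ μ₂) : Y₁ = Y₂ ∧ μ₁ = μ₂ := by
  have hdiag : ∀ {Y : Matrix m m K}, Yᵀ = -Y → ∀ a, Y a a = 0 := fun hY a => by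
    simpa [CharZero.eq_neg_self_iff] using congr_fun (congr_fun hY a) a
  refine ⟨ext fun a b => ?_, funext fun a => ?_⟩
  · rcases eq_or_ne a b with rfl | hab
    · rw [hdiag hY₁, hdiag hY₂]
    · have hsub : d b - d a ≠ 0 := sub_ne_zero.mpr fun h => hab (hd h).symm
      have := congr_fun (congr_fun h a) b
      rw [diagDifferential_apply_of_ne hab, diagDifferential_apply_of_ne hab] at this
      exact mul_right_cancel₀ hsub this
  · simpa [diagDifferential_apply_self] using congr_fun (congr_fun h a) a

theorem exists_transpose_eq_neg_diagDifferential_eq (hd : Function.Injective d)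
    {S : Matrix m m K} (hS : S.IsSymm) :
    ∃ (Y : Matrix m m K) (μ : m → K), Yᵀ = -Y ∧ diagDifferential d Y μ = S := by
  have hsub : ∀ {a b}, a ≠ b → d b - d a ≠ 0 := fun hab =>
    sub_ne_zero.mpr fun h => hab (hd h).symm
  refine ⟨of fun a b => if a = b then 0 else S a b / (d b - d a), fun a => S a a, ?_, ?_⟩
  · ext a b
    rcases eq_or_ne a b with rfl | hab
    · simp
    · simp only [transpose_apply, of_apply, hab, hab.symm, if_false, hS.apply, neg_apply]
      field_simp [hsub hab, hsub hab.symm]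
      ring
  · ext a b
    rcases eq_or_ne a b with rfl | hab
    · rw [diagDifferential_apply_self]
    · rw [diagDifferential_apply_of_ne hab]
      simp [hab, div_mul_cancel₀ _ (hsub hab)]

end Field

theorem IsSymm.exists_transpose_mul_eq_one_mul_diagonal_mul_transpose_eq {S : Matrix m m ℝ}
    (hS : S.IsSymm) : ∃ (P : Matrix m m ℝ) (μ : m → ℝ), Pᵀ * P = 1 ∧ P * diagonal μ * Pᵀ = S := by
  have hHerm : S.IsHermitian := by
    rwa [IsHermitian, conjTranspose_eq_transpose_of_trivial]
  refine ⟨hHerm.eigenvectorUnitary, hHerm.eigenvalues, ?_, ?_⟩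
  · simpa [star_eq_conjTranspose] using (mem_unitaryGroup_iff').mp hHerm.eigenvectorUnitary.2
  · have hst := hHerm.spectral_theorem
    rw [Unitary.conjStarAlgAut_apply, star_eq_conjTranspose,
      conjTranspose_eq_transpose_of_trivial] at hst
    simpa using hst.symm

end Matrix

theorem diagonalization_differential_bijective_iff_anisotropic_general
    (n : ℕ)
    (R : Matrix (Fin n) (Fin n) ℝ) (hR : Rᵀ * R = 1)
    (lam : Fin n → ℝ)
    (T : Matrix (Fin n) (Fin n) ℝ → (Fin n → ℝ) → Matrix (Fin n) (Fin n) ℝ)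
    (hT : ∀ (X : Matrix (Fin n) (Fin n) ℝ) (μ : Fin n → ℝ),
      T X μ = X * Matrix.diagonal lam * Rᵀ + R * Matrix.diagonal lam * Xᵀ
        + R * Matrix.diagonal μ * Rᵀ) :
    -- T : V × ℝⁿ → Sym_n is bijective iff λ₁, …, λₙ are pairwise distinct
    (((∀ (X₁ : Matrix (Fin n) (Fin n) ℝ) (μ₁ : Fin n → ℝ)
         (X₂ : Matrix (Fin n) (Fin n) ℝ) (μ₂ : Fin n → ℝ),
         Rᵀ * X₁ + X₁ᵀ * R = 0 → Rᵀ * X₂ + X₂ᵀ * R = 0 →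
         T X₁ μ₁ = T X₂ μ₂ → X₁ = X₂ ∧ μ₁ = μ₂) ∧
      (∀ S : Matrix (Fin n) (Fin n) ℝ, S.IsSymm →
         ∃ (X : Matrix (Fin n) (Fin n) ℝ) (μ : Fin n → ℝ),
           Rᵀ * X + Xᵀ * R = 0 ∧ T X μ = S))
      ↔ Function.Injective lam) ∧
    -- surjectivity of (R, λ) ↦ R diag(λ) Rᵀ onto the symmetric matrices
    (∀ S : Matrix (Fin n) (Fin n) ℝ, S.IsSymm →
      ∃ (P : Matrix (Fin n) (Fin n) ℝ) (μ : Fin n → ℝ),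
        Pᵀ * P = 1 ∧ P * Matrix.diagonal μ * Pᵀ = S) := by
  have hRRt : R * Rᵀ = 1 := mul_eq_one_comm.mp hR
  have hRtR (Y : Matrix (Fin n) (Fin n) ℝ) : Rᵀ * (R * Y) = Y := by
    rw [← Matrix.mul_assoc, hR, Matrix.one_mul]
  have hfactor (X : Matrix (Fin n) (Fin n) ℝ) : ∃ Y, X = R * Y :=
    ⟨Rᵀ * X, by rw [← Matrix.mul_assoc, hRRt, Matrix.one_mul]⟩
  have htangent (Y : Matrix (Fin n) (Fin n) ℝ) : Rᵀ * (R * Y) + (R * Y)ᵀ * R = 0 ↔ Yᵀ = -Y := by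
    rw [transpose_mul_add_transpose_mul_eq_zero_iff, hRtR]
  have hTY {Y : Matrix (Fin n) (Fin n) ℝ} (μ : Fin n → ℝ) (hY : Yᵀ = -Y) :
      T (R * Y) μ = R * diagDifferential lam Y μ * Rᵀ := by
    rw [hT, mul_diagonal_mul_transpose_add_eq_conj_diagDifferential R hY]
  refine ⟨⟨fun ⟨hinj, _⟩ i j hij => ?_, fun hlam => ⟨?_, fun S hS => ?_⟩⟩,
    fun S hS => hS.exists_transpose_mul_eq_one_mul_diagonal_mul_transpose_eq⟩
  · by_contra hne
    obtain ⟨Y, hY, hY0, hdiff⟩ := exists_transpose_eq_neg_diagDifferential_eq_zero hne hij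
    have hT0 : T (R * Y) 0 = T 0 0 := by simp [hTY 0 hY, hdiff, hT]
    have hRY := (hinj _ 0 0 0 ((htangent Y).2 hY) (by simp) hT0).1
    exact hY0 (by rw [← hRtR Y, hRY, Matrix.mul_zero])
  · intro X₁ μ₁ X₂ μ₂ hX₁ hX₂ h
    obtain ⟨Y₁, rfl⟩ := hfactor X₁
    obtain ⟨Y₂, rfl⟩ := hfactor X₂
    rw [htangent] at hX₁ hX₂
    rw [hTY μ₁ hX₁, hTY μ₂ hX₂] at h
    obtain ⟨rfl, rfl⟩ :=
      eq_and_eq_of_diagDifferential_eq hlam hX₁ hX₂ (conj_injective_of_transpose_mul_eq_one hR h)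
    exact ⟨rfl, rfl⟩
  · have hS' : (Rᵀ * S * R).IsSymm := by
      simp [IsSymm, transpose_mul, hS.eq, Matrix.mul_assoc]
    obtain ⟨Y, μ, hY, hdiff⟩ := exists_transpose_eq_neg_diagDifferential_eq hlam hS'
    refine ⟨R * Y, μ, (htangent Y).2 hY, ?_⟩
    rw [hTY μ hY, hdiff, ← Matrix.mul_assoc, ← Matrix.mul_assoc, hRRt, Matrix.one_mul,
      Matrix.mul_assoc, hRRt, Matrix.mul_one]

theorem diagonalization_differential_bijective_iff_anisotropic
    (n : ℕ) (hn : 1 ≤ n)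
    (R : Matrix (Fin n) (Fin n) ℝ) (hR : Rᵀ * R = 1)
    (lam : Fin n → ℝ)
    (T : Matrix (Fin n) (Fin n) ℝ → (Fin n → ℝ) → Matrix (Fin n) (Fin n) ℝ)
    (hT : ∀ (X : Matrix (Fin n) (Fin n) ℝ) (μ : Fin n → ℝ),
      T X μ = X * Matrix.diagonal lam * Rᵀ + R * Matrix.diagonal lam * Xᵀ
        + R * Matrix.diagonal μ * Rᵀ) :
    -- T : V × ℝⁿ → Sym_n is bijective iff λ₁, …, λₙ are pairwise distinct
    (((∀ (X₁ : Matrix (Fin n) (Fin n) ℝ) (μ₁ : Fin n → ℝ)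
         (X₂ : Matrix (Fin n) (Fin n) ℝ) (μ₂ : Fin n → ℝ),
         Rᵀ * X₁ + X₁ᵀ * R = 0 → Rᵀ * X₂ + X₂ᵀ * R = 0 →
         T X₁ μ₁ = T X₂ μ₂ → X₁ = X₂ ∧ μ₁ = μ₂) ∧
      (∀ S : Matrix (Fin n) (Fin n) ℝ, S.IsSymm →
         ∃ (X : Matrix (Fin n) (Fin n) ℝ) (μ : Fin n → ℝ),
           Rᵀ * X + Xᵀ * R = 0 ∧ T X μ = S))
      ↔ Function.Injective lam) ∧
    -- surjectivity of (R, λ) ↦ R diag(λ) Rᵀ onto the symmetric matrices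
    (∀ S : Matrix (Fin n) (Fin n) ℝ, S.IsSymm →
      ∃ (P : Matrix (Fin n) (Fin n) ℝ) (μ : Fin n → ℝ),
        Pᵀ * P = 1 ∧ P * Matrix.diagonal μ * Pᵀ = S) :=
  diagonalization_differential_bijective_iff_anisotropic_general n R hR lam T hT
end

section
/- FLRW scale-factor equation for the explicit solution in BKL time. Define T : ℝ → ℝ by T(τ) = ∫_0^τ cosh(s)^{−3/2} ds and A : ℝ → ℝ by A(τ) = cosh(τ)^{−1/2}. Then T is a smooth, strictly increasing diffeomorphism onto its open image I ⊂ ℝ, and the smooth function a = A ∘ T^{-1} : I → ℝ satisfies a(t) · a''(t) + 2 · a'(t)² = −1/2 for every t ∈ I. Equivalently, in terms of A and T: for every τ ∈ ℝ, A(τ) · (A''(τ) T'(τ) − A'(τ) T''(τ)) / T'(τ)³ + 2 (A'(τ)/T'(τ))² = −1/2. -/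
/-!
STATEMENT 9: FLRW scale-factor equation for the explicit solution in BKL time.

T(τ) = ∫₀^τ cosh(s)^{-3/2} ds is the change of variable from BKL time τ to
proper time t, A(τ) = cosh(τ)^{-1/2} the scale factor in BKL time, and
a = A ∘ T⁻¹ the scale factor in proper time, which satisfies
a a'' + 2 (a')² = −1/2.
-/

open Real

noncomputable section

open Filter Set FormalMultilinearSeries
open scoped ENNReal NNReal Topology

lemma flrw_aux_derivSeries_apply_one (q : FormalMultilinearSeries ℝ ℝ ℝ) (n : ℕ) (y : ℝ) :
    q.derivSeries n (fun _ => y) 1 = (n + 1 : ℝ) * q.coeff (n+1) * y ^ n := by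
  rcases eq_or_ne y 0 with rfl | hy
  · rcases Nat.eq_zero_or_pos n with rfl | hn
    · have h0 : (fun _ : Fin 0 => (0:ℝ)) = (fun _ : Fin 0 => (1:ℝ)) := by
        funext i; exact absurd i.2 (by simp)
      rw [h0, q.derivSeries_apply_diag 0 1]
      simp [FormalMultilinearSeries.apply_eq_pow_smul_coeff]
    · have h5 : q.derivSeries n (fun _ : Fin n => (0:ℝ)) = 0 :=
        (q.derivSeries n).map_coord_zero ⟨0, hn⟩ rfl
      rw [h5]
      simp [zero_pow hn.ne']
  · have h1 : q.derivSeries n (fun _ => y) y = (n + 1) • q (n + 1) (fun _ => y) :=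
      q.derivSeries_apply_diag n y
    have h2 : q.derivSeries n (fun _ => y) y = y * q.derivSeries n (fun _ => y) 1 := by
      have := (q.derivSeries n (fun _ => y)).map_smul y (1:ℝ)
      simpa [smul_eq_mul] using this
    have h3 : q (n + 1) (fun _ => y) = y ^ (n+1) * q.coeff (n+1) := by
      rw [FormalMultilinearSeries.apply_eq_pow_smul_coeff, smul_eq_mul]
    have h4 : y * (q.derivSeries n (fun _ => y) 1)
        = y * ((n + 1 : ℝ) * q.coeff (n+1) * y ^ n) := by
      rw [← h2, h1, h3]
      push_cast [nsmul_eq_mul]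
      ring
    exact mul_left_cancel₀ hy h4

/-- A real function whose (global) derivative is analytic at a point is analytic there. -/
lemma flrw_aux_analyticAt_of_hasDerivAt {F g : ℝ → ℝ} {x : ℝ}
    (hg : AnalyticAt ℝ g x) (hF : ∀ y, HasDerivAt F (g y) y) :
    AnalyticAt ℝ F x := by
  obtain ⟨p, r, hp⟩ := hg
  obtain ⟨r', hr'0, hr'r⟩ := ENNReal.lt_iff_exists_nnreal_btwn.1 hp.r_pos
  have hr'0' : 0 < r' := by exact_mod_cast hr'0
  obtain ⟨C, hC0, hC⟩ := p.norm_mul_pow_le_of_lt_radius (lt_of_lt_of_le hr'r hp.r_le)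
  set c : ℕ → ℝ := fun n => Nat.rec (F x) (fun m _ => p.coeff m / (m+1)) n with hc
  set q := ofScalars ℝ c with hq
  have hcoeff : ∀ n, q.coeff n = c n := by
    intro n
    simp [hq, FormalMultilinearSeries.coeff, FormalMultilinearSeries.ofScalars,
      List.prod_ofFn]
  have hqr : (r' : ℝ≥0∞) ≤ q.radius := by
    apply q.le_radius_of_bound (max |F x| (C * r'))
    intro n
    have hnorm : ‖q n‖ = |c n| := by
      rw [hq, FormalMultilinearSeries.ofScalars_norm, Real.norm_eq_abs]
    match n with
    | 0 =>
      rw [hnorm]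
      simp only [pow_zero, mul_one]
      exact le_max_of_le_left (le_of_eq rfl)
    | (m+1) =>
      refine le_trans ?_ (le_max_right _ _)
      have h1 : ‖q (m+1)‖ ≤ ‖p m‖ := by
        rw [hnorm, p.norm_apply_eq_norm_coef]
        have hcs : c (m+1) = p.coeff m / (m+1) := rfl
        rw [hcs, abs_div, abs_of_pos (by positivity : (0:ℝ) < (m:ℝ)+1),
          Real.norm_eq_abs]
        exact div_le_self (abs_nonneg _) (by linarith [Nat.cast_nonneg (α := ℝ) m])
      calc ‖q (m+1)‖ * (r':ℝ) ^ (m+1) ≤ ‖p m‖ * (r':ℝ) ^ (m+1) :=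
            mul_le_mul_of_nonneg_right h1 (by positivity)
        _ = (‖p m‖ * (r':ℝ) ^ m) * r' := by ring
        _ ≤ C * r' := mul_le_mul_of_nonneg_right (hC m) r'.coe_nonneg
  set S : ℝ → ℝ := fun y => q.sum (y - x) with hS
  have hSball : HasFPowerSeriesOnBall S q x r' := by
    refine ⟨hqr, hr'0, ?_⟩
    intro y hy
    have hy' : y ∈ EMetric.ball (0:ℝ) q.radius :=
      EMetric.ball_subset_ball hqr (by simpa using hy)
    simpa [hS] using q.hasSum hy'
  have hkey : ∀ (n : ℕ) (z : ℝ), q.derivSeries n (fun _ => z) 1 = p n (fun _ => z) := by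
    intro n z
    rw [flrw_aux_derivSeries_apply_one, hcoeff,
      FormalMultilinearSeries.apply_eq_pow_smul_coeff, smul_eq_mul]
    have hne : ((n:ℝ)+1) ≠ 0 := by positivity
    have hcn : c (n+1) = p.coeff n / ((n:ℝ)+1) := rfl
    rw [hcn]
    field_simp
  have hSderiv : ∀ y ∈ Metric.eball x (r' : ℝ≥0∞), HasDerivAt S (g y) y := by
    intro y hy
    have hz : (y - x) ∈ Metric.eball (0:ℝ) (r' : ℝ≥0∞) := by
      simpa [Metric.mem_eball, edist_dist, dist_eq_norm] using hy
    have h0 := hSball.fderiv.hasSum hz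
    have h1 := h0.mapL (ContinuousLinearMap.apply ℝ ℝ (1:ℝ))
    simp only [ContinuousLinearMap.apply_apply] at h1
    simp only [hkey] at h1
    have hz' : (y - x) ∈ EMetric.ball (0:ℝ) r :=
      EMetric.ball_subset_ball hr'r.le hz
    have h2 := hp.hasSum hz'
    have huniq : fderiv ℝ S (x + (y - x)) 1 = g (x + (y - x)) := h1.unique h2
    have hyx : x + (y - x) = y := by ring
    rw [hyx] at huniq
    have hdiff : DifferentiableAt ℝ S y :=
      ((hSball.analyticOnNhd y hy).differentiableAt)
    have hd := hdiff.hasDerivAt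
    rwa [show deriv S y = g y from by rw [← fderiv_apply_one_eq_deriv]; exact huniq] at hd
  have hball : ∀ y ∈ Metric.ball x (r' : ℝ), F y = S y + (F x - S x) := by
    intro y hy
    have hx0 : x ∈ Metric.ball x (r' : ℝ) := Metric.mem_ball_self (by exact_mod_cast hr'0')
    have hFS : ∀ z ∈ Metric.ball x (r' : ℝ),
        HasDerivWithinAt (fun w => F w - S w) 0 (Metric.ball x (r' : ℝ)) z := by
      intro z hz
      have hz' : z ∈ Metric.eball x (r' : ℝ≥0∞) := by
        rw [Metric.emetric_ball_nnreal]; exact hz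
      have := ((hF z).sub (hSderiv z hz')).hasDerivWithinAt (s := Metric.ball x (r' : ℝ))
      rwa [sub_self] at this
    have := (convex_ball x (r' : ℝ)).norm_image_sub_le_of_norm_hasDerivWithin_le (C := 0)
      hFS (fun z _ => by simp) hx0 hy
    have h0 : ‖(F y - S y) - (F x - S x)‖ ≤ 0 := by simpa using this
    have := norm_le_zero_iff.1 h0
    linarith [sub_eq_zero.1 this, this]
  have hev : (fun y => S y + (F x - S x)) =ᶠ[𝓝 x] F := by
    filter_upwards [Metric.ball_mem_nhds x (by exact_mod_cast hr'0' : (0:ℝ) < r')] with y hy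
    rw [hball y hy]
  exact ((hSball.analyticAt).add analyticAt_const).congr hev

theorem flrw_scale_factor_equation
    (T A a : ℝ → ℝ)
    (hT : ∀ τ : ℝ, T τ = ∫ s in (0:ℝ)..τ, (Real.cosh s) ^ (-(3:ℝ)/2))
    (hA : ∀ τ : ℝ, A τ = (Real.cosh τ) ^ (-(1:ℝ)/2))
    (ha : a = A ∘ Function.invFun T) :
    -- T is smooth and strictly increasing, with open image, and is a
    -- diffeomorphism onto its image
    ContDiff ℝ (⊤ : ℕ∞) T ∧ StrictMono T ∧ IsOpen (Set.range T) ∧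
    ContDiffOn ℝ (⊤ : ℕ∞) (Function.invFun T) (Set.range T) ∧
    -- the scale factor equation a a'' + 2 (a')² = −1/2 in proper time
    (∀ t ∈ Set.range T,
      a t * deriv (deriv a) t + 2 * (deriv a t) ^ 2 = -(1/2)) ∧
    -- equivalently, in terms of A and T, in BKL time
    (∀ τ : ℝ,
      A τ * ((deriv (deriv A) τ * deriv T τ - deriv A τ * deriv (deriv T) τ)
          / (deriv T τ) ^ 3)
        + 2 * (deriv A τ / deriv T τ) ^ 2 = -(1/2)) := by
  have hTeq : T = fun τ => ∫ s in (0:ℝ)..τ, (Real.cosh s) ^ (-(3:ℝ)/2) := funext hT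
  have hAeq : A = fun τ => (Real.cosh τ) ^ (-(1:ℝ)/2) := funext hA
  subst hTeq hAeq ha
  set f : ℝ → ℝ := fun s => (Real.cosh s) ^ (-(3:ℝ)/2) with hfdef
  have hf_pos : ∀ s, 0 < f s := fun s => Real.rpow_pos_of_pos (Real.cosh_pos s) _
  have hf_cont : Continuous f :=
    Real.continuous_cosh.rpow_const (fun s => Or.inl (Real.cosh_pos s).ne')
  have hT_deriv : ∀ τ : ℝ, HasDerivAt (fun τ => ∫ s in (0:ℝ)..τ, f s) (f τ) τ := by
    intro τ
    exact intervalIntegral.integral_hasDerivAt_right (hf_cont.intervalIntegrable _ _)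
      (hf_cont.stronglyMeasurableAtFilter _ _) hf_cont.continuousAt
  have hf_cd : ∀ (n : WithTop ℕ∞) τ, ContDiffAt ℝ n f τ := by
    intro n τ
    exact (Real.contDiffAt_rpow_const_of_ne (Real.cosh_pos τ).ne').comp τ
      (Real.contDiff_cosh.contDiffAt)
  have hT_an : ∀ τ, AnalyticAt ℝ (fun τ => ∫ s in (0:ℝ)..τ, f s) τ := fun τ =>
    flrw_aux_analyticAt_of_hasDerivAt ((hf_cd ⊤ τ).analyticAt) hT_deriv
  set T : ℝ → ℝ := fun τ => ∫ s in (0:ℝ)..τ, f s with hTdef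
  have hT_cd : ContDiff ℝ (⊤ : ℕ∞) T := contDiff_iff_contDiffAt.2 fun τ => (hT_an τ).contDiffAt
  have hmono : StrictMono T := strictMono_of_hasDerivAt_pos hT_deriv hf_pos
  have hstrict : ∀ τ, HasStrictDerivAt T (f τ) τ := fun τ =>
    by simpa using ((hT_cd.contDiffAt).hasStrictDerivAt' (hT_deriv τ)
      (by simp))
  have hopen : IsOpen (Set.range T) :=
    (isOpenMap_of_hasStrictDerivAt hstrict fun τ => (hf_pos τ).ne').isOpen_range
  have hinj : Function.Injective T := hmono.injective
  have leftInv : ∀ x, Function.invFun T (T x) = x := fun x =>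
    Function.leftInverse_invFun hinj x
  have hinv_deriv : ∀ τ, HasDerivAt (Function.invFun T) (f τ)⁻¹ (T τ) := by
    intro τ
    exact ((hstrict τ).to_local_left_inverse (hf_pos τ).ne'
      (Eventually.of_forall leftInv)).hasDerivAt
  have hinv_cdAt : ∀ τ, ContDiffAt ℝ (⊤ : ℕ∞) (Function.invFun T) (T τ) := by
    intro τ
    set e : ℝ ≃L[ℝ] ℝ := ContinuousLinearEquiv.unitsEquivAut ℝ (Units.mk0 (f τ) (hf_pos τ).ne')
      with he
    have hfd : HasFDerivAt T (e : ℝ →L[ℝ] ℝ) τ := by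
      have h1 := (hT_deriv τ).hasFDerivAt
      convert h1 using 1
      all_goals rfl
    have hginv_cd : ContDiffAt ℝ (⊤ : ℕ∞)
        (((hT_cd.contDiffAt).hasStrictFDerivAt' hfd (by simp)).localInverse T e τ) (T τ) :=
      ContDiffAt.to_localInverse (hT_cd.contDiffAt) hfd (by simp)
    have hev : Function.invFun T =ᶠ[nhds (T τ)]
        ((hT_cd.contDiffAt).hasStrictFDerivAt' hfd (by simp)).localInverse T e τ := by
      filter_upwards [((hT_cd.contDiffAt).hasStrictFDerivAt' hfd
        (by simp)).eventually_right_inverse] with y hy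
      conv_lhs => rw [← hy]
      rw [leftInv]
    exact hginv_cd.congr_of_eventuallyEq hev
  have hinv_cdOn : ContDiffOn ℝ (⊤ : ℕ∞) (Function.invFun T) (Set.range T) := by
    rintro _ ⟨τ, rfl⟩
    exact (hinv_cdAt τ).contDiffWithinAt
  -- derivatives of A and of f (= T')
  set Afun : ℝ → ℝ := fun τ => (Real.cosh τ) ^ (-(1:ℝ)/2) with hAdef
  set A1 : ℝ → ℝ := fun σ => Real.sinh σ * (-(1:ℝ)/2) * Real.cosh σ ^ (-(3:ℝ)/2) with hA1def
  have hA_deriv : ∀ σ, HasDerivAt Afun (A1 σ) σ := by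
    intro σ
    have h := (Real.hasDerivAt_cosh σ).rpow_const (p := -(1:ℝ)/2)
      (Or.inl (Real.cosh_pos σ).ne')
    rwa [show (-(1:ℝ)/2 - 1) = -(3:ℝ)/2 by norm_num] at h
  have hf_deriv : ∀ σ, HasDerivAt f
      (Real.sinh σ * (-(3:ℝ)/2) * Real.cosh σ ^ (-(5:ℝ)/2)) σ := by
    intro σ
    have h := (Real.hasDerivAt_cosh σ).rpow_const (p := -(3:ℝ)/2)
      (Or.inl (Real.cosh_pos σ).ne')
    rwa [show (-(3:ℝ)/2 - 1) = -(5:ℝ)/2 by norm_num] at h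
  have hA1_deriv : ∀ σ, HasDerivAt A1
      (Real.cosh σ * (-(1:ℝ)/2) * Real.cosh σ ^ (-(3:ℝ)/2)
        + Real.sinh σ * (-(1:ℝ)/2) * (Real.sinh σ * (-(3:ℝ)/2) * Real.cosh σ ^ (-(5:ℝ)/2))) σ
      := by
    intro σ
    have h1 : HasDerivAt (fun σ => Real.sinh σ * (-(1:ℝ)/2))
        (Real.cosh σ * (-(1:ℝ)/2)) σ := (Real.hasDerivAt_sinh σ).mul_const _
    exact h1.mul (hf_deriv σ)
  have hderivA_eq : deriv Afun = A1 := funext fun σ => (hA_deriv σ).deriv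
  have hderivT_eq : deriv T = f := funext fun σ => (hT_deriv σ).deriv
  -- key rpow algebra
  refine ⟨hT_cd, hmono, hopen, hinv_cdOn, ?_, ?_⟩
  · -- proper-time equation
    rintro _ ⟨τ, rfl⟩
    -- first derivative of a
    have ha_d : ∀ σ, HasDerivAt (Afun ∘ Function.invFun T) (A1 σ * (f σ)⁻¹) (T σ) := by
      intro σ
      have h1 : HasDerivAt Afun (A1 σ) (Function.invFun T (T σ)) := by
        rw [leftInv]; exact hA_deriv σ
      exact h1.comp (T σ) (hinv_deriv σ)
    have hda_val : ∀ σ, deriv (Afun ∘ Function.invFun T) (T σ)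
        = Real.sinh σ * (-(1:ℝ)/2) := by
      intro σ
      rw [(ha_d σ).deriv, hA1def]
      have hfσ : f σ = Real.cosh σ ^ (-(3:ℝ)/2) := rfl
      rw [hfσ]
      field_simp
    set G : ℝ → ℝ := fun y => Real.sinh (Function.invFun T y) * (-(1:ℝ)/2) with hGdef
    have hGev : deriv (Afun ∘ Function.invFun T) =ᶠ[𝓝 (T τ)] G := by
      filter_upwards [hopen.mem_nhds ⟨τ, rfl⟩] with y hy
      obtain ⟨σ, rfl⟩ := hy
      rw [hda_val σ, hGdef]
      simp [leftInv]
    have hG_d : HasDerivAt G (Real.cosh τ * (f τ)⁻¹ * (-(1:ℝ)/2)) (T τ) := by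
      have h1 : HasDerivAt Real.sinh (Real.cosh τ) (Function.invFun T (T τ)) := by
        rw [leftInv]; exact Real.hasDerivAt_sinh τ
      exact (h1.comp (T τ) (hinv_deriv τ)).mul_const _
    have hd2 : deriv (deriv (Afun ∘ Function.invFun T)) (T τ)
        = Real.cosh τ * (f τ)⁻¹ * (-(1:ℝ)/2) := by
      rw [hGev.deriv_eq]
      exact hG_d.deriv
    have haval : (Afun ∘ Function.invFun T) (T τ) = Real.cosh τ ^ (-(1:ℝ)/2) := by
      simp [Function.comp, leftInv, hAdef]
    rw [haval, hd2, hda_val τ]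
    -- now pure rpow algebra
    set u : ℝ := Real.cosh τ ^ (-(1:ℝ)/2) with hu
    have hcpos := Real.cosh_pos τ
    have hupos : 0 < u := Real.rpow_pos_of_pos hcpos _
    have hu3 : f τ = u ^ 3 := by
      rw [hfdef, hu, ← Real.rpow_natCast (Real.cosh τ ^ (-(1:ℝ)/2)) 3,
        ← Real.rpow_mul hcpos.le]
      norm_num
    have hu2 : u ^ 2 * Real.cosh τ = 1 := by
      rw [hu, ← Real.rpow_natCast (Real.cosh τ ^ (-(1:ℝ)/2)) 2, ← Real.rpow_mul hcpos.le]
      rw [show (-(1:ℝ)/2 * (2:ℕ)) = -1 by push_cast; ring, Real.rpow_neg_one]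
      field_simp
    have hc2 : Real.cosh τ ^ 2 = Real.sinh τ ^ 2 + 1 := Real.cosh_sq τ
    rw [hu3]
    have hu0 : u ≠ 0 := hupos.ne'
    field_simp
    linear_combination (Real.cosh τ) * hu2 - u^2 * hc2
  · -- BKL-time equation
    intro τ
    have hd2T : deriv (deriv T) τ = Real.sinh τ * (-(3:ℝ)/2) * Real.cosh τ ^ (-(5:ℝ)/2) := by
      rw [hderivT_eq]; exact (hf_deriv τ).deriv
    have hd2A : deriv (deriv Afun) τ
        = Real.cosh τ * (-(1:ℝ)/2) * Real.cosh τ ^ (-(3:ℝ)/2)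
        + Real.sinh τ * (-(1:ℝ)/2) * (Real.sinh τ * (-(3:ℝ)/2) * Real.cosh τ ^ (-(5:ℝ)/2)) := by
      rw [hderivA_eq]; exact (hA1_deriv τ).deriv
    rw [hd2T, hd2A, hderivA_eq, hderivT_eq]
    simp only [hA1def, hfdef]
    set u : ℝ := Real.cosh τ ^ (-(1:ℝ)/2) with hu
    have hcpos := Real.cosh_pos τ
    have hupos : 0 < u := Real.rpow_pos_of_pos hcpos _
    have hu3 : Real.cosh τ ^ (-(3:ℝ)/2) = u ^ 3 := by
      rw [hu, ← Real.rpow_natCast (Real.cosh τ ^ (-(1:ℝ)/2)) 3, ← Real.rpow_mul hcpos.le]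
      norm_num
    have hu5 : Real.cosh τ ^ (-(5:ℝ)/2) = u ^ 5 := by
      rw [hu, ← Real.rpow_natCast (Real.cosh τ ^ (-(1:ℝ)/2)) 5, ← Real.rpow_mul hcpos.le]
      norm_num
    have hu2 : u ^ 2 * Real.cosh τ = 1 := by
      rw [hu, ← Real.rpow_natCast (Real.cosh τ ^ (-(1:ℝ)/2)) 2, ← Real.rpow_mul hcpos.le]
      rw [show (-(1:ℝ)/2 * (2:ℕ)) = -1 by push_cast; ring, Real.rpow_neg_one]
      field_simp
    have hc2 : Real.cosh τ ^ 2 = Real.sinh τ ^ 2 + 1 := Real.cosh_sq τ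
    simp only [hu3, hu5]
    have hu0 : u ≠ 0 := hupos.ne'
    field_simp
    ring_nf
    rw [hA τ, ← hu]
    linear_combination (2*u*Real.cosh τ) * hu2 - (2*u^3) * hc2

end
end

section
/- Inductive Maurer–Cartan correction step in a monoid-decomposed graded Lie algebra. Let 𝔤 = ⊕_{i∈ℤ} 𝔤^i be a real graded Lie algebra. Let (M, +, 0, ≤) be a commutative monoid with a partial order such that 0 is the least element and the strict order is translation invariant (a < b implies a + c < b + c for all c). Suppose 𝔤 decomposes as a direct sum 𝔤 = ⊕_{a∈M} 𝔤_a of graded subspaces such that [𝔤_a, 𝔤_b] ⊆ ⊕_{e ≥ a+b} 𝔤_e for all a, b ∈ M; for x ∈ 𝔤 write x_a for its component in 𝔤_a. Let γ₀ ∈ 𝔤₀ ∩ 𝔤^1 satisfy ([γ₀, γ₀])₀ = 0. Then: (1) for every c ∈ M the map d_c : 𝔤_c → 𝔤_c, d_c(x) = ([γ₀, x])_c, satisfies d_c ∘ d_c = 0; (2) fix c ∈ M with c ≠ 0, let y ∈ 𝔤^1 be supported on indices a < c (i.e., y_a = 0 unless a < c) with y₀ = γ₀, and assume ([y, y])_a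 = 0 for every a ∈ M with a < c; then e := −(1/2)([y, y])_c ∈ 𝔤_c ∩ 𝔤^2 satisfies d_c e = 0; (3) if moreover there exists z ∈ 𝔤_c ∩ 𝔤^1 with d_c z = e, then x = y + z satisfies ([x, x])_a = 0 for every a ∈ M with a ≤ c. -/
/-!
STATEMENT 10: Inductive Maurer–Cartan correction step in a monoid-decomposed
graded Lie algebra.

The real graded Lie algebra 𝔤 = ⊕_{i∈ℤ} 𝔤^i is encoded by a bilinear bracket
`br` on a real vector space `L` together with an internal ℤ-grading `gZ`
(graded antisymmetry and Jacobi hold on homogeneous elements, with signs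
(−1)^{ij} via `zpow`).  The monoid decomposition is an internal direct sum
`gm : M → Submodule ℝ L` whose pieces are graded subspaces, with
[𝔤_a, 𝔤_b] ⊆ ⊕_{e ≥ a+b} 𝔤_e.  Components x_a are taken with
`DirectSum.decompose`.
-/

open DirectSum

set_option maxHeartbeats 4000000 in
set_option synthInstance.maxHeartbeats 1000000 in
theorem maurer_cartan_inductive_step
    (L : Type*) [AddCommGroup L] [Module ℝ L]
    -- the ℤ-grading (homological degree)
    (gZ : ℤ → Submodule ℝ L) [DirectSum.Decomposition gZ]
    -- the partially ordered commutative monoid M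
    (M : Type*) [AddCommMonoid M] [PartialOrder M] [DecidableEq M]
    (hbot : ∀ a : M, 0 ≤ a)
    (hstrict : ∀ a b c : M, a < b → a + c < b + c)
    -- the M-indexed decomposition
    (gm : M → Submodule ℝ L) [DirectSum.Decomposition gm]
    -- the bracket
    (br : L →ₗ[ℝ] L →ₗ[ℝ] L)
    -- graded Lie algebra axioms for the ℤ-grading
    (hdeg : ∀ (i j : ℤ) (x y : L), x ∈ gZ i → y ∈ gZ j → br x y ∈ gZ (i + j))
    (hanti : ∀ (i j : ℤ) (x y : L), x ∈ gZ i → y ∈ gZ j →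
      br x y = -(((-1 : ℝ) ^ (i * j)) • br y x))
    (hjac : ∀ (i j k : ℤ) (x y z : L), x ∈ gZ i → y ∈ gZ j → z ∈ gZ k →
      br x (br y z) + ((-1 : ℝ) ^ (i * (j + k))) • br y (br z x)
        + ((-1 : ℝ) ^ (k * (i + j))) • br z (br x y) = 0)
    -- the pieces 𝔤_a are graded subspaces
    (hgraded : ∀ (a : M) (x : L), x ∈ gm a → ∀ i : ℤ,
      (DirectSum.decompose gZ x i : L) ∈ gm a)
    -- [𝔤_a, 𝔤_b] ⊆ ⊕_{e ≥ a+b} 𝔤_e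
    (hbr : ∀ (a b : M) (x y : L), x ∈ gm a → y ∈ gm b →
      ∀ e : M, ¬ a + b ≤ e → (DirectSum.decompose gm (br x y) e : L) = 0)
    -- γ₀ ∈ 𝔤₀ ∩ 𝔤^1 with ([γ₀,γ₀])₀ = 0
    (γ₀ : L) (hγ₀m : γ₀ ∈ gm 0) (hγ₀Z : γ₀ ∈ gZ 1)
    (hγ₀MC : (DirectSum.decompose gm (br γ₀ γ₀) 0 : L) = 0) :
    -- (1) d_c ∘ d_c = 0 where d_c x = ([γ₀, x])_c on 𝔤_c
    (∀ (c : M) (x : L), x ∈ gm c →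
      (DirectSum.decompose gm
        (br γ₀ (DirectSum.decompose gm (br γ₀ x) c : L)) c : L) = 0) ∧
    -- (2), (3): the inductive correction step at a fixed index c ≠ 0
    (∀ c : M, c ≠ 0 →
      ∀ y : L, y ∈ gZ 1 →
        -- y = γ₀ + Σ_{0 < a < c} y_a
        (DirectSum.decompose gm y 0 : L) = γ₀ →
        (∀ a : M, a ≠ 0 → ¬ a < c → (DirectSum.decompose gm y a : L) = 0) →
        -- ([y,y])_a = 0 for all a < c
        (∀ a : M, a < c → (DirectSum.decompose gm (br y y) a : L) = 0) →
        ∀ e : L, e = -((1:ℝ)/2) • (DirectSum.decompose gm (br y y) c : L) →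
          -- (2) e ∈ 𝔤_c ∩ 𝔤² and d_c e = 0
          (e ∈ gm c ∧ e ∈ gZ 2 ∧
            (DirectSum.decompose gm (br γ₀ e) c : L) = 0) ∧
          -- (3) if d_c z = e for z ∈ 𝔤_c ∩ 𝔤¹ then x = y + z satisfies
          --     ([x,x])_a = 0 for all a ≤ c
          (∀ z : L, z ∈ gm c → z ∈ gZ 1 →
            (DirectSum.decompose gm (br γ₀ z) c : L) = e →
            ∀ a : M, a ≤ c →
              (DirectSum.decompose gm (br (y + z) (y + z)) a : L) = 0)) := by
  classical
  -- basic component calculus for the M-grading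
  have Pz : ∀ c : M, (decompose gm (0 : L) c : L) = 0 := by
    intro c; rw [decompose_zero]; rfl
  have Padd : ∀ (c : M) (u v : L),
      (decompose gm (u + v) c : L) = (decompose gm u c : L) + (decompose gm v c : L) := by
    intro c u v; rw [decompose_add, DirectSum.add_apply]; rfl
  have Psmul : ∀ (c : M) (r : ℝ) (u : L),
      (decompose gm (r • u) c : L) = r • (decompose gm u c : L) := by
    intro c r u; rw [decompose_smul, DFinsupp.smul_apply]; rfl
  have PsumM : ∀ (c : M) (s : Finset M) (f : M → L),
      (decompose gm (∑ i ∈ s, f i) c : L) = ∑ i ∈ s, (decompose gm (f i) c : L) := by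
    intro c s f; rw [decompose_sum, DFinsupp.finset_sum_apply]; simp
  have PsumZ : ∀ (c : M) (s : Finset ℤ) (f : ℤ → L),
      (decompose gm (∑ i ∈ s, f i) c : L) = ∑ i ∈ s, (decompose gm (f i) c : L) := by
    intro c s f; rw [decompose_sum, DFinsupp.finset_sum_apply]; simp
  have QsumM : ∀ (i : ℤ) (s : Finset M) (f : M → L),
      (decompose gZ (∑ a ∈ s, f a) i : L) = ∑ a ∈ s, (decompose gZ (f a) i : L) := by
    intro i s f; rw [decompose_sum, DFinsupp.finset_sum_apply]; simp
  have Pmem : ∀ (c : M) (u : L), (decompose gm u c : L) ∈ gm c := fun c u =>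
    (decompose gm u c).2
  -- order facts
  have hlt0 : ∀ a : M, a ≠ 0 → 0 < a := fun a h => lt_of_le_of_ne (hbot a) (Ne.symm h)
  have haddlt : ∀ a b : M, a ≠ 0 → b < a + b := by
    intro a b h
    have := hstrict 0 a b (hlt0 a h)
    rwa [zero_add] at this
  -- expansion of a bracket component over the support of the second argument,
  -- with a single surviving index d
  have keyR : ∀ (u v : L) (c d : M),
      (∀ b : M, (decompose gm v b : L) ≠ 0 → b ≠ d →
        (decompose gm (br u (decompose gm v b : L)) c : L) = 0) →
      (decompose gm (br u v) c : L)
        = (decompose gm (br u (decompose gm v d : L)) c : L) := by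
    intro u v c d h
    conv_lhs => rw [← DirectSum.sum_support_decompose gm v]
    rw [map_sum, PsumM]
    by_cases hd : d ∈ (decompose gm v).support
    · refine Finset.sum_eq_single_of_mem d hd ?_
      intro b hb hbd
      refine h b ?_ hbd
      intro h0
      exact (DFinsupp.mem_support_iff.mp hb) (by exact_mod_cast h0)
    · have hvd : (decompose gm v d : L) = 0 := by
        rw [DFinsupp.notMem_support_iff.mp hd]; rfl
      rw [hvd, map_zero, Pz]
      refine Finset.sum_eq_zero ?_
      intro b hb
      refine h b ?_ ?_
      · intro h0
        exact (DFinsupp.mem_support_iff.mp hb) (by exact_mod_cast h0)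
      · rintro rfl; exact hd hb
  -- same for the first argument
  have keyL : ∀ (u v : L) (c d : M),
      (∀ a : M, (decompose gm u a : L) ≠ 0 → a ≠ d →
        (decompose gm (br (decompose gm u a : L) v) c : L) = 0) →
      (decompose gm (br u v) c : L)
        = (decompose gm (br (decompose gm u d : L) v) c : L) := by
    intro u v c d h
    conv_lhs => rw [← DirectSum.sum_support_decompose gm u]
    rw [map_sum, LinearMap.coe_sum, Finset.sum_apply, PsumM]
    by_cases hd : d ∈ (decompose gm u).support
    · refine Finset.sum_eq_single_of_mem d hd ?_
      intro b hb hbd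
      refine h b ?_ hbd
      intro h0
      exact (DFinsupp.mem_support_iff.mp hb) (by exact_mod_cast h0)
    · have hud : (decompose gm u d : L) = 0 := by
        rw [DFinsupp.notMem_support_iff.mp hd]; rfl
      rw [hud, map_zero, LinearMap.zero_apply, Pz]
      refine Finset.sum_eq_zero ?_
      intro b hb
      refine h b ?_ ?_
      · intro h0
        exact (DFinsupp.mem_support_iff.mp hb) (by exact_mod_cast h0)
      · rintro rfl; exact hd hb
  -- full vanishing over the support of the second argument
  have vanR : ∀ (u v : L) (c : M),
      (∀ b : M, (decompose gm v b : L) ≠ 0 →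
        (decompose gm (br u (decompose gm v b : L)) c : L) = 0) →
      (decompose gm (br u v) c : L) = 0 := by
    intro u v c h
    conv_lhs => rw [← DirectSum.sum_support_decompose gm v]
    rw [map_sum, PsumM]
    refine Finset.sum_eq_zero ?_
    intro b hb
    refine h b ?_
    intro h0
    exact (DFinsupp.mem_support_iff.mp hb) (by exact_mod_cast h0)
  -- sign computations
  have hm1 : ((-1 : ℝ)) ≠ 0 := by norm_num
  have hsq : ∀ j : ℤ, ((-1 : ℝ)) ^ (j + j) = 1 := by
    intro j
    rw [zpow_add₀ hm1, ← mul_zpow]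
    norm_num
  -- Jacobi consequence: 2 [γ₀,[γ₀,x]] + [x,[γ₀,γ₀]] = 0 for x ∈ gZ j
  have hbrac2 : ∀ (j : ℤ) (x : L), x ∈ gZ j →
      br γ₀ (br γ₀ x) + br γ₀ (br γ₀ x) + br x (br γ₀ γ₀) = 0 := by
    intro j x hx
    have hj := hjac 1 1 j γ₀ γ₀ x hγ₀Z hγ₀Z hx
    have ha := hanti j 1 x γ₀ hx hγ₀Z
    rw [ha] at hj
    rw [show (1 : ℤ) * (1 + j) = 1 + j by ring, show (j : ℤ) * 1 = j by ring,
      show (j : ℤ) * (1 + 1) = j + j by ring] at hj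
    rw [map_neg, map_smul, smul_neg, smul_smul, hsq j, one_smul] at hj
    have hc : ((-1 : ℝ)) ^ ((1 : ℤ) + j) * ((-1 : ℝ)) ^ j = -1 := by
      rw [zpow_add₀ hm1, zpow_one, mul_assoc, ← mul_zpow]
      norm_num
    rw [hc, neg_smul, neg_neg, one_smul] at hj
    exact hj
  -- Jacobi consequence: [y,[y,y]] = 0 for y ∈ gZ 1
  have hyyy : ∀ y : L, y ∈ gZ 1 → br y (br y y) = 0 := by
    intro y hy
    have hj := hjac 1 1 1 y y y hy hy hy
    rw [show ((-1 : ℝ)) ^ ((1 : ℤ) * (1 + 1)) = 1 by norm_num, one_smul] at hj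
    have h3 : (3 : ℝ) • br y (br y y) = 0 := by
      rw [show (3 : ℝ) = 1 + 1 + 1 by norm_num, add_smul, add_smul, one_smul]
      linear_combination (norm := abel) hj
    rcases smul_eq_zero.mp h3 with h | h
    · norm_num at h
    · exact h
  -- the M-components of a gZ-homogeneous element are gZ-homogeneous
  have QmemP : ∀ (i : ℤ) (x : L), x ∈ gZ i → ∀ a : M, (decompose gm x a : L) ∈ gZ i := by
    intro i x hx a
    set s := (decompose gm x).support with hs
    have hx' : ∑ a' ∈ s, (decompose gm x a' : L) = x := DirectSum.sum_support_decompose gm x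
    set y := ∑ a' ∈ s, (decompose gZ (decompose gm x a' : L) i : L) with hy
    have hymem : ∀ a' : M, (decompose gZ (decompose gm x a' : L) i : L) ∈ gm a' :=
      fun a' => hgraded a' _ (Pmem a' x) i
    have hyZ : y ∈ gZ i := Submodule.sum_mem _ fun a' _ => (decompose gZ _ i).2
    have hdiff : x - y ∈ gZ i := Submodule.sub_mem _ hx hyZ
    have hQdiff : (decompose gZ (x - y) i : L) = 0 := by
      have hrepr : x - y = ∑ a' ∈ s,
          ((decompose gm x a' : L) - (decompose gZ (decompose gm x a' : L) i : L)) := by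
        rw [Finset.sum_sub_distrib, hx', ← hy]
      rw [hrepr, QsumM]
      refine Finset.sum_eq_zero ?_
      intro a' _
      have hsub : (decompose gZ ((decompose gm x a' : L)
          - (decompose gZ (decompose gm x a' : L) i : L)) i : L)
          = (decompose gZ (decompose gm x a' : L) i : L)
            - (decompose gZ ((decompose gZ (decompose gm x a' : L) i : L)) i : L) := by
        rw [decompose_sub, DirectSum.sub_apply]; rfl
      rw [hsub, decompose_of_mem_same gZ (decompose gZ (decompose gm x a' : L) i).2, sub_self]
    have hxy : x = y := by
      have h0 : x - y = 0 := by
        rw [← decompose_of_mem_same gZ hdiff, hQdiff]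
      exact sub_eq_zero.mp h0
    by_cases ha : a ∈ s
    · have hkey : (decompose gm x a : L) = (decompose gZ (decompose gm x a : L) i : L) := by
        conv_lhs => rw [hxy, hy]
        rw [PsumM]
        rw [Finset.sum_eq_single_of_mem a ha
          (fun b _ hb => decompose_of_mem_ne gm (hymem b) hb)]
        exact decompose_of_mem_same gm (hymem a)
      rw [hkey]
      exact (decompose gZ _ i).2
    · have h0 : decompose gm x a = 0 := DFinsupp.notMem_support_iff.mp ha
      rw [h0]
      exact (gZ i).zero_mem
  constructor
  · -- part (1): d_c ∘ d_c = 0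
    intro c x hx
    -- homogeneous case first
    have hom1 : ∀ (j : ℤ) (w : L), w ∈ gm c → w ∈ gZ j →
        (decompose gm (br γ₀ (decompose gm (br γ₀ w) c : L)) c : L) = 0 := by
      intro j w hwm hwZ
      have step1 : (decompose gm (br γ₀ (br γ₀ w)) c : L)
          = (decompose gm (br γ₀ (decompose gm (br γ₀ w) c : L)) c : L) := by
        refine keyR γ₀ (br γ₀ w) c c ?_
        intro b hb hbc
        by_cases hle : (0 : M) + b ≤ c
        · exfalso
          refine hb (hbr 0 c γ₀ w hγ₀m hwm b ?_)
          intro hcb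
          rw [zero_add] at hle hcb
          exact hbc (le_antisymm hle hcb)
        · exact hbr 0 b γ₀ _ hγ₀m (Pmem b _) c hle
      have step2 : (decompose gm (br w (br γ₀ γ₀)) c : L) = 0 := by
        refine vanR w (br γ₀ γ₀) c ?_
        intro b hb
        by_cases hb0 : b = 0
        · subst hb0
          exact absurd hγ₀MC hb
        · by_cases hle : c + b ≤ c
          · exfalso
            have h1 : c < b + c := haddlt b c hb0
            rw [add_comm] at h1
            exact absurd (lt_of_lt_of_le h1 hle) (lt_irrefl c)
          · exact hbr c b w _ hwm (Pmem b _) c hle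
      have hj := hbrac2 j w hwZ
      have hcomp := congrArg (fun t => (decompose gm t c : L)) hj
      simp only at hcomp
      rw [Padd, Padd, Pz, step2, add_zero] at hcomp
      have hA : (decompose gm (br γ₀ (br γ₀ w)) c : L) = 0 := by
        have h2 : (2 : ℝ) • (decompose gm (br γ₀ (br γ₀ w)) c : L) = 0 := by
          rw [two_smul]; exact hcomp
        rcases smul_eq_zero.mp h2 with h | h
        · norm_num at h
        · exact h
      rw [← step1]
      exact hA
    have hx' := DirectSum.sum_support_decompose gZ x
    conv_lhs => rw [← hx']
    rw [map_sum, PsumZ, map_sum, PsumZ]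
    refine Finset.sum_eq_zero ?_
    intro j _
    exact hom1 j _ (hgraded c x hx j) (decompose gZ x j).2
  · -- parts (2) and (3)
    intro c hc y hyZ hy0 hysupp hMC e he
    -- the core computation: d_c (([y,y])_c) = 0
    have hcore : (decompose gm (br γ₀ (decompose gm (br y y) c : L)) c : L) = 0 := by
      have h1 : (decompose gm (br y (br y y)) c : L) = 0 := by
        rw [hyyy y hyZ]
        exact Pz c
      have h2 : (decompose gm (br y (br y y)) c : L)
          = (decompose gm (br (decompose gm y 0 : L) (br y y)) c : L) := by
        refine keyL y (br y y) c 0 ?_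
        intro a ha ha0
        refine vanR _ (br y y) c ?_
        intro b hb
        by_cases hle : a + b ≤ c
        · exact absurd (hMC b (lt_of_lt_of_le (haddlt a b ha0) hle)) hb
        · exact hbr a b _ _ (Pmem a y) (Pmem b _) c hle
      have h3 : (decompose gm (br γ₀ (br y y)) c : L)
          = (decompose gm (br γ₀ (decompose gm (br y y) c : L)) c : L) := by
        refine keyR γ₀ (br y y) c c ?_
        intro b hb hbc
        by_cases hle : (0 : M) + b ≤ c
        · rw [zero_add] at hle
          exact absurd (hMC b (lt_of_le_of_ne hle hbc)) hb
        · exact hbr 0 b γ₀ _ hγ₀m (Pmem b _) c hle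
      rw [← h3, ← hy0, ← h2]
      exact h1
    refine ⟨⟨?_, ?_, ?_⟩, ?_⟩
    · rw [he]
      exact Submodule.smul_mem _ _ (Pmem c _)
    · rw [he]
      refine Submodule.smul_mem _ _ ?_
      have hb2 : br y y ∈ gZ 2 := by
        have h := hdeg 1 1 y y hyZ hyZ
        norm_num at h
        exact h
      exact QmemP 2 (br y y) hb2 c
    · rw [he, map_smul, Psmul, hcore, smul_zero]
    · intro z hzm hzZ hz a hac
      have hexp : br (y + z) (y + z) = br y y + br y z + (br z y + br z z) := by
        simp only [map_add, LinearMap.add_apply]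
        abel
      have hzy : br z y = br y z := by
        have h := hanti 1 1 z y hzZ hyZ
        rw [show ((-1 : ℝ)) ^ ((1 : ℤ) * 1) = -1 by norm_num, neg_smul, one_smul, neg_neg] at h
        exact h
      have hzz : (decompose gm (br z z) a : L) = 0 := by
        refine hbr c c z z hzm hzm a ?_
        intro hle
        have h1 : c < c + c := haddlt c c hc
        exact absurd (lt_of_lt_of_le h1 (le_trans hle hac)) (lt_irrefl c)
      have hyz : (decompose gm (br y z) a : L) = (decompose gm (br γ₀ z) a : L) := by
        have h := keyL y z a 0 ?_
        · rw [h, hy0]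
        · intro a' ha' ha0
          refine hbr a' c _ z (Pmem a' y) hzm a ?_
          intro hle
          have h1 : c < a' + c := haddlt a' c ha0
          exact absurd (lt_of_lt_of_le h1 (le_trans hle hac)) (lt_irrefl c)
      by_cases hacc : a = c
      · subst hacc
        rw [hexp, Padd, Padd, Padd, hzy, hyz, hz, hzz, add_zero, he]
        module
      · have haltc : a < c := lt_of_le_of_ne hac hacc
        have hgz : (decompose gm (br γ₀ z) a : L) = 0 := by
          refine hbr 0 c γ₀ z hγ₀m hzm a ?_
          intro hle
          rw [zero_add] at hle
          exact absurd (lt_of_le_of_lt hle haltc) (lt_irrefl c)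
        rw [hexp, Padd, Padd, Padd, hzy, hyz, hzz, add_zero, hgz, hMC a haltc]
        simp
end
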